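/- arXiv:2406.19715 — 4 statements merged into one kernel-verified Lean document; each statement's English description precedes it below -/
import Mathlib

section
/- For all integers n ≥ 1 and k, ℓ ≥ 0, the following identity holds in ℤ[q]: Σ_{(σ,D) ∈ SW(1^n,k,ℓ)} q^{sminv(σ,D)} = Σ_{(β,γ)} ∏_{i=1}^{n} [h_i]_q, where the right-hand sum is over all pairs of sequences β, γ : {1,…,n} → {0,1} with Σ_i β_i = k, Σ_i γ_i = ℓ, and h_i := Σ_{j=1}^{i} (1 − β_j − γ_j) ≥ 1 for every i ∈ {1,…,n}. -/
open Polynomial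

/-- A segmented permutation of length `n`: a permutation `w` of `{1,…,n}` (encoded as a
function `ℕ → ℕ` which is a bijection of `{1,…,n}` onto itself and the identity elsewhere)
together with a set `D ⊆ {1,…,n-1}` of bar positions. -/
def IsSegPerm (n : ℕ) (w : ℕ → ℕ) (D : Finset ℕ) : Prop :=
  Set.BijOn w (Set.Icc 1 n) (Set.Icc 1 n) ∧ (∀ m, m ∉ Set.Icc 1 n → w m = m) ∧
    D ⊆ Finset.Ico 1 n

/-- The ascents of a segmented permutation: indices `i ∈ {1,…,n-1}` with `i ∉ D` and
`w i < w (i+1)`. -/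
def ascFin (n : ℕ) (w : ℕ → ℕ) (D : Finset ℕ) : Finset ℕ :=
  (Finset.Ico 1 n).filter fun i => i ∉ D ∧ w i < w (i + 1)

/-- The descents of a segmented permutation: indices `i ∈ {1,…,n-1}` with `i ∉ D` and
`w i > w (i+1)`. -/
def descFin (n : ℕ) (w : ℕ → ℕ) (D : Finset ℕ) : Finset ℕ :=
  (Finset.Ico 1 n).filter fun i => i ∉ D ∧ w (i + 1) < w i

/-- The number of sminversions: pairs `(i,j)` with `1 ≤ i < j ≤ n`, `w i > w j`, and
either `j` initial (`j = 1` or `j - 1 ∈ D`) or `w (j-1) > w i`. -/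
def sminv (n : ℕ) (w : ℕ → ℕ) (D : Finset ℕ) : ℕ :=
  ((Finset.Icc 1 n ×ˢ Finset.Icc 1 n).filter fun p =>
    p.1 < p.2 ∧ w p.2 < w p.1 ∧ (p.2 = 1 ∨ p.2 - 1 ∈ D ∨ w p.1 < w (p.2 - 1))).card

/-- The height after step `i` of the path encoded by `(β, γ)`:
`h_i = ∑_{j=1}^{i} (1 - β j - γ j)` in `ℤ`. -/
def pathHeight (β γ : ℕ → ℕ) (i : ℕ) : ℤ :=
  ∑ j ∈ Finset.Icc 1 i, (1 - (β j : ℤ) - (γ j : ℤ))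

/-- The `q`-integer `[m]_q = 1 + q + ⋯ + q^(m-1)` in `ℤ[q]`. -/
noncomputable def qnat (m : ℕ) : Polynomial ℤ :=
  ∑ i ∈ Finset.range m, Polynomial.X ^ i


namespace SegStair

open Finset

lemma card_nbij_old {α β : Type*} {s : Finset α} {t : Finset β} (i : α → β) (j : β → α)
    (hi : ∀ a ∈ s, i a ∈ t) (hj : ∀ a ∈ t, j a ∈ s) (left_inv : ∀ a ∈ s, j (i a) = a)
    (right_inv : ∀ a ∈ t, i (j a) = a) : s.card = t.card :=
  Finset.card_nbij' i j hi hj left_inv right_inv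

/-! ### qnat lemmas -/

lemma qnat_zero : qnat 0 = 0 := by simp [qnat]

lemma qnat_succ (m : ℕ) :
    qnat (m + 1) = 1 + Polynomial.X * qnat m := by
  rw [qnat, Finset.sum_range_succ', qnat, Finset.mul_sum]
  simp [pow_succ, mul_comm]
  ring

/-- Sum over a finite set of naturals of `X ^ (number of strictly larger elements)`
equals `[card]_q`. -/
lemma sum_pow_count (S : Finset ℕ) :
    ∑ x ∈ S, (Polynomial.X : Polynomial ℤ) ^ ((S.filter (fun y => x < y)).card)
      = qnat S.card := by
  induction S using Finset.strongInduction with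
  | _ S ih =>
    rcases S.eq_empty_or_nonempty with rfl | hne
    · simp [qnat_zero]
    · set M := S.max' hne with hM
      have hMS : M ∈ S := S.max'_mem hne
      have hSM : S = insert M (S.erase M) := by
        rw [Finset.insert_erase hMS]
      rw [hSM, Finset.sum_insert (Finset.notMem_erase _ _)]
      have h1 : (insert M (S.erase M)).filter (fun y => M < y) = ∅ := by
        apply Finset.filter_eq_empty_iff.2
        intro y hy
        rw [← hSM] at hy
        exact not_lt.2 (S.le_max' y hy)
      have h2 : ∀ x ∈ S.erase M,
          ((insert M (S.erase M)).filter (fun y => x < y)).card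
            = ((S.erase M).filter (fun y => x < y)).card + 1 := by
        intro x hx
        have hxM : x < M := by
          have hxS := Finset.mem_of_mem_erase hx
          have := S.le_max' x hxS
          rcases lt_or_eq_of_le this with h | h
          · exact h
          · exact absurd (h ▸ hx) (Finset.notMem_erase _ _)
        rw [Finset.filter_insert, if_pos hxM,
          Finset.card_insert_of_notMem (by simp)]
      rw [h1]
      have h3 : ∑ x ∈ S.erase M,
          (Polynomial.X : Polynomial ℤ) ^ ((insert M (S.erase M)).filter (fun y => x < y)).card
          = Polynomial.X * ∑ x ∈ S.erase M,
            (Polynomial.X : Polynomial ℤ) ^ ((S.erase M).filter (fun y => x < y)).card := by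
        rw [Finset.mul_sum]
        apply Finset.sum_congr rfl
        intro x hx
        rw [h2 x hx, pow_succ, mul_comm]
      rw [h3, ih (S.erase M) (Finset.erase_ssubset hMS)]
      have hcard : (insert M (S.erase M)).card = (S.erase M).card + 1 :=
        Finset.card_insert_of_notMem (Finset.notMem_erase _ _)
      rw [hcard, qnat_succ]
      simp

/-! ### Finiteness, the two sides as Finset sums -/

lemma finite_funs (S : Finset ℕ) (C : ℕ) (g : ℕ → ℕ) :
    {w : ℕ → ℕ | (∀ i ∈ S, w i ≤ C) ∧ ∀ i ∉ S, w i = g i}.Finite := by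
  have h1 : (Set.pi Set.univ (fun _ : S => Set.Iic C)).Finite :=
    Set.Finite.pi (fun _ => Set.finite_Iic C)
  apply Set.Finite.of_finite_image (f := fun (w : ℕ → ℕ) (i : S) => w i)
  · apply h1.subset
    rintro _ ⟨w, hw, rfl⟩
    intro i _
    exact hw.1 i i.2
  · intro w1 h1' w2 h2' heq
    funext i
    by_cases hi : i ∈ S
    · exact congrFun heq ⟨i, hi⟩
    · rw [h1'.2 i hi, h2'.2 i hi]

def ASet (n k ℓ : ℕ) : Set ((ℕ → ℕ) × Finset ℕ) :=
  {s | IsSegPerm n s.1 s.2 ∧ (ascFin n s.1 s.2).card = k ∧ (descFin n s.1 s.2).card = ℓ}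

lemma ASet_finite (n k ℓ : ℕ) : (ASet n k ℓ).Finite := by
  apply Set.Finite.subset
    (Set.Finite.prod (finite_funs (Finset.Icc 1 n) n id)
      ((Finset.Ico 1 n).powerset.finite_toSet))
  rintro ⟨w, D⟩ ⟨⟨hbij, hid, hD⟩, -, -⟩
  constructor
  · constructor
    · intro i hi
      have : w i ∈ Set.Icc 1 n := hbij.mapsTo (by simpa using hi)
      exact this.2
    · intro i hi
      exact hid i (by simpa using hi)
  · rw [Finset.mem_coe, Finset.mem_powerset]
    exact hD

noncomputable def Afin (n k ℓ : ℕ) : Finset ((ℕ → ℕ) × Finset ℕ) :=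
  (ASet_finite n k ℓ).toFinset

noncomputable def L (n k ℓ : ℕ) : Polynomial ℤ :=
  ∑ s ∈ Afin n k ℓ, (Polynomial.X : Polynomial ℤ) ^ sminv n s.1 s.2

def BSet (n k ℓ : ℕ) : Set ((ℕ → ℕ) × (ℕ → ℕ)) :=
  {p | (∀ i, i ∉ Finset.Icc 1 n → p.1 i = 0 ∧ p.2 i = 0) ∧
      (∀ i ∈ Finset.Icc 1 n, p.1 i ≤ 1 ∧ p.2 i ≤ 1) ∧
      (∑ i ∈ Finset.Icc 1 n, p.1 i) = k ∧ (∑ i ∈ Finset.Icc 1 n, p.2 i) = ℓ}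

lemma BSet_finite (n k ℓ : ℕ) : (BSet n k ℓ).Finite := by
  apply Set.Finite.subset
    (Set.Finite.prod (finite_funs (Finset.Icc 1 n) 1 (fun _ => 0))
      (finite_funs (Finset.Icc 1 n) 1 (fun _ => 0)))
  rintro ⟨b, g⟩ ⟨hsupp, hbd, -, -⟩
  exact ⟨⟨fun i hi => (hbd i hi).1, fun i hi => (hsupp i hi).1⟩,
    ⟨fun i hi => (hbd i hi).2, fun i hi => (hsupp i hi).2⟩⟩

noncomputable def Bfin (n k ℓ : ℕ) : Finset ((ℕ → ℕ) × (ℕ → ℕ)) :=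
  (BSet_finite n k ℓ).toFinset

noncomputable def R (n k ℓ : ℕ) : Polynomial ℤ :=
  ∑ p ∈ Bfin n k ℓ, ∏ i ∈ Finset.Icc 1 n, qnat (pathHeight p.1 p.2 i).toNat

lemma L_zero (k ℓ : ℕ) : L 0 k ℓ = if k = 0 ∧ ℓ = 0 then 1 else 0 := by
  have hA : ∀ s : (ℕ → ℕ) × Finset ℕ, s ∈ ASet 0 k ℓ ↔ (k = 0 ∧ ℓ = 0) ∧ s = (id, ∅) := by
    rintro ⟨w, D⟩
    constructor
    · rintro ⟨⟨hbij, hid, hD⟩, hk, hl⟩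
      have hD' : D = ∅ := by
        have := Finset.subset_empty.1 (by simpa using hD)
        exact this
      have hw : w = id := by
        funext i
        exact hid i (by simp)
      have hk0 : k = 0 := by simpa [ascFin] using hk.symm
      have hl0 : ℓ = 0 := by simpa [descFin] using hl.symm
      exact ⟨⟨hk0, hl0⟩, by rw [hw, hD']⟩
    · rintro ⟨⟨rfl, rfl⟩, heq⟩
      rw [Prod.ext_iff] at heq
      obtain ⟨h1', h2'⟩ := heq
      simp only at h1' h2'
      subst h1'; subst h2'
      refine ⟨⟨?_, fun m _ => rfl, by simp⟩, by simp [ascFin], by simp [descFin]⟩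
      have : Set.Icc (1:ℕ) 0 = ∅ := by simp
      rw [this]
      exact Set.bijOn_empty id
  by_cases h : k = 0 ∧ ℓ = 0
  · have : Afin 0 k ℓ = {(id, ∅)} := by
      apply Finset.ext
      intro s
      rw [Afin, Set.Finite.mem_toFinset, Finset.mem_singleton]
      rw [show s ∈ ASet 0 k ℓ ↔ _ from hA s]
      simp [h]
    rw [L, this, Finset.sum_singleton]
    simp [sminv, if_pos h]
  · have : Afin 0 k ℓ = ∅ := by
      apply Finset.ext
      intro s
      rw [Afin, Set.Finite.mem_toFinset]
      simp only [Finset.notMem_empty, iff_false]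
      intro hs
      exact h ((hA s).1 hs).1
    rw [L, this, Finset.sum_empty, if_neg h]

lemma R_zero (k ℓ : ℕ) : R 0 k ℓ = if k = 0 ∧ ℓ = 0 then 1 else 0 := by
  have hB : ∀ p : (ℕ → ℕ) × (ℕ → ℕ),
      p ∈ BSet 0 k ℓ ↔ (k = 0 ∧ ℓ = 0) ∧ p = ((fun _ => 0), (fun _ => 0)) := by
    rintro ⟨b, g⟩
    constructor
    · rintro ⟨hsupp, hbd, hk, hl⟩
      have hb : b = fun _ => 0 := funext fun i => (hsupp i (by simp)).1
      have hg : g = fun _ => 0 := funext fun i => (hsupp i (by simp)).2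
      exact ⟨⟨by simpa using hk.symm, by simpa using hl.symm⟩, by rw [hb, hg]⟩
    · rintro ⟨⟨rfl, rfl⟩, heq⟩
      rw [Prod.ext_iff] at heq
      obtain ⟨h1', h2'⟩ := heq
      simp only at h1' h2'
      subst h1'; subst h2'
      exact ⟨fun i _ => ⟨rfl, rfl⟩, fun i _ => ⟨Nat.zero_le _, Nat.zero_le _⟩, by simp, by simp⟩
  by_cases h : k = 0 ∧ ℓ = 0
  · have : Bfin 0 k ℓ = {((fun _ => 0), (fun _ => 0))} := by
      apply Finset.ext
      intro s
      rw [Bfin, Set.Finite.mem_toFinset, Finset.mem_singleton]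
      rw [show s ∈ BSet 0 k ℓ ↔ _ from hB s]
      simp [h]
    rw [R, this, Finset.sum_singleton]
    simp [if_pos h]
  · have : Bfin 0 k ℓ = ∅ := by
      apply Finset.ext
      intro s
      rw [Bfin, Set.Finite.mem_toFinset]
      simp only [Finset.notMem_empty, iff_false]
      intro hs
      exact h ((hB s).1 hs).1
    rw [R, this, Finset.sum_empty, if_neg h]

/-! ### Arithmetic helpers -/

lemma Icc_split {n : ℕ} (hn : 1 ≤ n) :
    Finset.Icc 1 n = insert n (Finset.Icc 1 (n-1)) := by
  ext i; simp only [Finset.mem_Icc, Finset.mem_insert]; omega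

lemma not_mem_Icc_pred (n : ℕ) : n ∉ Finset.Icc 1 (n-1) := by
  simp only [Finset.mem_Icc]; omega

lemma pathHeight_eq (β γ : ℕ → ℕ) (i : ℕ) :
    pathHeight β γ i = (i : ℤ) - (∑ j ∈ Finset.Icc 1 i, β j : ℕ) -
      (∑ j ∈ Finset.Icc 1 i, γ j : ℕ) := by
  rw [pathHeight]
  push_cast
  rw [Finset.sum_sub_distrib, Finset.sum_sub_distrib, Finset.sum_const, Nat.card_Icc]
  simp

/-! ### RHS recursion -/

lemma R_rec (n k ℓ : ℕ) (hn : 1 ≤ n) :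
    R n k ℓ = qnat ((n : ℤ) - k - ℓ).toNat *
      ∑ ab ∈ (({0,1} : Finset ℕ) ×ˢ ({0,1} : Finset ℕ)),
        (if ab.1 ≤ k ∧ ab.2 ≤ ℓ then R (n-1) (k - ab.1) (ℓ - ab.2) else 0) := by
  classical
  set q : Polynomial ℤ := qnat ((n : ℤ) - k - ℓ).toNat with hq
  set t := ((({0,1} : Finset ℕ) ×ˢ ({0,1} : Finset ℕ)).sigma
    (fun ab => if ab.1 ≤ k ∧ ab.2 ≤ ℓ then Bfin (n-1) (k-ab.1) (ℓ-ab.2) else ∅)) with ht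
  have key : R n k ℓ = ∑ x ∈ t,
      (q * ∏ i ∈ Finset.Icc 1 (n-1), qnat (pathHeight x.2.1 x.2.2 i).toNat) := by
    rw [R]
    apply Finset.sum_nbij'
      (i := fun x => (⟨(x.1 n, x.2 n),
          (Function.update x.1 n 0, Function.update x.2 n 0)⟩ :
          (_ : ℕ × ℕ) × ((ℕ → ℕ) × (ℕ → ℕ))))
      (j := fun y => (Function.update y.2.1 n y.1.1, Function.update y.2.2 n y.1.2))
    · -- forward membership
      intro x hx
      rw [Bfin, Set.Finite.mem_toFinset] at hx
      obtain ⟨hsupp, hbd, hk, hl⟩ := hx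
      have hnI : n ∈ Finset.Icc 1 n := by simp [hn]
      have hb1 : x.1 n ≤ 1 := (hbd n hnI).1
      have hb2 : x.2 n ≤ 1 := (hbd n hnI).2
      have hak : x.1 n ≤ k := hk ▸ Finset.single_le_sum (fun i _ => Nat.zero_le _) hnI
      have hbl : x.2 n ≤ ℓ := hl ▸ Finset.single_le_sum (fun i _ => Nat.zero_le _) hnI
      rw [ht, Finset.mem_sigma]
      constructor
      · simp only [Finset.mem_product, Finset.mem_insert, Finset.mem_singleton]
        omega
      · rw [if_pos ⟨hak, hbl⟩, Bfin, Set.Finite.mem_toFinset]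
        refine ⟨?_, ?_, ?_, ?_⟩ <;> dsimp only
        · intro i hi
          by_cases hin : i = n
          · rw [hin]; simp
          · rw [Function.update_of_ne hin, Function.update_of_ne hin]
            apply hsupp
            simp only [Finset.mem_Icc] at hi ⊢
            omega
        · intro i hi
          by_cases hin : i = n
          · rw [hin] at hi
            exact absurd hi (not_mem_Icc_pred n)
          · rw [Function.update_of_ne hin, Function.update_of_ne hin]
            apply hbd
            simp only [Finset.mem_Icc] at hi ⊢
            omega
        · have : ∑ i ∈ Finset.Icc 1 n, x.1 i
              = x.1 n + ∑ i ∈ Finset.Icc 1 (n-1), x.1 i := by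
            rw [Icc_split hn, Finset.sum_insert (not_mem_Icc_pred n)]
          have hsum : ∑ i ∈ Finset.Icc 1 (n-1), Function.update x.1 n 0 i
              = ∑ i ∈ Finset.Icc 1 (n-1), x.1 i := by
            apply Finset.sum_congr rfl
            intro i hi
            have : i ≠ n := by
              simp only [Finset.mem_Icc] at hi; omega
            rw [Function.update_of_ne this]
          omega
        · have : ∑ i ∈ Finset.Icc 1 n, x.2 i
              = x.2 n + ∑ i ∈ Finset.Icc 1 (n-1), x.2 i := by
            rw [Icc_split hn, Finset.sum_insert (not_mem_Icc_pred n)]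
          have hsum : ∑ i ∈ Finset.Icc 1 (n-1), Function.update x.2 n 0 i
              = ∑ i ∈ Finset.Icc 1 (n-1), x.2 i := by
            apply Finset.sum_congr rfl
            intro i hi
            have : i ≠ n := by
              simp only [Finset.mem_Icc] at hi; omega
            rw [Function.update_of_ne this]
          omega
    · -- backward membership
      rintro ⟨ab, y⟩ hy
      rw [ht, Finset.mem_sigma] at hy
      dsimp only at hy
      obtain ⟨hab, hy2⟩ := hy
      by_cases hg : ab.1 ≤ k ∧ ab.2 ≤ ℓ
      swap
      · rw [if_neg hg] at hy2; exact absurd hy2 (Finset.notMem_empty _)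
      rw [if_pos hg, Bfin, Set.Finite.mem_toFinset] at hy2
      obtain ⟨hsupp, hbd, hk, hl⟩ := hy2
      simp only [Finset.mem_product, Finset.mem_insert, Finset.mem_singleton] at hab
      rw [Bfin, Set.Finite.mem_toFinset]
      have hy1n : y.1 n = 0 := (hsupp n (not_mem_Icc_pred n)).1
      have hy2n : y.2 n = 0 := (hsupp n (not_mem_Icc_pred n)).2
      refine ⟨?_, ?_, ?_, ?_⟩ <;> dsimp only
      · intro i hi
        have hin : i ≠ n := fun h => hi (h ▸ (by simp [hn] : n ∈ Finset.Icc 1 n))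
        rw [Function.update_of_ne hin, Function.update_of_ne hin]
        apply hsupp
        simp only [Finset.mem_Icc] at hi ⊢
        omega
      · intro i hi
        by_cases hin : i = n
        · rw [hin]
          simp only [Function.update_self]
          omega
        · rw [Function.update_of_ne hin, Function.update_of_ne hin]
          apply hbd
          simp only [Finset.mem_Icc] at hi ⊢
          omega
      · rw [Icc_split hn, Finset.sum_insert (not_mem_Icc_pred n), Function.update_self]
        have hsum : ∑ i ∈ Finset.Icc 1 (n-1), Function.update y.1 n ab.1 i
            = ∑ i ∈ Finset.Icc 1 (n-1), y.1 i := by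
          apply Finset.sum_congr rfl
          intro i hi
          have : i ≠ n := by simp only [Finset.mem_Icc] at hi; omega
          rw [Function.update_of_ne this]
        omega
      · rw [Icc_split hn, Finset.sum_insert (not_mem_Icc_pred n), Function.update_self]
        have hsum : ∑ i ∈ Finset.Icc 1 (n-1), Function.update y.2 n ab.2 i
            = ∑ i ∈ Finset.Icc 1 (n-1), y.2 i := by
          apply Finset.sum_congr rfl
          intro i hi
          have : i ≠ n := by simp only [Finset.mem_Icc] at hi; omega
          rw [Function.update_of_ne this]
        omega
    · -- left inverse
      intro x hx
      have e1 : Function.update (Function.update x.1 n 0) n (x.1 n) = x.1 := by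
        funext i
        by_cases hin : i = n
        · rw [hin]; simp
        · simp [Function.update_of_ne hin]
      have e2 : Function.update (Function.update x.2 n 0) n (x.2 n) = x.2 := by
        funext i
        by_cases hin : i = n
        · rw [hin]; simp
        · simp [Function.update_of_ne hin]
      dsimp only
      rw [e1, e2]
    · -- right inverse
      rintro ⟨ab, y⟩ hy
      rw [ht, Finset.mem_sigma] at hy
      dsimp only at hy
      obtain ⟨hab, hy2⟩ := hy
      by_cases hg : ab.1 ≤ k ∧ ab.2 ≤ ℓ
      swap
      · rw [if_neg hg] at hy2; exact absurd hy2 (Finset.notMem_empty _)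
      rw [if_pos hg, Bfin, Set.Finite.mem_toFinset] at hy2
      have hy1n : y.1 n = 0 := (hy2.1 n (not_mem_Icc_pred n)).1
      have hy2n : y.2 n = 0 := (hy2.1 n (not_mem_Icc_pred n)).2
      have e1 : Function.update (Function.update y.1 n ab.1) n 0 = y.1 := by
        funext i
        by_cases hin : i = n
        · rw [hin]; simp [hy1n]
        · simp [Function.update_of_ne hin]
      have e2 : Function.update (Function.update y.2 n ab.2) n 0 = y.2 := by
        funext i
        by_cases hin : i = n
        · rw [hin]; simp [hy2n]
        · simp [Function.update_of_ne hin]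
      dsimp only
      rw [Function.update_self, Function.update_self, e1, e2]
    · -- values
      intro x hx
      rw [Bfin, Set.Finite.mem_toFinset] at hx
      obtain ⟨hsupp, hbd, hk, hl⟩ := hx
      dsimp only
      rw [Icc_split hn, Finset.prod_insert (not_mem_Icc_pred n)]
      have h1 : pathHeight x.1 x.2 n = (n : ℤ) - k - ℓ := by
        rw [pathHeight_eq, hk, hl]
      have h2 : ∏ i ∈ Finset.Icc 1 (n-1), qnat (pathHeight x.1 x.2 i).toNat
          = ∏ i ∈ Finset.Icc 1 (n-1),
            qnat (pathHeight (Function.update x.1 n 0) (Function.update x.2 n 0) i).toNat := by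
        apply Finset.prod_congr rfl
        intro i hi
        congr 2
        rw [pathHeight, pathHeight]
        apply Finset.sum_congr rfl
        intro j hj
        have : j ≠ n := by
          simp only [Finset.mem_Icc] at hi hj; omega
        rw [Function.update_of_ne this, Function.update_of_ne this]
      rw [h1, h2, hq]
  rw [key, ht, Finset.sum_sigma, Finset.mul_sum]
  apply Finset.sum_congr rfl
  intro ab _
  by_cases hg : ab.1 ≤ k ∧ ab.2 ≤ ℓ
  · rw [if_pos hg, if_pos hg, R, Finset.mul_sum]
  · rw [if_neg hg, if_neg hg, mul_zero]
    apply Finset.sum_eq_zero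
    intro x hx
    exact absurd hx (Finset.notMem_empty _)

/-! ### Deletion / insertion of the maximal value -/

section DelIns

/-- delete position `p` (of the value `n`) -/
def delw (n p : ℕ) (w : ℕ → ℕ) : ℕ → ℕ := fun i =>
  if 1 ≤ i ∧ i ≤ n - 1 then (if i < p then w i else w (i+1)) else i

def delD (n p : ℕ) (D : Finset ℕ) : Finset ℕ :=
  (Finset.Ico 1 (n-1)).filter
    (fun j => (j + 2 ≤ p ∧ j ∈ D) ∨ j + 1 = p ∨ (p ≤ j ∧ j + 1 ∈ D))

def insw (n p : ℕ) (w : ℕ → ℕ) : ℕ → ℕ := fun i =>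
  if 1 ≤ i ∧ i ≤ n then (if i < p then w i else if i = p then n else w (i-1)) else i

def insD (n p a b : ℕ) (D : Finset ℕ) : Finset ℕ :=
  (Finset.Ico 1 n).filter
    (fun j => (j + 2 ≤ p ∧ j ∈ D) ∨ (j + 1 = p ∧ a = 0) ∨ (j = p ∧ b = 0) ∨
      (p + 1 ≤ j ∧ j - 1 ∈ D))

def dd1 (p : ℕ) (D : Finset ℕ) : ℕ := if 2 ≤ p ∧ p - 1 ∉ D then 1 else 0
def dd2 (n p : ℕ) (D : Finset ℕ) : ℕ := if p ≤ n - 1 ∧ p ∉ D then 1 else 0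
def rstat (p : ℕ) (D : Finset ℕ) : ℕ := (D.filter (fun j => p ≤ j)).card

def Vins (n a b : ℕ) (D' : Finset ℕ) : Finset ℕ :=
  (D'.image (· + 1)) ∪ (if b = 0 ∧ (a = 0 ∨ 2 ≤ n) then {n} else ∅) ∪
    (if a = 0 ∧ (b = 0 ∨ 2 ≤ n) then {1} else ∅)

open Classical in
noncomputable def posn (n : ℕ) (w : ℕ → ℕ) : ℕ :=
  if h : ∃ p, (1 ≤ p ∧ p ≤ n) ∧ w p = n then h.choose else 0

/-! ### basic segperm facts -/

lemma segPerm_maps {n : ℕ} {w : ℕ → ℕ} {D : Finset ℕ} (hsp : IsSegPerm n w D)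
    {i : ℕ} (h1 : 1 ≤ i) (h2 : i ≤ n) : 1 ≤ w i ∧ w i ≤ n := by
  have := hsp.1.mapsTo (Set.mem_Icc.2 ⟨h1, h2⟩)
  exact Set.mem_Icc.1 this

lemma segPerm_inj {n : ℕ} {w : ℕ → ℕ} {D : Finset ℕ} (hsp : IsSegPerm n w D)
    {i j : ℕ} (hi1 : 1 ≤ i) (hi2 : i ≤ n) (hj1 : 1 ≤ j) (hj2 : j ≤ n)
    (h : w i = w j) : i = j :=
  hsp.1.injOn (Set.mem_Icc.2 ⟨hi1, hi2⟩) (Set.mem_Icc.2 ⟨hj1, hj2⟩) h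

lemma segPerm_surj {n : ℕ} {w : ℕ → ℕ} {D : Finset ℕ} (hsp : IsSegPerm n w D)
    {y : ℕ} (hy1 : 1 ≤ y) (hy2 : y ≤ n) : ∃ x, (1 ≤ x ∧ x ≤ n) ∧ w x = y := by
  obtain ⟨x, hx, hwx⟩ := hsp.1.surjOn (Set.mem_Icc.2 ⟨hy1, hy2⟩)
  exact ⟨x, Set.mem_Icc.1 hx, hwx⟩

lemma segPerm_D {n : ℕ} {w : ℕ → ℕ} {D : Finset ℕ} (hsp : IsSegPerm n w D)
    {j : ℕ} (hj : j ∈ D) : 1 ≤ j ∧ j + 1 ≤ n := by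
  have := hsp.2.2 hj
  rw [Finset.mem_Ico] at this
  omega

lemma posn_spec {n : ℕ} {w : ℕ → ℕ} {D : Finset ℕ} (hsp : IsSegPerm n w D)
    (hn : 1 ≤ n) : (1 ≤ posn n w ∧ posn n w ≤ n) ∧ w (posn n w) = n := by
  have hex : ∃ p, (1 ≤ p ∧ p ≤ n) ∧ w p = n := by
    obtain ⟨x, hx, hwx⟩ := segPerm_surj hsp hn (le_refl n)
    exact ⟨x, hx, hwx⟩
  rw [posn]
  rw [dif_pos hex]
  exact hex.choose_spec

lemma posn_unique {n : ℕ} {w : ℕ → ℕ} {D : Finset ℕ} (hsp : IsSegPerm n w D)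
    (hn : 1 ≤ n) {q : ℕ} (hq1 : 1 ≤ q) (hq2 : q ≤ n) (hwq : w q = n) :
    q = posn n w := by
  have h := posn_spec hsp hn
  exact segPerm_inj hsp hq1 hq2 h.1.1 h.1.2 (by rw [hwq, h.2])

/-- values other than at `p` are below `n` -/
lemma val_lt_of_ne {n : ℕ} {w : ℕ → ℕ} {D : Finset ℕ} (hsp : IsSegPerm n w D)
    (hn : 1 ≤ n) {i : ℕ} (h1 : 1 ≤ i) (h2 : i ≤ n) (hne : i ≠ posn n w) :
    w i < n := by
  have h := posn_spec hsp hn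
  have hle := (segPerm_maps hsp h1 h2).2
  rcases lt_or_eq_of_le hle with h' | h'
  · exact h'
  · exact absurd (segPerm_inj hsp h1 h2 h.1.1 h.1.2 (by rw [h', h.2])) hne

/-! ### gap partition -/

lemma gap_partition {n : ℕ} {w : ℕ → ℕ} {D : Finset ℕ} (hsp : IsSegPerm n w D) :
    (ascFin n w D).card + (descFin n w D).card + D.card = n - 1 := by
  classical
  have hsplit : Finset.Ico 1 n = (ascFin n w D) ∪ ((descFin n w D) ∪ D) := by
    ext i
    simp only [Finset.mem_union, ascFin, descFin, Finset.mem_filter]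
    constructor
    · intro hi
      by_cases hiD : i ∈ D
      · exact Or.inr (Or.inr hiD)
      · rw [Finset.mem_Ico] at hi
        have hne : w i ≠ w (i+1) := by
          intro h
          have := segPerm_inj hsp (by omega) (by omega) (by omega) (by omega) h
          omega
        rcases lt_or_gt_of_ne hne with h | h
        · exact Or.inl ⟨Finset.mem_Ico.2 (by omega), hiD, h⟩
        · exact Or.inr (Or.inl ⟨Finset.mem_Ico.2 (by omega), hiD, h⟩)
    · rintro (⟨h, -, -⟩ | ⟨h, -, -⟩ | h)
      · exact h
      · exact h
      · exact hsp.2.2 h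
  have hdisj1 : Disjoint (descFin n w D) D := by
    rw [Finset.disjoint_left]
    intro i hi hiD
    rw [descFin, Finset.mem_filter] at hi
    exact hi.2.1 hiD
  have hdisj2 : Disjoint (ascFin n w D) (descFin n w D ∪ D) := by
    rw [Finset.disjoint_left]
    intro i hi hi2
    rw [ascFin, Finset.mem_filter] at hi
    rcases Finset.mem_union.1 hi2 with h | h
    · rw [descFin, Finset.mem_filter] at h
      omega
    · exact hi.2.1 h
  have := congrArg Finset.card hsplit
  rw [Finset.card_union_of_disjoint hdisj2, Finset.card_union_of_disjoint hdisj1,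
    Nat.card_Ico] at this
  omega

end DelIns

/-! ### deletion and insertion produce segmented permutations -/

lemma del_isSegPerm {n p : ℕ} {w : ℕ → ℕ} {D : Finset ℕ} (hsp : IsSegPerm n w D)
    (hn : 1 ≤ n) (hp1 : 1 ≤ p) (hp2 : p ≤ n) (hwp : w p = n) :
    IsSegPerm (n-1) (delw n p w) (delD n p D) := by
  refine ⟨⟨?_, ?_, ?_⟩, ?_, ?_⟩
  · -- MapsTo
    intro i hi
    rw [Set.mem_Icc] at hi ⊢
    have h1 : 1 ≤ i := hi.1
    have h2 : i ≤ n - 1 := hi.2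
    rw [delw, if_pos ⟨h1, h2⟩]
    by_cases hip : i < p
    · have hm := segPerm_maps hsp h1 (by omega)
      have : w i ≠ n := by
        intro h; have := segPerm_inj hsp h1 (by omega) hp1 hp2 (by rw [h, hwp]); omega
      rw [if_pos hip]
      omega
    · have hm := segPerm_maps hsp (by omega : 1 ≤ i + 1) (by omega)
      have : w (i+1) ≠ n := by
        intro h
        have := segPerm_inj hsp (by omega : 1 ≤ i+1) (by omega) hp1 hp2 (by rw [h, hwp])
        omega
      rw [if_neg hip]
      omega
  · -- InjOn
    intro i hi j hj heq
    rw [Set.mem_Icc] at hi hj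
    simp only [delw] at heq
    rw [if_pos hi, if_pos hj] at heq
    by_cases hip : i < p <;> by_cases hjp : j < p
    · rw [if_pos hip, if_pos hjp] at heq
      exact segPerm_inj hsp hi.1 (by omega) hj.1 (by omega) heq
    · rw [if_pos hip, if_neg hjp] at heq
      have := segPerm_inj hsp hi.1 (by omega) (by omega : 1 ≤ j+1) (by omega) heq
      omega
    · rw [if_neg hip, if_pos hjp] at heq
      have := segPerm_inj hsp (by omega : 1 ≤ i+1) (by omega) hj.1 (by omega) heq
      omega
    · rw [if_neg hip, if_neg hjp] at heq
      have := segPerm_inj hsp (by omega : 1 ≤ i+1) (by omega) (by omega : 1 ≤ j+1)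
        (by omega) heq
      omega
  · -- SurjOn
    intro y hy
    rw [Set.mem_Icc] at hy
    obtain ⟨x, hx, hwx⟩ := segPerm_surj hsp hy.1 (by omega)
    have hxp : x ≠ p := by
      intro h; rw [h, hwp] at hwx; omega
    by_cases hlt : x < p
    · refine ⟨x, Set.mem_Icc.2 ⟨hx.1, by omega⟩, ?_⟩
      rw [delw, if_pos ⟨hx.1, by omega⟩, if_pos hlt, hwx]
    · refine ⟨x - 1, Set.mem_Icc.2 ⟨by omega, by omega⟩, ?_⟩
      rw [delw, if_pos ⟨by omega, by omega⟩, if_neg (by omega)]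
      have : x - 1 + 1 = x := by omega
      rw [this, hwx]
  · -- identity outside
    intro m hm
    rw [Set.mem_Icc] at hm
    rw [delw, if_neg (by omega)]
  · -- delD range
    rw [delD]
    exact Finset.filter_subset _ _

lemma ins_isSegPerm {n p a b : ℕ} {w : ℕ → ℕ} {D : Finset ℕ}
    (hsp : IsSegPerm (n-1) w D) (hn : 1 ≤ n) (hp1 : 1 ≤ p) (hp2 : p ≤ n) :
    IsSegPerm n (insw n p w) (insD n p a b D) := by
  refine ⟨⟨?_, ?_, ?_⟩, ?_, ?_⟩
  · intro i hi
    rw [Set.mem_Icc] at hi ⊢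
    rw [insw, if_pos ⟨hi.1, hi.2⟩]
    by_cases h1 : i < p
    · have := segPerm_maps hsp hi.1 (by omega)
      rw [if_pos h1]; omega
    · by_cases h2 : i = p
      · rw [if_neg h1, if_pos h2]; omega
      · have := segPerm_maps hsp (by omega : 1 ≤ i - 1) (by omega)
        rw [if_neg h1, if_neg h2]; omega
  · intro i hi j hj heq
    rw [Set.mem_Icc] at hi hj
    simp only [insw] at heq
    rw [if_pos hi, if_pos hj] at heq
    have hbd : ∀ x, 1 ≤ x → x < p → w x ≤ n - 1 ∧ 1 ≤ w x := by
      intro x h1 h2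
      have := segPerm_maps hsp h1 (by omega)
      omega
    have hbd' : ∀ x, p < x → x ≤ n → w (x-1) ≤ n - 1 ∧ 1 ≤ w (x-1) := by
      intro x h1 h2
      have := segPerm_maps hsp (by omega : 1 ≤ x - 1) (by omega)
      omega
    by_cases hip : i = p <;> by_cases hjp : j = p
    · omega
    · exfalso
      rw [if_neg (by omega), if_pos hip] at heq
      by_cases hj' : j < p
      · rw [if_pos hj'] at heq
        have := hbd j hj.1 hj'
        omega
      · rw [if_neg hj', if_neg hjp] at heq
        have := hbd' j (by omega) hj.2
        omega
    · exfalso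
      rw [if_neg (by omega : ¬ j < p), if_pos hjp] at heq
      by_cases hi' : i < p
      · rw [if_pos hi'] at heq
        have := hbd i hi.1 hi'
        omega
      · rw [if_neg hi', if_neg hip] at heq
        have := hbd' i (by omega) hi.2
        omega
    · by_cases hi' : i < p <;> by_cases hj' : j < p
      · rw [if_pos hi', if_pos hj'] at heq
        exact segPerm_inj hsp hi.1 (by omega) hj.1 (by omega) heq
      · rw [if_pos hi', if_neg hj', if_neg hjp] at heq
        have := segPerm_inj hsp hi.1 (by omega) (by omega : 1 ≤ j - 1) (by omega) heq
        omega
      · rw [if_neg hi', if_neg hip, if_pos hj'] at heq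
        have := segPerm_inj hsp (by omega : 1 ≤ i - 1) (by omega) hj.1 (by omega) heq
        omega
      · rw [if_neg hi', if_neg hip, if_neg hj', if_neg hjp] at heq
        have := segPerm_inj hsp (by omega : 1 ≤ i - 1) (by omega) (by omega : 1 ≤ j - 1)
          (by omega) heq
        omega
  · intro y hy
    rw [Set.mem_Icc] at hy
    by_cases hyn : y = n
    · refine ⟨p, Set.mem_Icc.2 ⟨hp1, hp2⟩, ?_⟩
      rw [insw, if_pos ⟨hp1, hp2⟩, if_neg (by omega), if_pos rfl, hyn]
    · obtain ⟨x, hx, hwx⟩ := segPerm_surj hsp hy.1 (by omega)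
      by_cases hlt : x < p
      · refine ⟨x, Set.mem_Icc.2 ⟨hx.1, by omega⟩, ?_⟩
        rw [insw, if_pos ⟨hx.1, by omega⟩, if_pos hlt, hwx]
      · refine ⟨x + 1, Set.mem_Icc.2 ⟨by omega, by omega⟩, ?_⟩
        rw [insw, if_pos ⟨by omega, by omega⟩, if_neg (by omega), if_neg (by omega)]
        simpa using hwx
  · intro m hm
    rw [Set.mem_Icc] at hm
    rw [insw, if_neg (by omega)]
  · rw [insD]
    exact Finset.filter_subset _ _

/-! ### evaluation lemmas -/

lemma delw_lo {n p : ℕ} {w : ℕ → ℕ} {x : ℕ} (h1 : 1 ≤ x) (h2 : x ≤ n - 1)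
    (h3 : x < p) : delw n p w x = w x := by
  rw [delw, if_pos ⟨h1, h2⟩, if_pos h3]

lemma delw_hi {n p : ℕ} {w : ℕ → ℕ} {x : ℕ} (h1 : 1 ≤ x) (h2 : x ≤ n - 1)
    (h3 : ¬ x < p) : delw n p w x = w (x + 1) := by
  rw [delw, if_pos ⟨h1, h2⟩, if_neg h3]

lemma mem_delD {n p j : ℕ} {D : Finset ℕ} :
    j ∈ delD n p D ↔ (1 ≤ j ∧ j + 1 ≤ n - 1) ∧
      ((j + 2 ≤ p ∧ j ∈ D) ∨ j + 1 = p ∨ (p ≤ j ∧ j + 1 ∈ D)) := by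
  rw [delD, Finset.mem_filter, Finset.mem_Ico]
  constructor
  · rintro ⟨h1, h2⟩; exact ⟨⟨h1.1, by omega⟩, h2⟩
  · rintro ⟨h1, h2⟩; exact ⟨⟨h1.1, by omega⟩, h2⟩

lemma mem_insD {n p a b j : ℕ} {D : Finset ℕ} :
    j ∈ insD n p a b D ↔ (1 ≤ j ∧ j + 1 ≤ n) ∧
      ((j + 2 ≤ p ∧ j ∈ D) ∨ (j + 1 = p ∧ a = 0) ∨ (j = p ∧ b = 0) ∨
        (p + 1 ≤ j ∧ j - 1 ∈ D)) := by
  rw [insD, Finset.mem_filter, Finset.mem_Ico]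
  constructor
  · rintro ⟨h1, h2⟩; exact ⟨⟨h1.1, by omega⟩, h2⟩
  · rintro ⟨h1, h2⟩; exact ⟨⟨h1.1, by omega⟩, h2⟩

lemma mem_ascFin {n j : ℕ} {w : ℕ → ℕ} {D : Finset ℕ} :
    j ∈ ascFin n w D ↔ (1 ≤ j ∧ j + 1 ≤ n) ∧ j ∉ D ∧ w j < w (j + 1) := by
  rw [ascFin, Finset.mem_filter, Finset.mem_Ico]
  constructor
  · rintro ⟨h1, h2⟩; exact ⟨⟨h1.1, by omega⟩, h2⟩
  · rintro ⟨h1, h2⟩; exact ⟨⟨h1.1, by omega⟩, h2⟩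

lemma mem_descFin {n j : ℕ} {w : ℕ → ℕ} {D : Finset ℕ} :
    j ∈ descFin n w D ↔ (1 ≤ j ∧ j + 1 ≤ n) ∧ j ∉ D ∧ w (j + 1) < w j := by
  rw [descFin, Finset.mem_filter, Finset.mem_Ico]
  constructor
  · rintro ⟨h1, h2⟩; exact ⟨⟨h1.1, by omega⟩, h2⟩
  · rintro ⟨h1, h2⟩; exact ⟨⟨h1.1, by omega⟩, h2⟩

/-! ### ascent/descent counts under deletion -/

section Stats

variable {n p : ℕ} {w : ℕ → ℕ} {D : Finset ℕ}

lemma asc_del (hsp : IsSegPerm n w D) (hn : 1 ≤ n) (hp1 : 1 ≤ p) (hp2 : p ≤ n)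
    (hwp : w p = n) :
    (ascFin n w D).card = (ascFin (n-1) (delw n p w) (delD n p D)).card + dd1 p D := by
  classical
  have hw_ne : ∀ x, 1 ≤ x → x ≤ n → x ≠ p → w x < n := by
    intro x h1 h2 h3
    have hle := (segPerm_maps hsp h1 h2).2
    rcases lt_or_eq_of_le hle with h | h
    · exact h
    · exact absurd (segPerm_inj hsp h1 h2 hp1 hp2 (by rw [h, hwp])) h3
  have key : (ascFin (n-1) (delw n p w) (delD n p D)).card
      = ((ascFin n w D).filter (fun j => ¬ (j + 1 = p))).card := by
    apply SegStair.card_nbij_old (i := fun j => if j + 1 < p then j else j + 1)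
      (j := fun j => if j < p then j else j - 1)
    · -- forward membership
      intro j hj
      rw [mem_ascFin] at hj
      obtain ⟨⟨h1, h2⟩, hD, hlt⟩ := hj
      rw [Finset.mem_filter]
      by_cases hc : j + 1 < p
      · rw [if_pos hc]
        refine ⟨mem_ascFin.2 ⟨⟨h1, by omega⟩, ?_, ?_⟩, by omega⟩
        · intro hjD
          exact hD (mem_delD.2 ⟨⟨h1, h2⟩, Or.inl ⟨by omega, hjD⟩⟩)
        · rwa [delw_lo h1 (by omega) (by omega), delw_lo (by omega) (by omega) hc] at hlt
      · have hne : ¬ (j + 1 = p) := by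
          intro h
          exact hD (mem_delD.2 ⟨⟨h1, h2⟩, Or.inr (Or.inl h)⟩)
        have hgt : p ≤ j := by omega
        rw [if_neg hc]
        refine ⟨mem_ascFin.2 ⟨⟨by omega, by omega⟩, ?_, ?_⟩, by omega⟩
        · intro hjD
          exact hD (mem_delD.2 ⟨⟨h1, h2⟩, Or.inr (Or.inr ⟨hgt, hjD⟩)⟩)
        · rwa [delw_hi h1 (by omega) (by omega), delw_hi (by omega) (by omega) (by omega)]
            at hlt
    · -- backward membership
      intro j hj
      rw [Finset.mem_filter, mem_ascFin] at hj
      obtain ⟨⟨⟨h1, h2⟩, hD, hlt⟩, hne⟩ := hj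
      have hjp : j ≠ p := by
        intro h
        subst h
        have := hw_ne (j+1) (by omega) (by omega) (by omega)
        omega
      by_cases hc : j < p
      · rw [if_pos hc]
        refine mem_ascFin.2 ⟨⟨h1, by omega⟩, ?_, ?_⟩
        · intro hjD
          rw [mem_delD] at hjD
          rcases hjD.2 with h | h | h
          · exact hD h.2
          · omega
          · omega
        · rwa [delw_lo h1 (by omega) hc, delw_lo (by omega) (by omega) (by omega)]
      · rw [if_neg hc]
        refine mem_ascFin.2 ⟨⟨by omega, by omega⟩, ?_, ?_⟩
        · intro hjD
          rw [mem_delD] at hjD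
          rcases hjD.2 with h | h | h
          · omega
          · omega
          · have : j - 1 + 1 = j := by omega
            rw [this] at h
            exact hD h.2
        · have e1 : j - 1 + 1 = j := by omega
          rw [delw_hi (by omega) (by omega) (by omega), delw_hi (by omega) (by omega)
            (by omega), e1]
          exact hlt
    · -- left inverse
      intro j hj
      rw [mem_ascFin] at hj
      by_cases hc : j + 1 < p
      · rw [if_pos hc, if_pos (by omega)]
      · rw [if_neg hc, if_neg (by omega)]
        omega
    · -- right inverse
      intro j hj
      rw [Finset.mem_filter, mem_ascFin] at hj
      obtain ⟨⟨⟨h1, h2⟩, hD, hlt⟩, hne⟩ := hj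
      have hjp : j ≠ p := by
        intro h
        subst h
        have := hw_ne (j+1) (by omega) (by omega) (by omega)
        omega
      by_cases hc : j < p
      · rw [if_pos hc, if_pos (by omega)]
      · rw [if_neg hc, if_neg (by omega)]
        omega
  have key2 : ((ascFin n w D).filter (fun j => j + 1 = p)).card = dd1 p D := by
    by_cases hdd : 2 ≤ p ∧ p - 1 ∉ D
    · have : (ascFin n w D).filter (fun j => j + 1 = p) = {p - 1} := by
        ext j
        rw [Finset.mem_filter, mem_ascFin, Finset.mem_singleton]
        constructor
        · rintro ⟨-, h⟩; omega
        · intro h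
          subst h
          have e1 : p - 1 + 1 = p := by omega
          refine ⟨⟨⟨by omega, by omega⟩, ?_, ?_⟩, e1⟩
          · intro hD; exact hdd.2 hD
          · rw [e1, hwp]
            exact hw_ne (p-1) (by omega) (by omega) (by omega)
      rw [this, Finset.card_singleton, dd1, if_pos hdd]
    · have : (ascFin n w D).filter (fun j => j + 1 = p) = ∅ := by
        rw [Finset.filter_eq_empty_iff]
        intro j hj
        rw [mem_ascFin] at hj
        intro he
        rcases (not_and_or.1 hdd) with h | h
        · omega
        · rw [not_not] at h
          have : j = p - 1 := by omega
          rw [this] at hj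
          exact hj.2.1 h
      rw [this, Finset.card_empty, dd1, if_neg hdd]
  have hsplit := Finset.card_filter_add_card_filter_not
    (s := ascFin n w D) (p := fun j => j + 1 = p)
  omega

lemma desc_del (hsp : IsSegPerm n w D) (hn : 1 ≤ n) (hp1 : 1 ≤ p) (hp2 : p ≤ n)
    (hwp : w p = n) :
    (descFin n w D).card = (descFin (n-1) (delw n p w) (delD n p D)).card + dd2 n p D := by
  classical
  have hw_ne : ∀ x, 1 ≤ x → x ≤ n → x ≠ p → w x < n := by
    intro x h1 h2 h3
    have hle := (segPerm_maps hsp h1 h2).2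
    rcases lt_or_eq_of_le hle with h | h
    · exact h
    · exact absurd (segPerm_inj hsp h1 h2 hp1 hp2 (by rw [h, hwp])) h3
  have key : (descFin (n-1) (delw n p w) (delD n p D)).card
      = ((descFin n w D).filter (fun j => ¬ (j = p))).card := by
    apply SegStair.card_nbij_old (i := fun j => if j + 1 < p then j else j + 1)
      (j := fun j => if j < p then j else j - 1)
    · intro j hj
      rw [mem_descFin] at hj
      obtain ⟨⟨h1, h2⟩, hD, hlt⟩ := hj
      rw [Finset.mem_filter]
      by_cases hc : j + 1 < p
      · rw [if_pos hc]
        refine ⟨mem_descFin.2 ⟨⟨h1, by omega⟩, ?_, ?_⟩, by omega⟩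
        · intro hjD
          exact hD (mem_delD.2 ⟨⟨h1, h2⟩, Or.inl ⟨by omega, hjD⟩⟩)
        · rwa [delw_lo h1 (by omega) (by omega), delw_lo (by omega) (by omega) hc] at hlt
      · have hne : ¬ (j + 1 = p) := by
          intro h
          exact hD (mem_delD.2 ⟨⟨h1, h2⟩, Or.inr (Or.inl h)⟩)
        have hgt : p ≤ j := by omega
        rw [if_neg hc]
        refine ⟨mem_descFin.2 ⟨⟨by omega, by omega⟩, ?_, ?_⟩, by omega⟩
        · intro hjD
          exact hD (mem_delD.2 ⟨⟨h1, h2⟩, Or.inr (Or.inr ⟨hgt, hjD⟩)⟩)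
        · rwa [delw_hi h1 (by omega) (by omega), delw_hi (by omega) (by omega) (by omega)]
            at hlt
    · intro j hj
      rw [Finset.mem_filter, mem_descFin] at hj
      obtain ⟨⟨⟨h1, h2⟩, hD, hlt⟩, hne⟩ := hj
      have hjp : ¬ (j + 1 = p) := by
        intro h
        have := hw_ne j (by omega) (by omega) (by omega)
        rw [h, hwp] at hlt
        omega
      by_cases hc : j < p
      · rw [if_pos hc]
        refine mem_descFin.2 ⟨⟨h1, by omega⟩, ?_, ?_⟩
        · intro hjD
          rw [mem_delD] at hjD
          rcases hjD.2 with h | h | h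
          · exact hD h.2
          · omega
          · omega
        · rwa [delw_lo h1 (by omega) hc, delw_lo (by omega) (by omega) (by omega)]
      · rw [if_neg hc]
        refine mem_descFin.2 ⟨⟨by omega, by omega⟩, ?_, ?_⟩
        · intro hjD
          rw [mem_delD] at hjD
          rcases hjD.2 with h | h | h
          · omega
          · omega
          · have : j - 1 + 1 = j := by omega
            rw [this] at h
            exact hD h.2
        · have e1 : j - 1 + 1 = j := by omega
          rw [delw_hi (by omega) (by omega) (by omega), delw_hi (by omega) (by omega)
            (by omega), e1]
          exact hlt
    · intro j hj
      rw [mem_descFin] at hj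
      by_cases hc : j + 1 < p
      · rw [if_pos hc, if_pos (by omega)]
      · rw [if_neg hc, if_neg (by omega)]
        omega
    · intro j hj
      rw [Finset.mem_filter, mem_descFin] at hj
      obtain ⟨⟨⟨h1, h2⟩, hD, hlt⟩, hne⟩ := hj
      have hjp : ¬ (j + 1 = p) := by
        intro h
        have := hw_ne j (by omega) (by omega) (by omega)
        rw [h, hwp] at hlt
        omega
      by_cases hc : j < p
      · rw [if_pos hc, if_pos (by omega)]
      · rw [if_neg hc, if_neg (by omega)]
        omega
  have key2 : ((descFin n w D).filter (fun j => j = p)).card = dd2 n p D := by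
    by_cases hdd : p ≤ n - 1 ∧ p ∉ D
    · have : (descFin n w D).filter (fun j => j = p) = {p} := by
        ext j
        rw [Finset.mem_filter, mem_descFin, Finset.mem_singleton]
        constructor
        · rintro ⟨-, h⟩; exact h
        · intro h
          subst h
          refine ⟨⟨⟨by omega, by omega⟩, fun hD => hdd.2 hD, ?_⟩, rfl⟩
          · rw [hwp]
            exact hw_ne (j+1) (by omega) (by omega) (by omega)
      rw [this, Finset.card_singleton, dd2, if_pos hdd]
    · have : (descFin n w D).filter (fun j => j = p) = ∅ := by
        rw [Finset.filter_eq_empty_iff]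
        intro j hj
        rw [mem_descFin] at hj
        intro he
        subst he
        rcases (not_and_or.1 hdd) with h | h
        · omega
        · rw [not_not] at h
          exact hj.2.1 h
      rw [this, Finset.card_empty, dd2, if_neg hdd]
  have hsplit := Finset.card_filter_add_card_filter_not
    (s := descFin n w D) (p := fun j => j = p)
  omega

end Stats

/-! ### sminv under deletion -/

section Sminv

variable {n p : ℕ} {w : ℕ → ℕ} {D : Finset ℕ}

lemma mem_sminvSet {n : ℕ} {w : ℕ → ℕ} {D : Finset ℕ} {q : ℕ × ℕ} :
    q ∈ ((Finset.Icc 1 n ×ˢ Finset.Icc 1 n).filter fun q =>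
        q.1 < q.2 ∧ w q.2 < w q.1 ∧ (q.2 = 1 ∨ q.2 - 1 ∈ D ∨ w q.1 < w (q.2 - 1))) ↔
      (1 ≤ q.1 ∧ q.1 ≤ n) ∧ (1 ≤ q.2 ∧ q.2 ≤ n) ∧ q.1 < q.2 ∧ w q.2 < w q.1 ∧
        (q.2 = 1 ∨ q.2 - 1 ∈ D ∨ w q.1 < w (q.2 - 1)) := by
  rw [Finset.mem_filter, Finset.mem_product, Finset.mem_Icc, Finset.mem_Icc]
  tauto

lemma delw_G (hp1 : 1 ≤ p) (hp2 : p ≤ n) {x : ℕ} (h1 : 1 ≤ x) (h2 : x ≤ n) (h3 : x ≠ p) :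
    delw n p w (if x < p then x else x - 1) = w x := by
  by_cases h : x < p
  · rw [if_pos h]
    have hx : x ≤ n - 1 := by omega
    exact delw_lo h1 hx h
  · rw [if_neg h]
    have ha : 1 ≤ x - 1 := by omega
    have hb : x - 1 ≤ n - 1 := by omega
    have hc : ¬ x - 1 < p := by omega
    rw [delw_hi ha hb hc]
    congr 1
    omega

lemma delw_H {x : ℕ} (h1 : 1 ≤ x) (h2 : x ≤ n - 1) :
    delw n p w x = w (if x < p then x else x + 1) := by
  by_cases h : x < p
  · rw [if_pos h]; exact delw_lo h1 h2 h
  · rw [if_neg h]; exact delw_hi h1 h2 h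

lemma sminv_del (hsp : IsSegPerm n w D) (hn : 1 ≤ n) (hp1 : 1 ≤ p) (hp2 : p ≤ n)
    (hwp : w p = n) :
    sminv n w D = sminv (n-1) (delw n p w) (delD n p D) + rstat p D := by
  classical
  have hw_ne : ∀ x, 1 ≤ x → x ≤ n → x ≠ p → w x < n := by
    intro x h1 h2 h3
    have hle := (segPerm_maps hsp h1 h2).2
    rcases lt_or_eq_of_le hle with h | h
    · exact h
    · exact absurd (segPerm_inj hsp h1 h2 hp1 hp2 (by rw [h, hwp])) h3
  set S := ((Finset.Icc 1 n ×ˢ Finset.Icc 1 n).filter fun q =>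
      q.1 < q.2 ∧ w q.2 < w q.1 ∧ (q.2 = 1 ∨ q.2 - 1 ∈ D ∨ w q.1 < w (q.2 - 1))) with hS
  have hsplit := Finset.card_filter_add_card_filter_not
    (s := S) (p := fun q => q.1 = p)
  have hA : (S.filter (fun q => q.1 = p)).card = rstat p D := by
    rw [rstat]
    apply SegStair.card_nbij_old (i := fun q => q.2 - 1) (j := fun d => (p, d + 1))
    · rintro ⟨i, j⟩ hq
      rw [Finset.mem_filter] at hq
      obtain ⟨hq, hip⟩ := hq
      rw [mem_sminvSet] at hq
      obtain ⟨hi, hj, hij, hv, hc⟩ := hq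
      simp only at hip hi hj hij hv hc
      rw [hip] at hi hij hv hc
      rw [Finset.mem_filter]
      simp only
      rcases hc with h | h | h
      · exfalso; omega
      · exact ⟨h, by omega⟩
      · exfalso
        rw [hwp] at h
        have := (segPerm_maps hsp (by omega : 1 ≤ j - 1) (by omega)).2
        omega
    · intro d hd
      rw [Finset.mem_filter] at hd
      obtain ⟨hdD, hdp⟩ := hd
      have hdb := segPerm_D hsp hdD
      rw [Finset.mem_filter, mem_sminvSet]
      refine ⟨⟨⟨hp1, hp2⟩, ⟨by omega, by omega⟩, by omega, ?_, ?_⟩, rfl⟩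
      · rw [hwp]
        exact hw_ne (d+1) (by omega) (by omega) (by omega)
      · right; left
        simpa using hdD
    · rintro ⟨i, j⟩ hq
      rw [Finset.mem_filter] at hq
      obtain ⟨hq, hip⟩ := hq
      rw [mem_sminvSet] at hq
      obtain ⟨hi, hj, hij, hv, hc⟩ := hq
      simp only at hip hi hj hij hv hc ⊢
      rw [Prod.mk.injEq]
      exact ⟨hip.symm, by omega⟩
    · intro d hd
      simp
  have hB : (S.filter (fun q => ¬ (q.1 = p))).card
      = sminv (n-1) (delw n p w) (delD n p D) := by
    rw [sminv]
    apply SegStair.card_nbij_old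
      (i := fun q => (if q.1 < p then q.1 else q.1 - 1, if q.2 < p then q.2 else q.2 - 1))
      (j := fun q => (if q.1 < p then q.1 else q.1 + 1, if q.2 < p then q.2 else q.2 + 1))
    · rintro ⟨i, j⟩ hq
      rw [Finset.mem_filter] at hq
      obtain ⟨hq, hip⟩ := hq
      rw [mem_sminvSet] at hq
      obtain ⟨hi, hj, hij, hv, hc⟩ := hq
      simp only at hip hi hj hij hv hc
      have hjp : j ≠ p := by
        intro h
        rw [h, hwp] at hv
        have := (segPerm_maps hsp hi.1 hi.2).2
        omega
      rw [mem_sminvSet]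
      simp only
      have e1 : delw n p w (if i < p then i else i - 1) = w i := delw_G hp1 hp2 hi.1 hi.2 hip
      have e2 : delw n p w (if j < p then j else j - 1) = w j := delw_G hp1 hp2 hj.1 hj.2 hjp
      refine ⟨?_, ?_, ?_, ?_, ?_⟩
      · by_cases h : i < p
        · rw [if_pos h]; omega
        · rw [if_neg h]; omega
      · by_cases h : j < p
        · rw [if_pos h]; omega
        · rw [if_neg h]; omega
      · by_cases h1 : i < p <;> by_cases h2 : j < p
        · rw [if_pos h1, if_pos h2]; omega
        · rw [if_pos h1, if_neg h2]; omega
        · omega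
        · rw [if_neg h1, if_neg h2]; omega
      · rw [e1, e2]; exact hv
      · -- the smin condition
        rcases Nat.lt_trichotomy j p with hcase | hcase | hcase
        · -- j < p
          rw [if_pos hcase]
          rcases hc with h | h | h
          · exfalso; omega
          · right; left
            refine mem_delD.2 ⟨⟨by omega, by omega⟩, Or.inl ⟨by omega, h⟩⟩
          · right; right
            rw [e1]
            have hj1p : j - 1 < p := by omega
            have e3 : delw n p w (j - 1) = w (j - 1) := delw_lo (by omega) (by omega) hj1p
            rw [e3]
            exact h
        · exact absurd hcase hjp
        · -- j > p
          rw [if_neg (by omega : ¬ j < p)]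
          by_cases hj2 : j = p + 1
          · -- lands on position p : always initial or first
            subst hj2
            by_cases hp1' : p = 1
            · left; omega
            · right; left
              refine mem_delD.2 ⟨⟨by omega, by omega⟩, Or.inr (Or.inl (by omega))⟩
          · rcases hc with h | h | h
            · exfalso; omega
            · right; left
              refine mem_delD.2 ⟨⟨by omega, by omega⟩, Or.inr (Or.inr ⟨by omega, ?_⟩)⟩
              have e : j - 1 - 1 + 1 = j - 1 := by omega
              rw [e]; exact h
            · right; right
              rw [e1]
              have e : j - 1 - 1 = (if (j-1) < p then (j-1) else (j-1) - 1) := by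
                rw [if_neg (by omega)]
              rw [e, delw_G hp1 hp2 (by omega) (by omega) (by omega)]
              exact h
    · -- backward membership
      rintro ⟨i', j'⟩ hq
      rw [mem_sminvSet] at hq
      obtain ⟨hi, hj, hij, hv, hc⟩ := hq
      simp only at hi hj hij hv hc ⊢
      have eI : delw n p w i' = w (if i' < p then i' else i' + 1) := delw_H hi.1 hi.2
      have eJ : delw n p w j' = w (if j' < p then j' else j' + 1) := delw_H hj.1 hj.2
      have hIne : (if i' < p then i' else i' + 1) ≠ p := by
        by_cases h : i' < p
        · rw [if_pos h]; omega
        · rw [if_neg h]; omega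
      have hIb : 1 ≤ (if i' < p then i' else i' + 1) ∧ (if i' < p then i' else i' + 1) ≤ n := by
        by_cases h : i' < p
        · rw [if_pos h]; omega
        · rw [if_neg h]; omega
      have hJb : 1 ≤ (if j' < p then j' else j' + 1) ∧ (if j' < p then j' else j' + 1) ≤ n := by
        by_cases h : j' < p
        · rw [if_pos h]; omega
        · rw [if_neg h]; omega
      rw [Finset.mem_filter, mem_sminvSet]
      simp only
      refine ⟨⟨hIb, hJb, ?_, ?_, ?_⟩, hIne⟩
      · by_cases h1 : i' < p <;> by_cases h2 : j' < p
        · rw [if_pos h1, if_pos h2]; omega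
        · rw [if_pos h1, if_neg h2]; omega
        · exfalso; omega
        · rw [if_neg h1, if_neg h2]; omega
      · rw [← eI, ← eJ]; exact hv
      · rcases Nat.lt_trichotomy j' p with hcase | hcase | hcase
        · -- j' < p : new gap is old gap
          rw [if_pos hcase]
          rcases hc with h | h | h
          · exfalso; omega
          · rw [mem_delD] at h
            rcases h.2 with h' | h' | h'
            · right; left; exact h'.2
            · exfalso; omega
            · exfalso; omega
          · right; right
            have e3 : delw n p w (j' - 1) = w (j' - 1) := delw_lo (by omega) (by omega)
              (by omega)
            rw [eI, e3] at h
            exact h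
        · -- j' = p : maps to p+1, always fine via w p = n
          rw [if_neg (by omega : ¬ j' < p)]
          right; right
          have e : j' + 1 - 1 = p := by omega
          rw [e, hwp]
          exact hw_ne (if i' < p then i' else i' + 1) hIb.1 hIb.2 hIne
        · -- j' > p
          rw [if_neg (by omega : ¬ j' < p)]
          rcases hc with h | h | h
          · exfalso; omega
          · rw [mem_delD] at h
            rcases h.2 with h' | h' | h'
            · exfalso; omega
            · exfalso; omega
            · right; left
              have e : j' + 1 - 1 = j' - 1 + 1 := by omega
              rw [e]
              exact h'.2
          · right; right
            have e3 : delw n p w (j' - 1) = w (j' - 1 + 1) := delw_hi (by omega) (by omega)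
              (by omega)
            have e4 : j' + 1 - 1 = j' - 1 + 1 := by omega
            rw [eI, e3] at h
            rw [e4]
            exact h
    · -- left inverse
      rintro ⟨i, j⟩ hq
      rw [Finset.mem_filter] at hq
      obtain ⟨hq, hip⟩ := hq
      rw [mem_sminvSet] at hq
      obtain ⟨hi, hj, hij, hv, hc⟩ := hq
      simp only at hip hi hj hij hv hc
      have hjp : j ≠ p := by
        intro h
        rw [h, hwp] at hv
        have := (segPerm_maps hsp hi.1 hi.2).2
        omega
      simp only [Prod.mk.injEq]
      constructor
      · by_cases h : i < p
        · rw [if_pos h, if_pos h]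
        · rw [if_neg h, if_neg (by omega : ¬ i - 1 < p)]
          omega
      · by_cases h : j < p
        · rw [if_pos h, if_pos h]
        · rw [if_neg h, if_neg (by omega : ¬ j - 1 < p)]
          omega
    · -- right inverse
      rintro ⟨i', j'⟩ hq
      rw [mem_sminvSet] at hq
      obtain ⟨hi, hj, hij, hv, hc⟩ := hq
      simp only at hi hj hij hv hc ⊢
      simp only [Prod.mk.injEq]
      constructor
      · by_cases h : i' < p
        · rw [if_pos h, if_pos h]
        · rw [if_neg h, if_neg (by omega : ¬ i' + 1 < p)]
          omega
      · by_cases h : j' < p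
        · rw [if_pos h, if_pos h]
        · rw [if_neg h, if_neg (by omega : ¬ j' + 1 < p)]
          omega
  have hfin : sminv n w D = S.card := by rw [sminv, hS]
  omega

end Sminv

/-! ### the V set of insertion positions -/

section VinsSec

variable {n p a b : ℕ} {w : ℕ → ℕ} {D : Finset ℕ}

lemma mem_Vins {n a b y : ℕ} {D' : Finset ℕ} :
    y ∈ Vins n a b D' ↔ ((∃ d ∈ D', d + 1 = y) ∨ (y = n ∧ b = 0 ∧ (a = 0 ∨ 2 ≤ n)) ∨
      (y = 1 ∧ a = 0 ∧ (b = 0 ∨ 2 ≤ n))) := by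
  rw [Vins, Finset.mem_union, Finset.mem_union, Finset.mem_image]
  have h1 : (y ∈ if b = 0 ∧ (a = 0 ∨ 2 ≤ n) then ({n} : Finset ℕ) else ∅) ↔
      (y = n ∧ b = 0 ∧ (a = 0 ∨ 2 ≤ n)) := by
    by_cases hc : b = 0 ∧ (a = 0 ∨ 2 ≤ n) <;> simp [hc]
  have h2 : (y ∈ if a = 0 ∧ (b = 0 ∨ 2 ≤ n) then ({1} : Finset ℕ) else ∅) ↔
      (y = 1 ∧ a = 0 ∧ (b = 0 ∨ 2 ≤ n)) := by
    by_cases hc : a = 0 ∧ (b = 0 ∨ 2 ≤ n) <;> simp [hc]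
  rw [h1, h2]
  exact or_assoc

lemma rstat_eq_count (hsp : IsSegPerm n w D) (hn : 1 ≤ n) (hp1 : 1 ≤ p) (hp2 : p ≤ n) :
    rstat p D = ((Vins n (dd1 p D) (dd2 n p D) (delD n p D)).filter (fun y => p < y)).card := by
  classical
  rw [rstat]
  apply SegStair.card_nbij_old (i := fun x => if x = p then n else x)
    (j := fun y => if y = n then p else y)
  · intro x hx
    rw [Finset.mem_filter] at hx
    obtain ⟨hxD, hpx⟩ := hx
    have hxb := segPerm_D hsp hxD
    rw [Finset.mem_filter]
    by_cases hxp : x = p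
    · rw [if_pos hxp]
      subst hxp
      constructor
      · rw [mem_Vins]
        right; left
        refine ⟨rfl, ?_, Or.inr (by omega)⟩
        rw [dd2, if_neg]
        push_neg
        intro _
        exact hxD
      · omega
    · rw [if_neg hxp]
      refine ⟨mem_Vins.2 (Or.inl ⟨x - 1, ?_, by omega⟩), by omega⟩
      rw [mem_delD]
      have e : x - 1 + 1 = x := by omega
      refine ⟨⟨by omega, by omega⟩, Or.inr (Or.inr ⟨by omega, ?_⟩)⟩
      rw [e]
      exact hxD
  · intro y hy
    rw [Finset.mem_filter, mem_Vins] at hy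
    obtain ⟨hmem, hpy⟩ := hy
    rcases hmem with ⟨d, hd, hdy⟩ | ⟨hyn, hb0, -⟩ | ⟨hy1, -, -⟩
    · rw [mem_delD] at hd
      have hyb : y ≤ n - 1 := by omega
      rw [if_neg (by omega : ¬ y = n), Finset.mem_filter]
      rcases hd.2 with h | h | h
      · exfalso; omega
      · exfalso; omega
      · refine ⟨?_, by omega⟩
        have e : d + 1 = y := hdy
        rw [← e]
        exact h.2
    · rw [if_pos hyn, Finset.mem_filter]
      rw [dd2] at hb0
      by_cases hc : p ≤ n - 1 ∧ p ∉ D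
      · rw [if_pos hc] at hb0; exact absurd hb0 (by omega)
      · push_neg at hc
        refine ⟨hc (by omega), by omega⟩
    · exfalso; omega
  · intro x hx
    rw [Finset.mem_filter] at hx
    have hxb := segPerm_D hsp hx.1
    by_cases hxp : x = p
    · rw [if_pos hxp, if_pos rfl]; omega
    · rw [if_neg hxp, if_neg (by omega : ¬ x = n)]
  · intro y hy
    rw [Finset.mem_filter, mem_Vins] at hy
    obtain ⟨hmem, hpy⟩ := hy
    by_cases hyn : y = n
    · rw [if_pos hyn, if_pos rfl]; omega
    · rw [if_neg hyn, if_neg (by omega : ¬ y = p)]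

lemma posn_mem_Vins (hsp : IsSegPerm n w D) (hn : 1 ≤ n) (hp1 : 1 ≤ p) (hp2 : p ≤ n) :
    p ∈ Vins n (dd1 p D) (dd2 n p D) (delD n p D) := by
  rw [mem_Vins]
  by_cases hpn : p = n
  · right; left
    refine ⟨hpn, ?_, ?_⟩
    · rw [dd2, if_neg (by omega)]
    · by_cases h2 : 2 ≤ n
      · exact Or.inr h2
      · left
        rw [dd1, if_neg (by omega)]
  · by_cases hp2' : 2 ≤ p
    · left
      refine ⟨p - 1, ?_, by omega⟩
      rw [mem_delD]
      exact ⟨⟨by omega, by omega⟩, Or.inr (Or.inl (by omega))⟩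
    · right; right
      refine ⟨by omega, by rw [dd1, if_neg (by omega)], Or.inr (by omega)⟩

lemma card_Vins {n a b : ℕ} {w' : ℕ → ℕ} {D' : Finset ℕ}
    (hsp' : IsSegPerm (n-1) w' D') (hn : 1 ≤ n) (ha : a ≤ 1) (hb : b ≤ 1) :
    (Vins n a b D').card =
      ((n : ℤ) - ((ascFin (n-1) w' D').card + a) - ((descFin (n-1) w' D').card + b)).toNat := by
  classical
  have hgap := gap_partition hsp'
  have hD'sub : D' ⊆ Finset.Ico 1 (n-1) := hsp'.2.2
  by_cases hn2 : 2 ≤ n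
  · -- n ≥ 2
    have hA2 : (if b = 0 ∧ (a = 0 ∨ 2 ≤ n) then ({n} : Finset ℕ) else ∅).card
        = 1 - b := by
      by_cases hb0 : b = 0
      · rw [if_pos ⟨hb0, Or.inr hn2⟩, Finset.card_singleton]; omega
      · rw [if_neg (by tauto), Finset.card_empty]; omega
    have hA3 : (if a = 0 ∧ (b = 0 ∨ 2 ≤ n) then ({1} : Finset ℕ) else ∅).card
        = 1 - a := by
      by_cases ha0 : a = 0
      · rw [if_pos ⟨ha0, Or.inr hn2⟩, Finset.card_singleton]; omega
      · rw [if_neg (by tauto), Finset.card_empty]; omega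
    have hA1 : (D'.image (· + 1)).card = D'.card :=
      Finset.card_image_of_injective _ (fun x y h => by omega)
    have hd1 : Disjoint (D'.image (· + 1))
        (if b = 0 ∧ (a = 0 ∨ 2 ≤ n) then ({n} : Finset ℕ) else ∅) := by
      rw [Finset.disjoint_left]
      intro y hy hy2
      rw [Finset.mem_image] at hy
      obtain ⟨d, hd, rfl⟩ := hy
      have := hD'sub hd
      rw [Finset.mem_Ico] at this
      have hyn : d + 1 ≠ n := by omega
      by_cases hc : b = 0 ∧ (a = 0 ∨ 2 ≤ n)
      · rw [if_pos hc, Finset.mem_singleton] at hy2; exact hyn hy2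
      · rw [if_neg hc] at hy2; exact absurd hy2 (Finset.notMem_empty _)
    have hd2 : Disjoint ((D'.image (· + 1)) ∪
        (if b = 0 ∧ (a = 0 ∨ 2 ≤ n) then ({n} : Finset ℕ) else ∅))
        (if a = 0 ∧ (b = 0 ∨ 2 ≤ n) then ({1} : Finset ℕ) else ∅) := by
      rw [Finset.disjoint_left]
      intro y hy hy2
      by_cases hc : a = 0 ∧ (b = 0 ∨ 2 ≤ n)
      swap
      · rw [if_neg hc] at hy2; exact absurd hy2 (Finset.notMem_empty _)
      rw [if_pos hc, Finset.mem_singleton] at hy2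
      subst hy2
      rcases Finset.mem_union.1 hy with h | h
      · rw [Finset.mem_image] at h
        obtain ⟨d, hd, hde⟩ := h
        have := hD'sub hd
        rw [Finset.mem_Ico] at this
        omega
      · by_cases hc2 : b = 0 ∧ (a = 0 ∨ 2 ≤ n)
        · rw [if_pos hc2, Finset.mem_singleton] at h; omega
        · rw [if_neg hc2] at h; exact absurd h (Finset.notMem_empty _)
    rw [Vins, Finset.card_union_of_disjoint hd2, Finset.card_union_of_disjoint hd1,
      hA1, hA2, hA3]
    omega
  · -- n = 1
    have hn1 : n = 1 := by omega
    subst hn1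
    have hD' : D' = ∅ := by
      have : Finset.Ico 1 (1-1) = ∅ := by decide
      rw [this] at hD'sub
      exact Finset.subset_empty.1 hD'sub
    subst hD'
    have himg : (∅ : Finset ℕ).image (· + 1) = ∅ := rfl
    rw [Vins, himg, Finset.empty_union]
    have hk' : (ascFin 0 w' ∅).card = 0 := by
      simp [ascFin]
    have hl' : (descFin 0 w' ∅).card = 0 := by
      simp [descFin]
    rw [hk', hl']
    by_cases hab : a = 0 ∧ b = 0
    · rw [if_pos ⟨hab.2, Or.inl hab.1⟩, if_pos ⟨hab.1, Or.inl hab.2⟩]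
      rw [Finset.union_self, Finset.card_singleton]
      omega
    · have h1 : ¬ (b = 0 ∧ (a = 0 ∨ 2 ≤ 1)) := by omega
      have h2 : ¬ (a = 0 ∧ (b = 0 ∨ 2 ≤ 1)) := by omega
      rw [if_neg h1, if_neg h2, Finset.union_empty, Finset.card_empty]
      omega

end VinsSec

/-! ### round trips -/

section RoundTrip

variable {n p a b : ℕ} {w w' : ℕ → ℕ} {D D' : Finset ℕ}

lemma Vins_pos (hsp' : IsSegPerm (n-1) w' D') (hn : 1 ≤ n)
    (hp : p ∈ Vins n a b D') :
    (1 ≤ p ∧ p ≤ n) ∧ (a = 1 → 2 ≤ p) ∧ (b = 1 → p ≤ n - 1) ∧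
      (p = 1 ∨ p = n ∨ p - 1 ∈ D') := by
  rw [mem_Vins] at hp
  rcases hp with ⟨d, hd, hdp⟩ | ⟨h1, h2, h3⟩ | ⟨h1, h2, h3⟩
  · have := hsp'.2.2 hd
    rw [Finset.mem_Ico] at this
    refine ⟨⟨by omega, by omega⟩, fun _ => by omega, fun _ => by omega, ?_⟩
    right; right
    have : p - 1 = d := by omega
    rw [this]
    exact hd
  · subst h1
    exact ⟨⟨hn, le_refl _⟩, fun ha1 => by omega, fun hb1 => by omega, Or.inr (Or.inl rfl)⟩
  · subst h1
    exact ⟨⟨le_refl _, hn⟩, fun ha1 => by omega, fun hb1 => by omega, Or.inl rfl⟩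

lemma ins_del_w (hsp : IsSegPerm n w D) (hn : 1 ≤ n) (hp1 : 1 ≤ p) (hp2 : p ≤ n)
    (hwp : w p = n) : insw n p (delw n p w) = w := by
  funext i
  by_cases hi : 1 ≤ i ∧ i ≤ n
  · rw [insw]
    rw [if_pos hi]
    by_cases h1 : i < p
    · rw [if_pos h1, delw_lo hi.1 (by omega) h1]
    · by_cases h2 : i = p
      · rw [if_neg h1, if_pos h2, h2, hwp]
      · rw [if_neg h1, if_neg h2, delw_hi (by omega) (by omega) (by omega)]
        congr 1
        omega
  · rw [insw]
    rw [if_neg hi]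
    exact (hsp.2.1 i (by rw [Set.mem_Icc]; omega)).symm

lemma ins_del_D (hsp : IsSegPerm n w D) (hn : 1 ≤ n) (hp1 : 1 ≤ p) (hp2 : p ≤ n)
    (hwp : w p = n) : insD n p (dd1 p D) (dd2 n p D) (delD n p D) = D := by
  ext j
  rw [mem_insD]
  constructor
  · rintro ⟨hb, hc⟩
    rcases hc with ⟨h1, h2⟩ | ⟨h1, h2⟩ | ⟨h1, h2⟩ | ⟨h1, h2⟩
    · rw [mem_delD] at h2
      rcases h2.2 with h | h | h
      · exact h.2
      · exfalso; omega
      · exfalso; omega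
    · rw [dd1] at h2
      by_cases hc : 2 ≤ p ∧ p - 1 ∉ D
      · rw [if_pos hc] at h2; exact absurd h2 (by omega)
      · push_neg at hc
        have : j = p - 1 := by omega
        rw [this]
        exact hc (by omega)
    · rw [dd2] at h2
      by_cases hc : p ≤ n - 1 ∧ p ∉ D
      · rw [if_pos hc] at h2; exact absurd h2 (by omega)
      · push_neg at hc
        rw [h1]
        exact hc (by omega)
    · rw [mem_delD] at h2
      rcases h2.2 with h | h | h
      · exfalso; omega
      · exfalso; omega
      · have e : j - 1 + 1 = j := by omega
        rw [e] at h
        exact h.2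
  · intro hj
    have hb := segPerm_D hsp hj
    refine ⟨⟨by omega, by omega⟩, ?_⟩
    rcases Nat.lt_trichotomy (j+1) p with hcase | hcase | hcase
    · exact Or.inl ⟨by omega, mem_delD.2 ⟨⟨by omega, by omega⟩, Or.inl ⟨by omega, hj⟩⟩⟩
    · right; left
      refine ⟨hcase, ?_⟩
      rw [dd1, if_neg]
      push_neg
      intro _
      have : p - 1 = j := by omega
      rw [this]
      exact hj
    · by_cases hjp : j = p
      · right; right; left
        refine ⟨hjp, ?_⟩
        rw [dd2, if_neg]
        push_neg
        intro _
        rw [← hjp]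
        exact hj
      · right; right; right
        refine ⟨by omega, mem_delD.2 ⟨⟨by omega, by omega⟩, Or.inr (Or.inr ⟨by omega, ?_⟩)⟩⟩
        have e : j - 1 + 1 = j := by omega
        rw [e]
        exact hj

lemma insw_at_p (hn : 1 ≤ n) (hp1 : 1 ≤ p) (hp2 : p ≤ n) : insw n p w' p = n := by
  rw [insw]
  rw [if_pos ⟨hp1, hp2⟩, if_neg (lt_irrefl p)]
  simp

lemma del_ins_w (hsp' : IsSegPerm (n-1) w' D') (hn : 1 ≤ n) (hp1 : 1 ≤ p) (hp2 : p ≤ n) :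
    delw n p (insw n p w') = w' := by
  funext i
  by_cases hi : 1 ≤ i ∧ i ≤ n - 1
  · by_cases h1 : i < p
    · rw [delw_lo hi.1 hi.2 h1, insw]
      rw [if_pos (by omega : 1 ≤ i ∧ i ≤ n), if_pos h1]
    · rw [delw_hi hi.1 hi.2 h1, insw]
      rw [if_pos (by omega : 1 ≤ i + 1 ∧ i + 1 ≤ n), if_neg (by omega), if_neg (by omega)]
      simp
  · rw [delw]
    rw [if_neg hi]
    exact (hsp'.2.1 i (by rw [Set.mem_Icc]; omega)).symm

lemma del_ins_D (hsp' : IsSegPerm (n-1) w' D') (hn : 1 ≤ n)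
    (hp : p ∈ Vins n a b D') :
    delD n p (insD n p a b D') = D' := by
  obtain ⟨⟨hp1, hp2⟩, hpa, hpb, hporc⟩ := Vins_pos hsp' hn hp
  ext j
  rw [mem_delD]
  constructor
  · rintro ⟨hb, hc⟩
    rcases hc with ⟨h1, h2⟩ | h1 | ⟨h1, h2⟩
    · rw [mem_insD] at h2
      rcases h2.2 with h | h | h | h
      · exact h.2
      · exfalso; omega
      · exfalso; omega
      · exfalso; omega
    · rcases hporc with h | h | h
      · exfalso; omega
      · exfalso; omega
      · have : j = p - 1 := by omega
        rw [this]
        exact h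
    · rw [mem_insD] at h2
      rcases h2.2 with h | h | h | h
      · exfalso; omega
      · exfalso; omega
      · exfalso; omega
      · have e : j + 1 - 1 = j := by omega
        rw [e] at h
        exact h.2
  · intro hj
    have hb : 1 ≤ j ∧ j + 1 ≤ n - 1 := by
      have := hsp'.2.2 hj
      rw [Finset.mem_Ico] at this
      omega
    refine ⟨hb, ?_⟩
    rcases Nat.lt_trichotomy (j+1) p with hcase | hcase | hcase
    · exact Or.inl ⟨by omega,
        mem_insD.2 ⟨⟨by omega, by omega⟩, Or.inl ⟨by omega, hj⟩⟩⟩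
    · exact Or.inr (Or.inl hcase)
    · refine Or.inr (Or.inr ⟨by omega,
        mem_insD.2 ⟨⟨by omega, by omega⟩, Or.inr (Or.inr (Or.inr ⟨by omega, ?_⟩))⟩⟩)
      have e : j + 1 - 1 = j := by omega
      rw [e]
      exact hj

lemma del_ins_dd1 (hsp' : IsSegPerm (n-1) w' D') (hn : 1 ≤ n) (ha : a ≤ 1)
    (hp : p ∈ Vins n a b D') :
    dd1 p (insD n p a b D') = a := by
  obtain ⟨⟨hp1, hp2⟩, hpa, hpb, hporc⟩ := Vins_pos hsp' hn hp
  by_cases ha0 : a = 0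
  · subst ha0
    rw [dd1, if_neg]
    push_neg
    intro hp2'
    exact mem_insD.2 ⟨⟨by omega, by omega⟩, Or.inr (Or.inl ⟨by omega, rfl⟩)⟩
  · have ha1 : a = 1 := by omega
    have h2p := hpa ha1
    have hnot : p - 1 ∉ insD n p a b D' := by
      intro hmem
      rw [mem_insD] at hmem
      rcases hmem.2 with h | h | h | h <;> omega
    rw [dd1, if_pos ⟨h2p, hnot⟩, ha1]

lemma del_ins_dd2 (hsp' : IsSegPerm (n-1) w' D') (hn : 1 ≤ n) (hb : b ≤ 1)
    (hp : p ∈ Vins n a b D') :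
    dd2 n p (insD n p a b D') = b := by
  obtain ⟨⟨hp1, hp2⟩, hpa, hpb, hporc⟩ := Vins_pos hsp' hn hp
  by_cases hb0 : b = 0
  · subst hb0
    rw [dd2, if_neg]
    push_neg
    intro hple
    exact mem_insD.2 ⟨⟨by omega, by omega⟩, Or.inr (Or.inr (Or.inl ⟨rfl, rfl⟩))⟩
  · have hb1 : b = 1 := by omega
    have hple := hpb hb1
    have hnot : p ∉ insD n p a b D' := by
      intro hmem
      rw [mem_insD] at hmem
      rcases hmem.2 with h | h | h | h <;> omega
    rw [dd2, if_pos ⟨hple, hnot⟩, hb1]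

end RoundTrip

/-! ### LHS recursion -/

lemma mem_Afin {n k ℓ : ℕ} {s : (ℕ → ℕ) × Finset ℕ} :
    s ∈ Afin n k ℓ ↔ IsSegPerm n s.1 s.2 ∧ (ascFin n s.1 s.2).card = k ∧
      (descFin n s.1 s.2).card = ℓ := by
  rw [Afin, Set.Finite.mem_toFinset]
  rfl

lemma L_rec' (n k ℓ : ℕ) (hn : 1 ≤ n) :
    L n k ℓ = qnat ((n : ℤ) - k - ℓ).toNat *
      ∑ ab ∈ (({0,1} : Finset ℕ) ×ˢ ({0,1} : Finset ℕ)),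
        (if ab.1 ≤ k ∧ ab.2 ≤ ℓ then L (n-1) (k - ab.1) (ℓ - ab.2) else 0) := by
  classical
  set t := ((({0,1} : Finset ℕ) ×ˢ ({0,1} : Finset ℕ)).sigma
    (fun ab => (if ab.1 ≤ k ∧ ab.2 ≤ ℓ then Afin (n-1) (k-ab.1) (ℓ-ab.2) else ∅).sigma
      (fun τ => Vins n ab.1 ab.2 τ.2))) with ht
  have key : L n k ℓ = ∑ x ∈ t, (Polynomial.X : Polynomial ℤ) ^
      (sminv (n-1) x.2.1.1 x.2.1.2 +
        ((Vins n x.1.1 x.1.2 x.2.1.2).filter (fun y => x.2.2 < y)).card) := by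
    rw [L]
    apply Finset.sum_nbij'
      (i := fun s => ⟨(dd1 (posn n s.1) s.2, dd2 n (posn n s.1) s.2),
        ⟨(delw n (posn n s.1) s.1, delD n (posn n s.1) s.2), posn n s.1⟩⟩)
      (j := fun x => (insw n x.2.2 x.2.1.1, insD n x.2.2 x.1.1 x.1.2 x.2.1.2))
    · -- forward membership
      intro s hs
      rw [mem_Afin] at hs
      obtain ⟨hsp, hk, hl⟩ := hs
      obtain ⟨⟨hp1, hp2⟩, hwp⟩ := posn_spec hsp hn
      have hasc := asc_del hsp hn hp1 hp2 hwp
      have hdesc := desc_del hsp hn hp1 hp2 hwp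
      rw [ht, Finset.mem_sigma]
      constructor
      · rw [Finset.mem_product]
        constructor
        · rw [dd1]; split_ifs <;> simp
        · rw [dd2]; split_ifs <;> simp
      · rw [Finset.mem_sigma]
        dsimp only
        have hg : dd1 (posn n s.1) s.2 ≤ k ∧ dd2 n (posn n s.1) s.2 ≤ ℓ := by omega
        constructor
        · rw [if_pos hg, mem_Afin]
          refine ⟨del_isSegPerm hsp hn hp1 hp2 hwp, ?_, ?_⟩ <;> dsimp only <;> omega
        · exact posn_mem_Vins hsp hn hp1 hp2
    · -- backward membership
      rintro ⟨ab, τ, pp⟩ hx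
      rw [ht, Finset.mem_sigma] at hx
      obtain ⟨hab, hx2⟩ := hx
      rw [Finset.mem_sigma] at hx2
      dsimp only at hx2
      obtain ⟨hτ, hpp⟩ := hx2
      by_cases hg : ab.1 ≤ k ∧ ab.2 ≤ ℓ
      swap
      · rw [if_neg hg] at hτ; exact absurd hτ (Finset.notMem_empty _)
      rw [if_pos hg, mem_Afin] at hτ
      obtain ⟨hsp', hk', hl'⟩ := hτ
      simp only [Finset.mem_product, Finset.mem_insert, Finset.mem_singleton] at hab
      have ha1 : ab.1 ≤ 1 := by omega
      have hb1 : ab.2 ≤ 1 := by omega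
      obtain ⟨⟨hp1, hp2⟩, -, -, -⟩ := Vins_pos hsp' hn hpp
      have hspI : IsSegPerm n (insw n pp τ.1) (insD n pp ab.1 ab.2 τ.2) :=
        ins_isSegPerm hsp' hn hp1 hp2
      have hpos : pp = posn n (insw n pp τ.1) :=
        posn_unique hspI hn hp1 hp2 (insw_at_p hn hp1 hp2)
      rw [mem_Afin]
      refine ⟨hspI, ?_, ?_⟩ <;> dsimp only
      · have := asc_del hspI hn (p := pp) hp1 hp2 (insw_at_p hn hp1 hp2)
        rw [del_ins_w hsp' hn hp1 hp2, del_ins_D hsp' hn hpp,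
          del_ins_dd1 hsp' hn ha1 hpp] at this
        omega
      · have := desc_del hspI hn (p := pp) hp1 hp2 (insw_at_p hn hp1 hp2)
        rw [del_ins_w hsp' hn hp1 hp2, del_ins_D hsp' hn hpp,
          del_ins_dd2 hsp' hn hb1 hpp] at this
        omega
    · -- left inverse
      intro s hs
      rw [mem_Afin] at hs
      obtain ⟨hsp, hk, hl⟩ := hs
      obtain ⟨⟨hp1, hp2⟩, hwp⟩ := posn_spec hsp hn
      dsimp only
      rw [Prod.ext_iff]
      exact ⟨ins_del_w hsp hn hp1 hp2 hwp, ins_del_D hsp hn hp1 hp2 hwp⟩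
    · -- right inverse
      rintro ⟨ab, τ, pp⟩ hx
      rw [ht, Finset.mem_sigma] at hx
      obtain ⟨hab, hx2⟩ := hx
      rw [Finset.mem_sigma] at hx2
      dsimp only at hx2
      obtain ⟨hτ, hpp⟩ := hx2
      by_cases hg : ab.1 ≤ k ∧ ab.2 ≤ ℓ
      swap
      · rw [if_neg hg] at hτ; exact absurd hτ (Finset.notMem_empty _)
      rw [if_pos hg, mem_Afin] at hτ
      obtain ⟨hsp', hk', hl'⟩ := hτ
      simp only [Finset.mem_product, Finset.mem_insert, Finset.mem_singleton] at hab
      have ha1 : ab.1 ≤ 1 := by omega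
      have hb1 : ab.2 ≤ 1 := by omega
      obtain ⟨⟨hp1, hp2⟩, -, -, -⟩ := Vins_pos hsp' hn hpp
      have hspI : IsSegPerm n (insw n pp τ.1) (insD n pp ab.1 ab.2 τ.2) :=
        ins_isSegPerm hsp' hn hp1 hp2
      have hpos : posn n (insw n pp τ.1) = pp :=
        (posn_unique hspI hn hp1 hp2 (insw_at_p hn hp1 hp2)).symm
      dsimp only
      rw [hpos, del_ins_w hsp' hn hp1 hp2, del_ins_D hsp' hn hpp,
        del_ins_dd1 hsp' hn ha1 hpp, del_ins_dd2 hsp' hn hb1 hpp]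
    · -- values
      intro s hs
      rw [mem_Afin] at hs
      obtain ⟨hsp, hk, hl⟩ := hs
      obtain ⟨⟨hp1, hp2⟩, hwp⟩ := posn_spec hsp hn
      dsimp only
      rw [sminv_del hsp hn hp1 hp2 hwp, rstat_eq_count hsp hn hp1 hp2]
  rw [key, ht, Finset.sum_sigma, Finset.mul_sum]
  apply Finset.sum_congr rfl
  intro ab hab
  rw [Finset.sum_sigma]
  simp only [Finset.mem_product, Finset.mem_insert, Finset.mem_singleton] at hab
  have ha1 : ab.1 ≤ 1 := by omega
  have hb1 : ab.2 ≤ 1 := by omega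
  by_cases hg : ab.1 ≤ k ∧ ab.2 ≤ ℓ
  · rw [if_pos hg, if_pos hg, L, Finset.mul_sum]
    apply Finset.sum_congr rfl
    intro τ hτ
    rw [mem_Afin] at hτ
    obtain ⟨hsp', hk', hl'⟩ := hτ
    have hcard := card_Vins (a := ab.1) (b := ab.2) hsp' hn ha1 hb1
    have harith : ((n : ℤ) - ((ascFin (n-1) τ.1 τ.2).card + ab.1) -
        ((descFin (n-1) τ.1 τ.2).card + ab.2)) = (n : ℤ) - k - ℓ := by
      rw [hk', hl']
      omega
    rw [harith] at hcard
    have hsum : ∑ pp ∈ Vins n ab.1 ab.2 τ.2, (Polynomial.X : Polynomial ℤ) ^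
        (sminv (n-1) τ.1 τ.2 + ((Vins n ab.1 ab.2 τ.2).filter (fun y => pp < y)).card)
        = (Polynomial.X : Polynomial ℤ) ^ (sminv (n-1) τ.1 τ.2) *
          qnat ((n : ℤ) - k - ℓ).toNat := by
      rw [← hcard, ← sum_pow_count (Vins n ab.1 ab.2 τ.2), Finset.mul_sum]
      apply Finset.sum_congr rfl
      intro pp _
      rw [pow_add]
    rw [hsum]
    ring
  · rw [if_neg hg, if_neg hg, mul_zero]
    apply Finset.sum_eq_zero
    intro τ hτ
    exact absurd hτ (Finset.notMem_empty _)

/-! ### LHS recursion (proved later) -/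

lemma L_rec (n k ℓ : ℕ) (hn : 1 ≤ n) :
    L n k ℓ = qnat ((n : ℤ) - k - ℓ).toNat *
      ∑ ab ∈ (({0,1} : Finset ℕ) ×ˢ ({0,1} : Finset ℕ)),
        (if ab.1 ≤ k ∧ ab.2 ≤ ℓ then L (n-1) (k - ab.1) (ℓ - ab.2) else 0) :=
  L_rec' n k ℓ hn

lemma L_eq_R : ∀ n k ℓ : ℕ, L n k ℓ = R n k ℓ := by
  intro n
  induction n with
  | zero => intro k ℓ; rw [L_zero, R_zero]
  | succ m ih =>
    intro k ℓ
    rw [L_rec (m+1) k ℓ (by omega), R_rec (m+1) k ℓ (by omega)]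
    congr 1
    apply Finset.sum_congr rfl
    intro ab _
    by_cases hg : ab.1 ≤ k ∧ ab.2 ≤ ℓ
    · rw [if_pos hg, if_pos hg]
      simp only [Nat.add_sub_cancel]
      exact ih _ _
    · rw [if_neg hg, if_neg hg]

end SegStair

/-- `Σ_{(σ,D) ∈ SW(1^n,k,ℓ)} q^{sminv(σ,D)} = Σ_{(β,γ)} ∏_{i=1}^{n} [h_i]_q`, the
right-hand sum being over `β, γ : {1,…,n} → {0,1}` with `Σβ = k`, `Σγ = ℓ` and all
partial heights `h_i ≥ 1`. -/
theorem segPerm_sminv_eq_stair (n k ℓ : ℕ) (hn : 1 ≤ n) :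
    (∑ᶠ s ∈ {s : (ℕ → ℕ) × Finset ℕ | IsSegPerm n s.1 s.2 ∧
        (ascFin n s.1 s.2).card = k ∧ (descFin n s.1 s.2).card = ℓ},
      (Polynomial.X : Polynomial ℤ) ^ sminv n s.1 s.2)
    = ∑ᶠ p ∈ {p : (ℕ → ℕ) × (ℕ → ℕ) |
        (∀ i, i ∉ Finset.Icc 1 n → p.1 i = 0 ∧ p.2 i = 0) ∧
        (∀ i ∈ Finset.Icc 1 n, p.1 i ≤ 1 ∧ p.2 i ≤ 1) ∧
        (∑ i ∈ Finset.Icc 1 n, p.1 i) = k ∧ (∑ i ∈ Finset.Icc 1 n, p.2 i) = ℓ ∧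
        (∀ i ∈ Finset.Icc 1 n, 1 ≤ pathHeight p.1 p.2 i)},
      ∏ i ∈ Finset.Icc 1 n, qnat (pathHeight p.1 p.2 i).toNat := by
  classical
  have hL : (∑ᶠ s ∈ {s : (ℕ → ℕ) × Finset ℕ | IsSegPerm n s.1 s.2 ∧
        (ascFin n s.1 s.2).card = k ∧ (descFin n s.1 s.2).card = ℓ},
      (Polynomial.X : Polynomial ℤ) ^ sminv n s.1 s.2) = SegStair.L n k ℓ := by
    have hsets : {s : (ℕ → ℕ) × Finset ℕ | IsSegPerm n s.1 s.2 ∧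
        (ascFin n s.1 s.2).card = k ∧ (descFin n s.1 s.2).card = ℓ} = SegStair.ASet n k ℓ := rfl
    rw [SegStair.L, hsets, ← Set.Finite.coe_toFinset (SegStair.ASet_finite n k ℓ),
      finsum_mem_coe_finset]
    rfl
  rw [hL, SegStair.L_eq_R]
  -- now the right-hand side
  set CSet : Set ((ℕ → ℕ) × (ℕ → ℕ)) := {p : (ℕ → ℕ) × (ℕ → ℕ) |
        (∀ i, i ∉ Finset.Icc 1 n → p.1 i = 0 ∧ p.2 i = 0) ∧
        (∀ i ∈ Finset.Icc 1 n, p.1 i ≤ 1 ∧ p.2 i ≤ 1) ∧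
        (∑ i ∈ Finset.Icc 1 n, p.1 i) = k ∧ (∑ i ∈ Finset.Icc 1 n, p.2 i) = ℓ ∧
        (∀ i ∈ Finset.Icc 1 n, 1 ≤ pathHeight p.1 p.2 i)} with hCSet
  have hCsub : CSet ⊆ SegStair.BSet n k ℓ := by
    rintro p ⟨h1, h2, h3, h4, h5⟩
    exact ⟨h1, h2, h3, h4⟩
  have hCfin : CSet.Finite := (SegStair.BSet_finite n k ℓ).subset hCsub
  rw [← Set.Finite.coe_toFinset hCfin, finsum_mem_coe_finset, SegStair.R]
  symm
  apply Finset.sum_subset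
  · intro p hp
    rw [Set.Finite.mem_toFinset] at hp
    rw [SegStair.Bfin, Set.Finite.mem_toFinset]
    exact hCsub hp
  · intro p hp hnp
    rw [SegStair.Bfin, Set.Finite.mem_toFinset] at hp
    rw [Set.Finite.mem_toFinset] at hnp
    have : ¬ (∀ i ∈ Finset.Icc 1 n, 1 ≤ pathHeight p.1 p.2 i) := by
      intro hcon
      exact hnp ⟨hp.1, hp.2.1, hp.2.2.1, hp.2.2.2, hcon⟩
    push_neg at this
    obtain ⟨i, hi, hlt⟩ := this
    apply Finset.prod_eq_zero hi
    have : (pathHeight p.1 p.2 i).toNat = 0 := Int.toNat_of_nonpos (by omega)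
    rw [this, SegStair.qnat_zero]
end

section
/- For all integers n ≥ 1, k, ℓ ≥ 0, and every subset S ⊆ {1,…,n−1}, the following identity holds in ℤ[q]: Σ_{b} q^{deg_x(b)} = Σ_{(σ,D)} q^{sminv(σ,D)}, where the left-hand sum is over all (1,2)-basis data b of length n with deg_θ(b) = k, deg_ξ(b) = ℓ, and Asc(b) = S, and the right-hand sum is over all segmented permutations (σ,D) ∈ SW(1^n,k,ℓ) with Split(σ,D) = S. -/
open Polynomial

/-- A (1,2)-basis datum of length `n`: sequences `α β γ : {1,…,n} → ℕ` (encoded as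
functions `ℕ → ℕ` vanishing outside `{1,…,n}`) with `β i, γ i ∈ {0,1}` and
`α i + 1 ≤ ∑_{j=1}^{i} (1 - β j - γ j)` (in `ℤ`) for all `i ∈ {1,…,n}`. -/
def IsDatum (n : ℕ) (α β γ : ℕ → ℕ) : Prop :=
  (∀ i, i ∉ Finset.Icc 1 n → α i = 0 ∧ β i = 0 ∧ γ i = 0) ∧
  (∀ i ∈ Finset.Icc 1 n, β i ≤ 1 ∧ γ i ≤ 1) ∧
  (∀ i ∈ Finset.Icc 1 n,
    (α i : ℤ) + 1 ≤ ∑ j ∈ Finset.Icc 1 i, (1 - (β j : ℤ) - (γ j : ℤ)))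

/-- The set of ascents of a (1,2)-basis datum. -/
def AscSetD (n : ℕ) (α β γ : ℕ → ℕ) : Set ℕ :=
  {i | i ∈ Set.Ico 1 n ∧
    (β i < β (i + 1) ∨ (β i = 1 ∧ β (i + 1) = 1 ∧ α (i + 1) + γ (i + 1) ≤ α i) ∨
      (β i = 0 ∧ β (i + 1) = 0 ∧ α i < α (i + 1) + γ (i + 1)))}

/-- Index `i` is thick: `i` is initial (`i = 1` or `i - 1 ∈ D`) or `w (i-1) > w i`. -/
def Thick (w : ℕ → ℕ) (D : Finset ℕ) (i : ℕ) : Prop :=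
  (i = 1 ∨ i - 1 ∈ D) ∨ w i < w (i - 1)

/-- Index `i` is thin: `i` is not initial and `w (i-1) < w i`. -/
def Thin (w : ℕ → ℕ) (D : Finset ℕ) (i : ℕ) : Prop :=
  ¬(i = 1 ∨ i - 1 ∈ D) ∧ w (i - 1) < w i

/-- The set of splitting values `m ∈ {1,…,n-1}` of a segmented permutation. -/
def SplitSet (n : ℕ) (w : ℕ → ℕ) (D : Finset ℕ) : Set ℕ :=
  {m | m ∈ Set.Ico 1 n ∧ ∃ i ∈ Set.Icc 1 n, ∃ j ∈ Set.Icc 1 n,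
    w i = m ∧ w j = m + 1 ∧
      ((Thick w D i ∧ Thin w D j) ∨ (Thin w D i ∧ Thin w D j ∧ i < j) ∨
        (Thick w D i ∧ Thick w D j ∧ j < i))}

/- ### Auxiliary development -/
open scoped Classical

namespace SSW

/-- inverse of `w` -/
noncomputable def pos (w : ℕ → ℕ) : ℕ → ℕ := Function.invFun w

/-- value `u` is "strong at stage `m`": its position is initial or its predecessor
entry exceeds `m`. -/
def Str (w : ℕ → ℕ) (D : Finset ℕ) (m u : ℕ) : Prop :=
  pos w u = 1 ∨ pos w u - 1 ∈ D ∨ m < w (pos w u - 1)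

/-- the finset counted by `α` at value `v`. -/
noncomputable def aF (n : ℕ) (w : ℕ → ℕ) (D : Finset ℕ) (v : ℕ) : Finset ℕ :=
  (Finset.Icc 1 n).filter fun u => u < v ∧ pos w v < pos w u ∧ Str w D v u

noncomputable def phiA (n : ℕ) (w : ℕ → ℕ) (D : Finset ℕ) : ℕ → ℕ := fun v =>
  if v ∈ Finset.Icc 1 n then (aF n w D v).card else 0

noncomputable def phiB (n : ℕ) (w : ℕ → ℕ) (D : Finset ℕ) : ℕ → ℕ := fun v =>
  if v ∈ Finset.Icc 1 n ∧ ¬ Str w D v v then 1 else 0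

noncomputable def phiG (n : ℕ) (w : ℕ → ℕ) (D : Finset ℕ) : ℕ → ℕ := fun v =>
  if v ∈ Finset.Icc 1 n ∧ pos w v ∉ D ∧ w (pos w v + 1) < v then 1 else 0

noncomputable def Phi (n : ℕ) (s : (ℕ → ℕ) × Finset ℕ) : (ℕ → ℕ) × (ℕ → ℕ) × (ℕ → ℕ) :=
  (phiA n s.1 s.2, phiB n s.1 s.2, phiG n s.1 s.2)

section basic

variable {n : ℕ} {w : ℕ → ℕ} {D : Finset ℕ} (hw : IsSegPerm n w D)
include hw

lemma w_bijective : Function.Bijective w := by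
  obtain ⟨hb, hid, -⟩ := hw
  constructor
  · intro a b hab
    by_cases ha : a ∈ Set.Icc 1 n <;> by_cases hb' : b ∈ Set.Icc 1 n
    · exact hb.injOn ha hb' hab
    · exact absurd (hab ▸ hb.mapsTo ha) (by rwa [hid b hb'])
    · exact absurd ((hab.symm) ▸ hb.mapsTo hb') (by rwa [hid a ha])
    · rw [hid a ha, hid b hb'] at hab; exact hab
  · intro y
    by_cases hy : y ∈ Set.Icc 1 n
    · obtain ⟨x, hx, hxy⟩ := hb.surjOn hy; exact ⟨x, hxy⟩
    · exact ⟨y, hid y hy⟩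

lemma pos_w (i : ℕ) : pos w (w i) = i :=
  Function.leftInverse_invFun (w_bijective hw).injective i

lemma w_pos (v : ℕ) : w (pos w v) = v :=
  Function.rightInverse_invFun (w_bijective hw).surjective v

lemma w_inj {a b : ℕ} (h : w a = w b) : a = b := (w_bijective hw).injective h

lemma pos_inj {a b : ℕ} (h : pos w a = pos w b) : a = b := by
  have := congrArg w h; rwa [w_pos hw, w_pos hw] at this

lemma w_mem {v : ℕ} (h1 : 1 ≤ v) (h2 : v ≤ n) : 1 ≤ w v ∧ w v ≤ n := by
  have := hw.1.mapsTo (Set.mem_Icc.2 ⟨h1, h2⟩); exact Set.mem_Icc.1 this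

lemma pos_mem {v : ℕ} (h1 : 1 ≤ v) (h2 : v ≤ n) : 1 ≤ pos w v ∧ pos w v ≤ n := by
  by_contra h
  have : w (pos w v) = pos w v := hw.2.1 _ (by simpa [Set.mem_Icc] using h)
  rw [w_pos hw] at this
  rw [← this] at h; exact h ⟨h1, h2⟩

lemma w_out {v : ℕ} (h : ¬ (1 ≤ v ∧ v ≤ n)) : w v = v := hw.2.1 _ (by simpa [Set.mem_Icc] using h)

end basic

end SSW

namespace SSW

/-- strong set at stage `m` -/
noncomputable def SG (w : ℕ → ℕ) (D : Finset ℕ) (m : ℕ) : Finset ℕ :=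
  (Finset.Icc 1 m).filter fun u => Str w D m u

section strong

variable {n : ℕ} {w : ℕ → ℕ} {D : Finset ℕ} (hw : IsSegPerm n w D)
include hw

lemma pos_pos {v : ℕ} (hv : 1 ≤ v) : 1 ≤ pos w v := by
  rcases Nat.eq_zero_or_pos (pos w v) with h | h
  · have : w (pos w v) = v := w_pos hw v
    rw [h, w_out hw (by omega)] at this; omega
  · exact h

lemma str_step {m u : ℕ} (hu : pos w u ≠ pos w (m+1) + 1) :
    Str w D m u ↔ Str w D (m+1) u := by
  unfold Str
  rcases Nat.eq_zero_or_pos (pos w u) with h0 | h0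
  · -- pos u = 0 : u = 0
    have hu0 : u = 0 := by
      have : w (pos w u) = u := w_pos hw u
      rw [h0, w_out hw (by omega)] at this; omega
    have hne : w (pos w u - 1) ≠ m + 1 := by
      intro h
      have : pos w u - 1 = pos w (m+1) := w_inj hw (by rw [h, w_pos hw])
      have hp1 : 1 ≤ pos w (m+1) := pos_pos hw (by omega)
      omega
    constructor <;> rintro (h | h | h) <;> simp_all <;> omega
  · by_cases h1 : pos w u = 1
    · simp [h1]
    · have hne : w (pos w u - 1) ≠ m + 1 := by
        intro h
        have : pos w u - 1 = pos w (m+1) := w_inj hw (by rw [h, w_pos hw])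
        have hp1 : 1 ≤ pos w (m+1) := pos_pos hw (by omega)
        omega
      constructor <;> rintro (h | h | h) <;> simp_all <;> omega

lemma str_exc {m u : ℕ} (hu : pos w u = pos w (m+1) + 1) :
    Str w D m u ∧ (Str w D (m+1) u ↔ pos w (m+1) ∈ D) := by
  have hw1 : w (pos w u - 1) = m + 1 := by
    rw [hu]; simp; exact w_pos hw (m+1)
  have hp1 : 1 ≤ pos w (m+1) := pos_pos hw (by omega)
  constructor
  · exact Or.inr (Or.inr (by omega))
  · unfold Str
    constructor
    · rintro (h | h | h)
      · omega
      · rwa [hu, Nat.add_sub_cancel] at h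
      · omega
    · intro h; exact Or.inr (Or.inl (by rwa [hu, Nat.add_sub_cancel]))

lemma phiB_le_one (v : ℕ) : phiB n w D v ≤ 1 := by unfold phiB; split <;> omega
lemma phiG_le_one (v : ℕ) : phiG n w D v ≤ 1 := by unfold phiG; split <;> omega

lemma SG_succ_card {m : ℕ} (hm : m + 1 ≤ n) :
    ((SG w D (m+1)).card : ℤ) = (SG w D m).card + (1 - phiB n w D (m+1) - phiG n w D (m+1)) := by
  classical
  set A : Finset ℕ := (Finset.Icc 1 m).filter (fun u => Str w D (m+1) u) with hA
  -- SUB1 : card (SG (m+1)) + phiB (m+1) = A.card + 1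
  have hIcc : Finset.Icc 1 (m+1) = insert (m+1) (Finset.Icc 1 m) := by
    ext x; simp [Finset.mem_Icc]; omega
  have hsub1 : (SG w D (m+1)).card + phiB n w D (m+1) = A.card + 1 := by
    unfold SG
    rw [hIcc, Finset.filter_insert]
    by_cases hs : Str w D (m+1) (m+1)
    · rw [if_pos hs]
      have : phiB n w D (m+1) = 0 := by
        unfold phiB; rw [if_neg]; push_neg; intro _; simpa using hs
      rw [this, Finset.card_insert_of_notMem (by
        intro hmem
        have := Finset.mem_filter.1 hmem
        have := Finset.mem_Icc.1 this.1
        omega)]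
    · rw [if_neg hs]
      have : phiB n w D (m+1) = 1 := by
        unfold phiB; rw [if_pos ⟨by simp [Finset.mem_Icc]; omega, hs⟩]
      rw [this]
  -- SUB2 : A.card + phiG (m+1) = card (SG m)
  have hsub2 : A.card + phiG n w D (m+1) = (SG w D m).card := by
    by_cases hg : pos w (m+1) ∉ D ∧ w (pos w (m+1) + 1) < m + 1
    · -- phiG = 1, SG m = insert u0 A
      have hphiG : phiG n w D (m+1) = 1 := by
        unfold phiG; rw [if_pos ⟨by simp [Finset.mem_Icc]; omega, hg⟩]
      set u0 := w (pos w (m+1) + 1) with hu0def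
      have hposu0 : pos w u0 = pos w (m+1) + 1 := pos_w hw _
      have hu0pos : 1 ≤ u0 := by
        rcases Nat.eq_zero_or_pos u0 with h0 | h0
        · exfalso
          have : pos w (m+1) + 1 = 0 := w_inj hw (by rw [← hu0def, h0, w_out hw (by omega)])
          omega
        · exact h0
      have hu0le : u0 ≤ m := by omega
      have hu0SG : u0 ∈ SG w D m := by
        refine Finset.mem_filter.2 ⟨Finset.mem_Icc.2 ⟨hu0pos, hu0le⟩, ?_⟩
        exact (str_exc hw hposu0).1
      have hu0A : u0 ∉ A := by
        rw [hA]; intro hmem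
        have h2 := (Finset.mem_filter.1 hmem).2
        exact hg.1 (((str_exc hw hposu0).2).1 h2)
      have hSGm : SG w D m = insert u0 A := by
        unfold SG; rw [hA]
        ext u
        simp only [Finset.mem_insert, Finset.mem_filter]
        constructor
        · rintro ⟨hmem, hstr⟩
          by_cases hequ : u = u0
          · exact Or.inl hequ
          · refine Or.inr ⟨hmem, ?_⟩
            rw [← str_step hw (fun hc => hequ (pos_inj hw (by rw [hc, hposu0])))]
            exact hstr
        · rintro (rfl | ⟨hmem, hstr⟩)
          · exact ⟨Finset.mem_Icc.2 ⟨hu0pos, hu0le⟩, (str_exc hw hposu0).1⟩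
          · by_cases hequ : u = u0
            · exact ⟨hmem, hequ ▸ (str_exc hw hposu0).1⟩
            · exact ⟨hmem, (str_step hw (fun hc => hequ (pos_inj hw (by rw [hc, hposu0])))).2 hstr⟩
      rw [hSGm, Finset.card_insert_of_notMem hu0A, hphiG]
    · -- phiG = 0, A = SG m
      have hphiG : phiG n w D (m+1) = 0 := by
        unfold phiG; rw [if_neg]; push_neg; intro _ hD'; by_contra hc; exact hg ⟨hD', by omega⟩
      have : A = SG w D m := by
        unfold SG; rw [hA]
        apply Finset.filter_congr
        intro u hu
        have humem := Finset.mem_Icc.1 hu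
        by_cases hp : pos w u = pos w (m+1) + 1
        · have hexc := str_exc (D := D) hw hp
          have hinD : pos w (m+1) ∈ D := by
            by_contra hnD
            have : w (pos w (m+1) + 1) = u := by rw [← hp, w_pos hw]
            exact hg ⟨hnD, by omega⟩
          constructor
          · intro _; exact hexc.1
          · intro _; exact hexc.2.2 hinD
        · exact (str_step hw hp).symm
      rw [this, hphiG]
      omega
  have h1 : ((SG w D (m+1)).card : ℤ) + phiB n w D (m+1) = A.card + 1 := by exact_mod_cast hsub1
  have h2 : ((A.card : ℤ)) + phiG n w D (m+1) = (SG w D m).card := by exact_mod_cast hsub2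
  linarith

lemma sum_one_sub_eq_SG : ∀ m, m ≤ n →
    (∑ j ∈ Finset.Icc 1 m, (1 - (phiB n w D j : ℤ) - (phiG n w D j : ℤ))) = (SG w D m).card := by
  intro m
  induction m with
  | zero => intro _; simp [SG]
  | succ m ih =>
    intro hm
    have hIcc : Finset.Icc 1 (m+1) = insert (m+1) (Finset.Icc 1 m) := by
      ext x; simp [Finset.mem_Icc]; omega
    rw [hIcc, Finset.sum_insert (by simp), ih (by omega), SG_succ_card hw hm]
    ring

lemma exists_strong_before : ∀ p, 1 ≤ p → p ≤ n → ∀ m, w p ≤ m →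
    ∃ u, (1 ≤ u ∧ u ≤ m) ∧ pos w u ≤ p ∧ Str w D m u := by
  intro p
  induction p using Nat.strong_induction_on with
  | _ p ih =>
    intro hp1 hpn m hwp
    have hu1 : 1 ≤ w p := (w_mem hw hp1 hpn).1
    have hpos : pos w (w p) = p := pos_w hw p
    by_cases hs : Str w D m (w p)
    · exact ⟨w p, ⟨hu1, hwp⟩, le_of_eq hpos, hs⟩
    · unfold Str at hs
      push_neg at hs
      rw [hpos] at hs
      obtain ⟨hne1, hnD, hle⟩ := hs
      have hp2 : 2 ≤ p := by omega
      obtain ⟨u, hu, hule, hstr⟩ := ih (p-1) (by omega) (by omega) (by omega) m (by omega)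
      exact ⟨u, hu, by omega, hstr⟩

lemma aF_card_lt_SG {m : ℕ} (hm1 : 1 ≤ m) (hmn : m ≤ n) :
    (aF n w D m).card + 1 ≤ (SG w D m).card := by
  classical
  have hsub : aF n w D m ⊆ SG w D m := by
    intro u hu
    obtain ⟨hmem, hlt, _, hstr⟩ := Finset.mem_filter.1 hu
    exact Finset.mem_filter.2 ⟨Finset.mem_Icc.2 ⟨(Finset.mem_Icc.1 hmem).1, by omega⟩, hstr⟩
  obtain ⟨pm1, pm2⟩ := pos_mem hw hm1 hmn
  obtain ⟨u, hu, hule, hstr⟩ := exists_strong_before hw (pos w m) pm1 pm2 m (by rw [w_pos hw])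
  have huaF : u ∉ aF n w D m := by
    intro hmem
    have := (Finset.mem_filter.1 hmem).2.2.1
    omega
  have : insert u (aF n w D m) ⊆ SG w D m := by
    intro x hx
    rcases Finset.mem_insert.1 hx with rfl | hx
    · exact Finset.mem_filter.2 ⟨Finset.mem_Icc.2 hu, hstr⟩
    · exact hsub hx
  calc (aF n w D m).card + 1 = (insert u (aF n w D m)).card := (Finset.card_insert_of_notMem huaF).symm
    _ ≤ (SG w D m).card := Finset.card_le_card this

end strong
end SSW

namespace SSW
section sums

variable {n : ℕ} {w : ℕ → ℕ} {D : Finset ℕ} (hw : IsSegPerm n w D)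
include hw

lemma sum_phiB_eq : ∑ v ∈ Finset.Icc 1 n, phiB n w D v = (ascFin n w D).card := by
  classical
  have h1 : ∑ v ∈ Finset.Icc 1 n, phiB n w D v
      = ((Finset.Icc 1 n).filter (fun v => ¬ Str w D v v)).card := by
    rw [Finset.card_filter]
    apply Finset.sum_congr rfl
    intro v hv
    unfold phiB
    by_cases h : ¬ Str w D v v
    · rw [if_pos ⟨hv, h⟩, if_pos h]
    · rw [if_neg (by tauto), if_neg h]
  rw [h1]
  apply Finset.card_bij' (fun v _ => pos w v - 1) (fun i _ => w (i+1))
  · -- forward mem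
    intro v hv
    obtain ⟨hmem, hstr⟩ := Finset.mem_filter.1 hv
    obtain ⟨hv1, hvn⟩ := Finset.mem_Icc.1 hmem
    unfold Str at hstr
    push_neg at hstr
    obtain ⟨hne1, hnD, hle⟩ := hstr
    obtain ⟨hp1, hpn⟩ := pos_mem hw hv1 hvn
    have hp2 : 2 ≤ pos w v := by omega
    refine Finset.mem_filter.2 ⟨Finset.mem_Ico.2 ⟨by omega, by omega⟩, hnD, ?_⟩
    have heq : pos w v - 1 + 1 = pos w v := by omega
    rw [heq, w_pos hw]
    have hne : w (pos w v - 1) ≠ v := by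
      intro hc
      have : pos w v - 1 = pos w v := w_inj hw (by rw [hc, w_pos hw])
      omega
    omega
  · -- backward mem
    intro i hi
    obtain ⟨hmem, hnD, hlt⟩ := Finset.mem_filter.1 hi
    obtain ⟨hi1, hin⟩ := Finset.mem_Ico.1 hmem
    have hv := w_mem hw (v := i+1) (by omega) (by omega)
    refine Finset.mem_filter.2 ⟨Finset.mem_Icc.2 hv, ?_⟩
    intro hstr
    rcases hstr with h | h | h <;> rw [pos_w hw] at h
    · omega
    · simp at h; exact hnD h
    · simp at h; omega
  · intro v hv
    obtain ⟨hmem, hstr⟩ := Finset.mem_filter.1 hv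
    obtain ⟨hv1, hvn⟩ := Finset.mem_Icc.1 hmem
    unfold Str at hstr; push_neg at hstr
    have hp1 := (pos_mem hw hv1 hvn).1
    have : pos w v - 1 + 1 = pos w v := by omega
    rw [this, w_pos hw]
  · intro i hi
    simp [pos_w hw]

lemma sum_phiG_eq : ∑ v ∈ Finset.Icc 1 n, phiG n w D v = (descFin n w D).card := by
  classical
  have h1 : ∑ v ∈ Finset.Icc 1 n, phiG n w D v
      = ((Finset.Icc 1 n).filter (fun v => pos w v ∉ D ∧ w (pos w v + 1) < v)).card := by
    rw [Finset.card_filter]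
    apply Finset.sum_congr rfl
    intro v hv
    unfold phiG
    by_cases h : pos w v ∉ D ∧ w (pos w v + 1) < v
    · rw [if_pos ⟨hv, h⟩, if_pos h]
    · rw [if_neg (by tauto), if_neg h]
  rw [h1]
  apply Finset.card_bij' (fun v _ => pos w v) (fun i _ => w i)
  · intro v hv
    obtain ⟨hmem, hnD, hlt⟩ := Finset.mem_filter.1 hv
    obtain ⟨hv1, hvn⟩ := Finset.mem_Icc.1 hmem
    obtain ⟨hp1, hpn⟩ := pos_mem hw hv1 hvn
    have hplt : pos w v < n := by
      rcases Nat.lt_or_ge (pos w v) n with h | h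
      · exact h
      · exfalso
        have : pos w v = n := by omega
        rw [this, w_out hw (by omega)] at hlt
        omega
    refine Finset.mem_filter.2 ⟨Finset.mem_Ico.2 ⟨hp1, hplt⟩, hnD, ?_⟩
    rwa [w_pos hw]
  · intro i hi
    obtain ⟨hmem, hnD, hlt⟩ := Finset.mem_filter.1 hi
    obtain ⟨hi1, hin⟩ := Finset.mem_Ico.1 hmem
    have hv := w_mem hw (v := i) (by omega) (by omega)
    refine Finset.mem_filter.2 ⟨Finset.mem_Icc.2 hv, ?_⟩
    rw [pos_w hw]
    exact ⟨hnD, hlt⟩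
  · intro v hv; exact w_pos hw v
  · intro i hi; exact pos_w hw i

lemma sum_phiA_eq : ∑ v ∈ Finset.Icc 1 n, phiA n w D v = sminv n w D := by
  classical
  unfold sminv
  rw [Finset.card_eq_sum_card_fiberwise (f := fun p => w p.1) (t := Finset.Icc 1 n)
    (by rintro ⟨p1, p2⟩ hp
        have := (Finset.mem_product.1 (Finset.mem_filter.1 hp).1).1
        obtain ⟨h1, h2⟩ := Finset.mem_Icc.1 this
        exact Finset.mem_Icc.2 (w_mem hw h1 h2))]
  apply Finset.sum_congr rfl
  intro v hv
  obtain ⟨hv1, hvn⟩ := Finset.mem_Icc.1 hv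
  unfold phiA
  rw [if_pos hv]
  symm
  apply Finset.card_bij' (fun p _ => w p.2) (fun u _ => (pos w v, pos w u))
  · rintro ⟨p1, p2⟩ hp
    obtain ⟨hp', hwv⟩ := Finset.mem_filter.1 hp
    obtain ⟨hmem, hlt, hwlt, hcond⟩ := Finset.mem_filter.1 hp'
    obtain ⟨hm1, hm2⟩ := Finset.mem_product.1 hmem
    obtain ⟨h11, h12⟩ := Finset.mem_Icc.1 hm1
    obtain ⟨h21, h22⟩ := Finset.mem_Icc.1 hm2
    simp only at hwv hlt hwlt hcond ⊢
    refine Finset.mem_filter.2 ⟨Finset.mem_Icc.2 (w_mem hw h21 h22), ?_, ?_, ?_⟩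
    · rw [← hwv]; exact hwlt
    · rw [pos_w hw, ← hwv, pos_w hw]; exact hlt
    · unfold Str
      rw [pos_w hw, ← hwv]
      exact hcond
  · intro u hu
    obtain ⟨hmem, hult, hplt, hstr⟩ := Finset.mem_filter.1 hu
    obtain ⟨hu1, hun⟩ := Finset.mem_Icc.1 hmem
    refine Finset.mem_filter.2 ⟨Finset.mem_filter.2 ⟨Finset.mem_product.2
      ⟨Finset.mem_Icc.2 (pos_mem hw hv1 hvn), Finset.mem_Icc.2 (pos_mem hw hu1 hun)⟩,
      ?_, ?_, ?_⟩, ?_⟩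
    · exact hplt
    · simp only; rw [w_pos hw, w_pos hw]; exact hult
    · simp only; rw [w_pos hw]; exact hstr
    · simp only; exact w_pos hw v
  · rintro ⟨p1, p2⟩ hp
    obtain ⟨hp', hwv⟩ := Finset.mem_filter.1 hp
    simp only at hwv ⊢
    rw [pos_w hw, ← hwv, pos_w hw]
  · intro u hu
    exact w_pos hw u

end sums
end SSW

namespace SSW
section claims

variable {n : ℕ} {w : ℕ → ℕ} {D : Finset ℕ} (hw : IsSegPerm n w D)
include hw

omit hw in
lemma str_mono {m m' u : ℕ} (h : m ≤ m') (hs : Str w D m' u) : Str w D m u := by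
  rcases hs with h1 | h1 | h1
  · exact Or.inl h1
  · exact Or.inr (Or.inl h1)
  · exact Or.inr (Or.inr (by omega))

lemma w_ne_zero {x : ℕ} (hx : x ≠ 0) : w x ≠ 0 := by
  intro h
  have h0 : w 0 = 0 := w_out hw (by omega)
  exact hx (w_inj hw (h.trans h0.symm))

lemma claimA {m : ℕ} (hm1 : 1 ≤ m) (hmn : m + 1 ≤ n) (hij : pos w m < pos w (m+1)) :
    (aF n w D (m+1)).card + phiG n w D (m+1) ≤ (aF n w D m).card := by
  classical
  have hsub : ∀ u ∈ aF n w D (m+1), u ∈ aF n w D m := by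
    intro u hu
    obtain ⟨hmem, hult, hplt, hstr⟩ := Finset.mem_filter.1 hu
    refine Finset.mem_filter.2 ⟨hmem, ?_, by omega, str_mono (by omega) hstr⟩
    -- u < m : u ≠ m since pos u > pos (m+1) > pos m
    have : u ≠ m := by
      intro rfl'
      subst rfl'
      omega
    omega
  by_cases hg : pos w (m+1) ∉ D ∧ w (pos w (m+1) + 1) < m + 1
  · have hphiG : phiG n w D (m+1) = 1 := by
      unfold phiG; rw [if_pos ⟨by simp [Finset.mem_Icc]; omega, hg⟩]
    set u0 := w (pos w (m+1) + 1) with hu0def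
    have hposu0 : pos w u0 = pos w (m+1) + 1 := pos_w hw _
    have hu01 : 1 ≤ u0 := Nat.one_le_iff_ne_zero.2 (w_ne_zero hw (by omega))
    have hu0m : u0 ∈ aF n w D m := by
      refine Finset.mem_filter.2 ⟨Finset.mem_Icc.2 ⟨hu01, by omega⟩, ?_, by omega, ?_⟩
      · -- u0 < m
        have : u0 ≠ m := by
          intro h
          have : pos w u0 = pos w m := by rw [h]
          omega
        omega
      · exact (str_exc hw hposu0).1
    have hu0not : u0 ∉ aF n w D (m+1) := by
      intro hmem
      have hstr := (Finset.mem_filter.1 hmem).2.2.2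
      exact hg.1 (((str_exc hw hposu0).2).1 hstr)
    have : insert u0 (aF n w D (m+1)) ⊆ aF n w D m := by
      intro x hx
      rcases Finset.mem_insert.1 hx with rfl | hx
      · exact hu0m
      · exact hsub x hx
    calc (aF n w D (m+1)).card + phiG n w D (m+1)
        = (insert u0 (aF n w D (m+1))).card := by
          rw [Finset.card_insert_of_notMem hu0not, hphiG]
      _ ≤ (aF n w D m).card := Finset.card_le_card this
  · have hphiG : phiG n w D (m+1) = 0 := by
      unfold phiG; rw [if_neg (by tauto)]
    rw [hphiG, Nat.add_zero]
    exact Finset.card_le_card hsub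

lemma claimB {m : ℕ} (hm1 : 1 ≤ m) (hmn : m + 1 ≤ n) (hji : pos w (m+1) < pos w m)
    (hcase : (Str w D m m ∧ Str w D (m+1) (m+1)) ∨ (¬ Str w D m m ∧ ¬ Str w D (m+1) (m+1))) :
    (aF n w D m).card < (aF n w D (m+1)).card + phiG n w D (m+1) := by
  classical
  set i := pos w m with hi
  set j := pos w (m+1) with hj
  have hi1 : 1 ≤ i := pos_pos hw hm1
  have hj1 : 1 ≤ j := pos_pos hw (by omega)
  have himem := pos_mem hw hm1 (by omega)
  have hjmem := pos_mem hw (v := m+1) (by omega) hmn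
  have hwi : w i = m := w_pos hw m
  have hwj : w j = m + 1 := w_pos hw (m+1)
  have hsub : aF n w D m ⊆ aF n w D (m+1) := by
    intro u hu
    obtain ⟨hmem, hult, hplt, hstr⟩ := Finset.mem_filter.1 hu
    refine Finset.mem_filter.2 ⟨hmem, by omega, by omega, ?_⟩
    exact (str_step hw (by omega)).1 hstr
  -- helper to conclude from an extra element
  have hextra : ∀ x, x ∈ aF n w D (m+1) → x ∉ aF n w D m →
      (aF n w D m).card < (aF n w D (m+1)).card + phiG n w D (m+1) := by
    intro x hx hxn
    have hlt : (aF n w D m).card < (aF n w D (m+1)).card := by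
      apply Finset.card_lt_card
      rw [Finset.ssubset_iff_of_subset hsub]
      exact ⟨x, hx, hxn⟩
    omega
  -- helper: conclude when phiG (m+1) = 1
  have hgam : (pos w (m+1) ∉ D ∧ w (pos w (m+1) + 1) < m + 1) →
      (aF n w D m).card < (aF n w D (m+1)).card + phiG n w D (m+1) := by
    intro hg
    have hphiG : phiG n w D (m+1) = 1 := by
      unfold phiG; rw [if_pos ⟨by simp [Finset.mem_Icc]; omega, hg⟩]
    have := Finset.card_le_card hsub
    omega
  rcases hcase with ⟨hsm, hsm1⟩ | ⟨hsm, hsm1⟩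
  · -- both thick
    have hmmem : m ∈ Finset.Icc 1 n := Finset.mem_Icc.2 ⟨hm1, by omega⟩
    rcases hsm with h1 | h1 | h1
    · omega  -- i = 1 impossible since j < i, j ≥ 1
    · -- i - 1 ∈ D : x = m works
      apply hextra m
      · exact Finset.mem_filter.2 ⟨hmmem, by omega, by omega, Or.inr (Or.inl h1)⟩
      · intro hmem; have := (Finset.mem_filter.1 hmem).2.1; omega
    · -- m < w (i-1)
      rw [← hi] at h1
      by_cases h2 : w (i - 1) = m + 1
      · -- i - 1 = j
        have hij1 : i - 1 = j := w_inj hw (by rw [h2, hwj])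
        by_cases h3 : j ∈ D
        · apply hextra m
          · exact Finset.mem_filter.2 ⟨hmmem, by omega, by omega,
              Or.inr (Or.inl (by rw [← hi, hij1]; exact h3))⟩
          · intro hmem; have := (Finset.mem_filter.1 hmem).2.1; omega
        · apply hgam
          refine ⟨h3, ?_⟩
          have : j + 1 = i := by omega
          rw [← hj, this, hwi]; omega
      · -- w (i-1) > m + 1
        apply hextra m
        · exact Finset.mem_filter.2 ⟨hmmem, by omega, by omega,
            Or.inr (Or.inr (by show m + 1 < w (i - 1); omega))⟩
        · intro hmem; have := (Finset.mem_filter.1 hmem).2.1; omega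
  · -- both thin
    unfold Str at hsm hsm1
    push_neg at hsm hsm1
    obtain ⟨hine1, hinD, hile⟩ := hsm
    obtain ⟨hjne1, hjnD, hjle⟩ := hsm1
    rw [← hi] at hine1 hinD hile
    rw [← hj] at hjne1 hjnD hjle
    by_cases hlt : w (j + 1) < m + 1
    · by_cases h3 : j ∈ D
      · -- x := w (j+1)
        set x := w (j+1) with hxdef
        have hposx : pos w x = j + 1 := pos_w hw _
        have hx1 : 1 ≤ x := Nat.one_le_iff_ne_zero.2 (w_ne_zero hw (by omega))
        have hjne_i : j + 1 ≠ i := by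
          intro h
          have : i - 1 = j := by omega
          rw [this] at hinD; exact hinD h3
        apply hextra x
        · refine Finset.mem_filter.2 ⟨Finset.mem_Icc.2 ⟨hx1, by omega⟩, by omega, by omega, ?_⟩
          exact Or.inr (Or.inl (by rw [hposx]; simpa using h3))
        · intro hmem
          have := (Finset.mem_filter.1 hmem).2.2.1
          rw [hposx, ← hi] at this
          omega
      · exact hgam ⟨h3, hlt⟩
    · -- w (j+1) > m + 1
      have hne : w (j+1) ≠ m + 1 := by
        intro h
        have : j + 1 = j := w_inj hw (by rw [h, hwj])
        omega
      have hgt : m + 1 < w (j + 1) := by omega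
      set P := (Finset.Icc (j+1) i).filter (fun p => w p < m + 1) with hP
      have hiP : i ∈ P := Finset.mem_filter.2 ⟨Finset.mem_Icc.2 ⟨by omega, le_refl i⟩, by rw [hwi]; omega⟩
      have hPne : P.Nonempty := ⟨i, hiP⟩
      set p' := P.min' hPne with hp'
      have hp'P : p' ∈ P := Finset.min'_mem P hPne
      obtain ⟨hp'mem, hp'lt⟩ := Finset.mem_filter.1 hp'P
      obtain ⟨hp'1, hp'2⟩ := Finset.mem_Icc.1 hp'mem
      have hp'nej : p' ≠ j + 1 := by
        intro h; rw [h] at hp'lt; omega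
      have hprev : ¬ (w (p' - 1) < m + 1) := by
        intro h
        have hmem : p' - 1 ∈ P := Finset.mem_filter.2 ⟨Finset.mem_Icc.2 ⟨by omega, by omega⟩, h⟩
        have := Finset.min'_le P _ hmem
        omega
      have hprevne : w (p' - 1) ≠ m + 1 := by
        intro h
        have : p' - 1 = j := w_inj hw (by rw [h, hwj])
        omega
      have hprevgt : m + 1 < w (p' - 1) := by omega
      have hp'nei : p' ≠ i := by
        intro h
        rw [h] at hprevgt
        omega
      set x := w p' with hxdef
      have hposx : pos w x = p' := pos_w hw _
      have hx1 : 1 ≤ x := Nat.one_le_iff_ne_zero.2 (w_ne_zero hw (by omega))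
      apply hextra x
      · refine Finset.mem_filter.2 ⟨Finset.mem_Icc.2 ⟨hx1, by omega⟩, by omega, by omega, ?_⟩
        exact Or.inr (Or.inr (by rw [hposx]; exact hprevgt))
      · intro hmem
        have := (Finset.mem_filter.1 hmem).2.2.1
        rw [hposx, ← hi] at this
        omega

end claims
end SSW

namespace SSW
section split

variable {n : ℕ} {w : ℕ → ℕ} {D : Finset ℕ} (hw : IsSegPerm n w D)
include hw

lemma thick_iff {v : ℕ} (hv1 : 1 ≤ v) (hvn : v ≤ n) :
    Thick w D (pos w v) ↔ Str w D v v := by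
  unfold Thick Str
  rw [w_pos hw]
  tauto

lemma thin_iff {v : ℕ} (hv1 : 1 ≤ v) (hvn : v ≤ n) :
    Thin w D (pos w v) ↔ ¬ Str w D v v := by
  unfold Thin Str
  rw [w_pos hw]
  constructor
  · rintro ⟨hni, hlt⟩
    push_neg
    refine ⟨fun h => hni (Or.inl h), fun h => hni (Or.inr h), by omega⟩
  · intro h
    push_neg at h
    obtain ⟨h1, h2, h3⟩ := h
    have hne : w (pos w v - 1) ≠ v := by
      intro hc
      have hp1 : 1 ≤ pos w v := pos_pos hw hv1
      have : pos w v - 1 = pos w v := w_inj hw (by rw [hc, w_pos hw])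
      omega
    exact ⟨by tauto, by omega⟩

lemma pos_unique {v i' : ℕ} (hv : w i' = v) : i' = pos w v := by
  apply w_inj hw
  rw [hv, w_pos hw]

lemma asc_eq_split : AscSetD n (phiA n w D) (phiB n w D) (phiG n w D) = SplitSet n w D := by
  classical
  ext m
  simp only [AscSetD, SplitSet, Set.mem_setOf_eq]
  by_cases hm : m ∈ Set.Ico 1 n
  swap
  · constructor <;> rintro ⟨h, -⟩ <;> exact absurd h hm
  obtain ⟨hm1, hmn'⟩ := Set.mem_Ico.1 hm
  have hmn : m + 1 ≤ n := hmn'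
  have hmI : m ∈ Finset.Icc 1 n := Finset.mem_Icc.2 ⟨hm1, by omega⟩
  have hm1I : m + 1 ∈ Finset.Icc 1 n := Finset.mem_Icc.2 ⟨by omega, hmn⟩
  have hpm := pos_mem hw hm1 (by omega)
  have hpm1 := pos_mem hw (v := m+1) (by omega) hmn
  have hne : pos w m ≠ pos w (m+1) := fun h => by have := pos_inj hw h; omega
  -- split side equivalence
  have hS : (∃ i ∈ Set.Icc 1 n, ∃ j ∈ Set.Icc 1 n, w i = m ∧ w j = m + 1 ∧
      ((Thick w D i ∧ Thin w D j) ∨ (Thin w D i ∧ Thin w D j ∧ i < j) ∨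
        (Thick w D i ∧ Thick w D j ∧ j < i)))
      ↔ ((Str w D m m ∧ ¬ Str w D (m+1) (m+1)) ∨
         (¬ Str w D m m ∧ ¬ Str w D (m+1) (m+1) ∧ pos w m < pos w (m+1)) ∨
         (Str w D m m ∧ Str w D (m+1) (m+1) ∧ pos w (m+1) < pos w m)) := by
    constructor
    · rintro ⟨i', hi', j', hj', hwi', hwj', hC⟩
      have hieq : i' = pos w m := pos_unique hw hwi'
      have hjeq : j' = pos w (m+1) := pos_unique hw hwj'
      subst hieq; subst hjeq
      rcases hC with ⟨h1, h2⟩ | ⟨h1, h2, h3⟩ | ⟨h1, h2, h3⟩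
      · exact Or.inl ⟨(thick_iff hw hm1 (by omega)).1 h1, (thin_iff hw (by omega) hmn).1 h2⟩
      · exact Or.inr (Or.inl ⟨(thin_iff hw hm1 (by omega)).1 h1,
          (thin_iff hw (by omega) hmn).1 h2, h3⟩)
      · exact Or.inr (Or.inr ⟨(thick_iff hw hm1 (by omega)).1 h1,
          (thick_iff hw (by omega) hmn).1 h2, h3⟩)
    · intro hC
      refine ⟨pos w m, Set.mem_Icc.2 hpm, pos w (m+1), Set.mem_Icc.2 hpm1,
        w_pos hw m, w_pos hw (m+1), ?_⟩
      rcases hC with ⟨h1, h2⟩ | ⟨h1, h2, h3⟩ | ⟨h1, h2, h3⟩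
      · exact Or.inl ⟨(thick_iff hw hm1 (by omega)).2 h1, (thin_iff hw (by omega) hmn).2 h2⟩
      · exact Or.inr (Or.inl ⟨(thin_iff hw hm1 (by omega)).2 h1,
          (thin_iff hw (by omega) hmn).2 h2, h3⟩)
      · exact Or.inr (Or.inr ⟨(thick_iff hw hm1 (by omega)).2 h1,
          (thick_iff hw (by omega) hmn).2 h2, h3⟩)
  have hAm : phiA n w D m = (aF n w D m).card := if_pos hmI
  have hAm1 : phiA n w D (m+1) = (aF n w D (m+1)).card := if_pos hm1I
  by_cases hsm : Str w D m m <;> by_cases hsm1 : Str w D (m+1) (m+1)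
  · -- both strong (thick): Asc ↔ aFm < aFm1 + g1 ↔ j < i
    have hBm : phiB n w D m = 0 := by unfold phiB; rw [if_neg (by tauto)]
    have hBm1 : phiB n w D (m+1) = 0 := by unfold phiB; rw [if_neg (by tauto)]
    constructor
    · rintro ⟨-, hd⟩
      rw [hBm, hBm1, hAm, hAm1] at hd
      have hlt : (aF n w D m).card < (aF n w D (m+1)).card + phiG n w D (m+1) := by
        rcases hd with h | h | h
        · omega
        · omega
        · exact h.2.2
      refine ⟨hm, hS.2 (Or.inr (Or.inr ⟨hsm, hsm1, ?_⟩))⟩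
      by_contra hc
      have : pos w m < pos w (m+1) := by omega
      have := claimA hw hm1 hmn this
      omega
    · rintro ⟨-, hsp⟩
      have := hS.1 hsp
      rcases this with ⟨-, h2⟩ | ⟨h1, -⟩ | ⟨-, -, h3⟩
      · exact absurd hsm1 h2
      · exact absurd hsm h1
      · refine ⟨hm, Or.inr (Or.inr ⟨hBm, hBm1, ?_⟩)⟩
        rw [hAm, hAm1]
        exact claimB hw hm1 hmn h3 (Or.inl ⟨hsm, hsm1⟩)
  · -- thick then thin : both true
    have hBm : phiB n w D m = 0 := by unfold phiB; rw [if_neg (by tauto)]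
    have hBm1 : phiB n w D (m+1) = 1 := by unfold phiB; rw [if_pos ⟨hm1I, hsm1⟩]
    constructor
    · rintro ⟨-, -⟩
      exact ⟨hm, hS.2 (Or.inl ⟨hsm, hsm1⟩)⟩
    · rintro ⟨-, -⟩
      exact ⟨hm, Or.inl (by omega)⟩
  · -- thin then thick : both false
    have hBm : phiB n w D m = 1 := by unfold phiB; rw [if_pos ⟨hmI, hsm⟩]
    have hBm1 : phiB n w D (m+1) = 0 := by unfold phiB; rw [if_neg (by tauto)]
    constructor
    · rintro ⟨-, hd⟩
      rw [hBm, hBm1] at hd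
      exfalso
      rcases hd with h | h | h <;> omega
    · rintro ⟨-, hsp⟩
      exfalso
      rcases hS.1 hsp with ⟨h1, -⟩ | ⟨-, h2, -⟩ | ⟨h1, -, -⟩
      · exact hsm h1
      · exact h2 hsm1
      · exact hsm h1
  · -- both thin : Asc ↔ aFm1 + g1 ≤ aFm ↔ i < j
    have hBm : phiB n w D m = 1 := by unfold phiB; rw [if_pos ⟨hmI, hsm⟩]
    have hBm1 : phiB n w D (m+1) = 1 := by unfold phiB; rw [if_pos ⟨hm1I, hsm1⟩]
    constructor
    · rintro ⟨-, hd⟩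
      rw [hBm, hBm1, hAm, hAm1] at hd
      have hle : (aF n w D (m+1)).card + phiG n w D (m+1) ≤ (aF n w D m).card := by
        rcases hd with h | h | h
        · omega
        · exact h.2.2
        · omega
      refine ⟨hm, hS.2 (Or.inr (Or.inl ⟨hsm, hsm1, ?_⟩))⟩
      by_contra hc
      have : pos w (m+1) < pos w m := by omega
      have := claimB hw hm1 hmn this (Or.inr ⟨hsm, hsm1⟩)
      omega
    · rintro ⟨-, hsp⟩
      rcases hS.1 hsp with ⟨h1, -⟩ | ⟨-, -, h3⟩ | ⟨h1, -⟩
      · exact absurd h1 hsm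
      · refine ⟨hm, Or.inr (Or.inl ⟨hBm, hBm1, ?_⟩)⟩
        rw [hAm, hAm1]
        exact claimA hw hm1 hmn h3
      · exact absurd h1 hsm

end split
end SSW

namespace SSW
section injhelp

variable {n : ℕ} {w : ℕ → ℕ} {D : Finset ℕ} (hw : IsSegPerm n w D)
include hw

lemma phiG_cond {m : ℕ} (hmn : m + 1 ≤ n) (hg : phiG n w D (m+1) = 1) :
    pos w (m+1) ∉ D ∧ w (pos w (m+1) + 1) < m + 1 := by
  unfold phiG at hg
  by_cases h : (m+1 ∈ Finset.Icc 1 n ∧ pos w (m+1) ∉ D ∧ w (pos w (m+1) + 1) < m + 1)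
  · exact h.2
  · rw [if_neg h] at hg; omega

lemma phiG_eq_one {m : ℕ} (hmn : m + 1 ≤ n) (h1 : pos w (m+1) ∉ D)
    (h2 : w (pos w (m+1) + 1) < m + 1) : phiG n w D (m+1) = 1 := by
  unfold phiG
  rw [if_pos ⟨Finset.mem_Icc.2 ⟨by omega, hmn⟩, h1, h2⟩]

lemma filter_str_step_card {m : ℕ} (hmn : m + 1 ≤ n) (S : Finset ℕ)
    (hSle : ∀ u ∈ S, 1 ≤ u ∧ u ≤ m)
    (hu0mem : pos w (m+1) ∉ D → w (pos w (m+1) + 1) < m + 1 → w (pos w (m+1) + 1) ∈ S) :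
    (S.filter (fun u => Str w D m u)).card
      = (S.filter (fun u => Str w D (m+1) u)).card + phiG n w D (m+1) := by
  classical
  by_cases hg : pos w (m+1) ∉ D ∧ w (pos w (m+1) + 1) < m + 1
  · have hphiG : phiG n w D (m+1) = 1 := phiG_eq_one hw hmn hg.1 hg.2
    set u0 := w (pos w (m+1) + 1) with hu0def
    have hposu0 : pos w u0 = pos w (m+1) + 1 := pos_w hw _
    have hmemS : u0 ∈ S := hu0mem hg.1 hg.2
    have heq : S.filter (fun u => Str w D m u)
        = insert u0 (S.filter (fun u => Str w D (m+1) u)) := by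
      ext u
      simp only [Finset.mem_insert, Finset.mem_filter]
      constructor
      · rintro ⟨hmem, hstr⟩
        by_cases hequ : u = u0
        · exact Or.inl hequ
        · refine Or.inr ⟨hmem, ?_⟩
          exact (str_step hw (fun hc => hequ (pos_inj hw (by rw [hc, hposu0])))).1 hstr
      · rintro (rfl | ⟨hmem, hstr⟩)
        · exact ⟨hmemS, (str_exc hw hposu0).1⟩
        · exact ⟨hmem, str_mono (by omega) hstr⟩
    have hnotmem : u0 ∉ S.filter (fun u => Str w D (m+1) u) := by
      intro hmem
      exact hg.1 ((str_exc hw hposu0).2.1 (Finset.mem_filter.1 hmem).2)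
    rw [heq, Finset.card_insert_of_notMem hnotmem, hphiG]
  · have hphiG : phiG n w D (m+1) = 0 := by
      unfold phiG; rw [if_neg (by tauto)]
    rw [hphiG, Nat.add_zero]
    apply Finset.card_nbij' id id
    · intro u hu
      obtain ⟨hmem, hstr⟩ := Finset.mem_filter.1 hu
      refine Finset.mem_filter.2 ⟨hmem, ?_⟩
      by_cases hp : pos w u = pos w (m+1) + 1
      · have hueq : u = w (pos w (m+1) + 1) := by rw [← hp, w_pos hw]
        have hinD : pos w (m+1) ∈ D := by
          by_contra hnD
          have := (hSle u hmem).2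
          exact hg ⟨hnD, by omega⟩
        exact (str_exc hw hp).2.2 hinD
      · exact (str_step hw hp).1 hstr
    · intro u hu
      obtain ⟨hmem, hstr⟩ := Finset.mem_filter.1 hu
      exact Finset.mem_filter.2 ⟨hmem, str_mono (by omega) hstr⟩
    · exact fun _ _ => rfl
    · exact fun _ _ => rfl

lemma key1 {m : ℕ} (hmn : m + 1 ≤ n) :
    (((Finset.Icc 1 m).filter (fun u => pos w (m+1) < pos w u ∧ Str w D m u))).card
      = phiA n w D (m+1) + phiG n w D (m+1) := by
  classical
  have hAeq : phiA n w D (m+1)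
      = ((Finset.Icc 1 m).filter (fun u => pos w (m+1) < pos w u ∧ Str w D (m+1) u)).card := by
    unfold phiA
    rw [if_pos (Finset.mem_Icc.2 ⟨by omega, hmn⟩)]
    congr 1
    unfold aF
    ext u
    simp only [Finset.mem_filter, Finset.mem_Icc]
    constructor
    · rintro ⟨⟨h1, h2⟩, h3, h4, h5⟩; exact ⟨⟨h1, by omega⟩, h4, h5⟩
    · rintro ⟨⟨h1, h2⟩, h4, h5⟩; exact ⟨⟨h1, by omega⟩, by omega, h4, h5⟩
  have hfilt : ∀ (p : ℕ → Prop) [DecidablePred p],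
      (Finset.Icc 1 m).filter (fun u => pos w (m+1) < pos w u ∧ p u)
      = ((Finset.Icc 1 m).filter (fun u => pos w (m+1) < pos w u)).filter p := by
    intro p _
    rw [Finset.filter_filter]
  rw [hAeq, hfilt, hfilt]
  apply filter_str_step_card hw hmn
  · intro u hu
    have := (Finset.mem_filter.1 hu).1
    exact Finset.mem_Icc.1 this
  · intro h1 h2
    have hpos0 : pos w (w (pos w (m+1) + 1)) = pos w (m+1) + 1 := pos_w hw _
    have : 1 ≤ w (pos w (m+1) + 1) := Nat.one_le_iff_ne_zero.2 (w_ne_zero hw (by omega))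
    refine Finset.mem_filter.2 ⟨Finset.mem_Icc.2 ⟨this, by omega⟩, by omega⟩

lemma str_succ_char {m u : ℕ} :
    Str w D (m+1) u ↔ (Str w D m u ∧ ¬(pos w u = pos w (m+1) + 1 ∧ pos w (m+1) ∉ D)) := by
  by_cases hp : pos w u = pos w (m+1) + 1
  · have hexc := str_exc (D := D) hw hp
    constructor
    · intro h
      exact ⟨hexc.1, fun ⟨_, hnD⟩ => hnD (hexc.2.1 h)⟩
    · rintro ⟨h1, h2⟩
      have : pos w (m+1) ∈ D := by
        by_contra hnD
        exact h2 ⟨hp, hnD⟩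
      exact hexc.2.2 this
  · constructor
    · intro h
      exact ⟨(str_step hw hp).2 h, fun hc => hp hc.1⟩
    · rintro ⟨h1, -⟩
      exact (str_step hw hp).1 h1

lemma flip_char {m u : ℕ} (hmn : m + 1 ≤ n) (hu1 : 1 ≤ u) (hum : u ≤ m) :
    (pos w u = pos w (m+1) + 1 ∧ pos w (m+1) ∉ D) ↔
    (phiG n w D (m+1) = 1 ∧ pos w (m+1) < pos w u ∧
      ∀ x, 1 ≤ x → x ≤ m → pos w (m+1) < pos w x → pos w u ≤ pos w x) := by
  constructor
  · rintro ⟨hp, hnD⟩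
    have hwu : w (pos w (m+1) + 1) = u := by rw [← hp, w_pos hw]
    refine ⟨phiG_eq_one hw hmn hnD (by omega), by omega, ?_⟩
    intro x _ _ hx
    omega
  · rintro ⟨hg, hgt, hmin⟩
    obtain ⟨hnD, hlt⟩ := phiG_cond hw hmn hg
    set u0 := w (pos w (m+1) + 1) with hu0def
    have hposu0 : pos w u0 = pos w (m+1) + 1 := pos_w hw _
    have hu01 : 1 ≤ u0 := Nat.one_le_iff_ne_zero.2 (w_ne_zero hw (by omega))
    have := hmin u0 hu01 (by omega) (by omega)
    exact ⟨by omega, hnD⟩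

lemma first_after_strong {m v0 : ℕ} (hmn : m + 1 ≤ n) (h1 : 1 ≤ v0) (hm : v0 ≤ m)
    (hgt : pos w (m+1) < pos w v0)
    (hmin : ∀ x, 1 ≤ x → x ≤ m → pos w (m+1) < pos w x → pos w v0 ≤ pos w x) :
    Str w D m v0 := by
  refine Or.inr (Or.inr ?_)
  by_contra hc
  push_neg at hc
  have hp1 : 1 ≤ pos w (m+1) := pos_pos hw (by omega)
  have hq1 : 1 ≤ pos w v0 - 1 := by omega
  have hwq1 : 1 ≤ w (pos w v0 - 1) :=
    Nat.one_le_iff_ne_zero.2 (w_ne_zero hw (by omega))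
  have hposwq : pos w (w (pos w v0 - 1)) = pos w v0 - 1 := pos_w hw _
  have hqne : pos w v0 - 1 ≠ pos w (m+1) := by
    intro h
    have : w (pos w v0 - 1) = m + 1 := by rw [h, w_pos hw]
    omega
  have hwqm : w (pos w v0 - 1) ≤ m := by
    rcases Nat.lt_or_ge m (w (pos w v0 - 1)) with h | h
    · exfalso
      have : w (pos w v0 - 1) = m + 1 := by omega
      exact hqne (by rw [← hposwq, this])
    · exact h
  have := hmin (w (pos w v0 - 1)) hwq1 hwqm (by rw [hposwq]; omega)
  omega

end injhelp
end SSW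

namespace SSW
section inj

variable {n : ℕ} {w w' : ℕ → ℕ} {D D' : Finset ℕ}

lemma pos_eq_card (hw : IsSegPerm n w D) {v : ℕ} (hv1 : 1 ≤ v) (hvn : v ≤ n) :
    pos w v = ((Finset.Icc 1 n).filter (fun u => pos w u ≤ pos w v)).card := by
  classical
  have hpm := pos_mem hw hv1 hvn
  have : ((Finset.Icc 1 n).filter (fun u => pos w u ≤ pos w v)).card
      = (Finset.Icc 1 (pos w v)).card := by
    apply Finset.card_bij' (fun u _ => pos w u) (fun q _ => w q)
    · intro u hu
      obtain ⟨hmem, hle⟩ := Finset.mem_filter.1 hu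
      obtain ⟨h1, h2⟩ := Finset.mem_Icc.1 hmem
      exact Finset.mem_Icc.2 ⟨(pos_mem hw h1 h2).1, hle⟩
    · intro q hq
      obtain ⟨h1, h2⟩ := Finset.mem_Icc.1 hq
      refine Finset.mem_filter.2 ⟨Finset.mem_Icc.2 (w_mem hw h1 (by omega)), ?_⟩
      rw [pos_w hw]; exact h2
    · intro u hu; exact w_pos hw u
    · intro q hq; exact pos_w hw q
  rw [this, Nat.card_Icc]
  omega

lemma after_no_ssubset (hw : IsSegPerm n w D) (hw' : IsSegPerm n w' D') {m : ℕ}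
    (hmn : m + 1 ≤ n)
    (hOrd : ∀ u v, 1 ≤ u → u ≤ m → 1 ≤ v → v ≤ m → (pos w u < pos w v ↔ pos w' u < pos w' v))
    (hSEq : ∀ u, 1 ≤ u → u ≤ m → (Str w D m u ↔ Str w' D' m u))
    (hstat : phiA n w D (m+1) + phiG n w D (m+1) = phiA n w' D' (m+1) + phiG n w' D' (m+1)) :
    ¬ ((Finset.Icc 1 m).filter (fun u => pos w (m+1) < pos w u)
      ⊂ (Finset.Icc 1 m).filter (fun u => pos w' (m+1) < pos w' u)) := by
  classical
  intro hss
  set Af := (Finset.Icc 1 m).filter (fun u => pos w (m+1) < pos w u) with hAf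
  set Af' := (Finset.Icc 1 m).filter (fun u => pos w' (m+1) < pos w' u) with hAf'
  have hAfne : Af'.Nonempty := by
    rw [← Finset.card_pos]
    have := Finset.card_lt_card hss
    omega
  obtain ⟨v0, hv0mem, hv0min⟩ := Af'.exists_min_image (fun u => pos w' u) hAfne
  obtain ⟨hv0Icc, hv0gt⟩ := Finset.mem_filter.1 hv0mem
  obtain ⟨hv01, hv0m⟩ := Finset.mem_Icc.1 hv0Icc
  have hmin' : ∀ x, 1 ≤ x → x ≤ m → pos w' (m+1) < pos w' x → pos w' v0 ≤ pos w' x := by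
    intro x hx1 hxm hxgt
    exact hv0min x (Finset.mem_filter.2 ⟨Finset.mem_Icc.2 ⟨hx1, hxm⟩, hxgt⟩)
  have hstr' : Str w' D' m v0 := first_after_strong hw' hmn hv01 hv0m hv0gt hmin'
  have hstrv0 : Str w D m v0 := (hSEq v0 hv01 hv0m).2 hstr'
  have hv0notAf : v0 ∉ Af := by
    intro hv0Af
    apply hss.2
    intro x hx
    obtain ⟨hxIcc, hxgt⟩ := Finset.mem_filter.1 hx
    obtain ⟨hx1, hxm⟩ := Finset.mem_Icc.1 hxIcc
    by_cases hxv : x = v0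
    · rw [hxv]; exact hv0Af
    · have hle := hv0min x hx
      have hne : pos w' v0 ≠ pos w' x := fun h => hxv ((pos_inj hw' h).symm)
      have : pos w v0 < pos w x := (hOrd v0 x hv01 hv0m hx1 hxm).2 (by omega)
      have hgt := (Finset.mem_filter.1 hv0Af).2
      exact Finset.mem_filter.2 ⟨hxIcc, by omega⟩
  -- counting
  have hsubset : insert v0 (Af.filter (fun u => Str w D m u))
      ⊆ Af'.filter (fun u => Str w D m u) := by
    intro x hx
    rcases Finset.mem_insert.1 hx with rfl | hx
    · exact Finset.mem_filter.2 ⟨hv0mem, hstrv0⟩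
    · obtain ⟨hxAf, hxstr⟩ := Finset.mem_filter.1 hx
      exact Finset.mem_filter.2 ⟨hss.1 hxAf, hxstr⟩
  have hnotmem : v0 ∉ Af.filter (fun u => Str w D m u) := by
    intro h; exact hv0notAf (Finset.mem_filter.1 h).1
  have hcard1 : (Af.filter (fun u => Str w D m u)).card + 1
      ≤ (Af'.filter (fun u => Str w D m u)).card := by
    rw [← Finset.card_insert_of_notMem hnotmem]
    exact Finset.card_le_card hsubset
  have hAf'congr : Af'.filter (fun u => Str w D m u) = Af'.filter (fun u => Str w' D' m u) := by
    apply Finset.filter_congr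
    intro u hu
    obtain ⟨h1, h2⟩ := Finset.mem_Icc.1 (Finset.mem_filter.1 hu).1
    exact (hSEq u h1 h2)
  have hk1 : (Af.filter (fun u => Str w D m u)).card
      = phiA n w D (m+1) + phiG n w D (m+1) := by
    rw [hAf, Finset.filter_filter]
    exact key1 hw hmn
  have hk2 : (Af'.filter (fun u => Str w' D' m u)).card
      = phiA n w' D' (m+1) + phiG n w' D' (m+1) := by
    rw [hAf', Finset.filter_filter]
    exact key1 hw' hmn
  rw [hAf'congr, hk2] at hcard1
  rw [hk1] at hcard1
  omega

lemma after_eq (hw : IsSegPerm n w D) (hw' : IsSegPerm n w' D') {m : ℕ}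
    (hmn : m + 1 ≤ n)
    (hOrd : ∀ u v, 1 ≤ u → u ≤ m → 1 ≤ v → v ≤ m → (pos w u < pos w v ↔ pos w' u < pos w' v))
    (hSEq : ∀ u, 1 ≤ u → u ≤ m → (Str w D m u ↔ Str w' D' m u))
    (hstat : phiA n w D (m+1) + phiG n w D (m+1) = phiA n w' D' (m+1) + phiG n w' D' (m+1)) :
    (Finset.Icc 1 m).filter (fun u => pos w (m+1) < pos w u)
      = (Finset.Icc 1 m).filter (fun u => pos w' (m+1) < pos w' u) := by
  classical
  set Af := (Finset.Icc 1 m).filter (fun u => pos w (m+1) < pos w u) with hAf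
  set Af' := (Finset.Icc 1 m).filter (fun u => pos w' (m+1) < pos w' u) with hAf'
  have hnested : Af ⊆ Af' ∨ Af' ⊆ Af := by
    by_contra h
    push_neg at h
    obtain ⟨h1, h2⟩ := h
    obtain ⟨u, huAf, huAf'⟩ := Finset.not_subset.1 h1
    obtain ⟨u', hu'Af', hu'Af⟩ := Finset.not_subset.1 h2
    obtain ⟨huIcc, hugt⟩ := Finset.mem_filter.1 huAf
    obtain ⟨hu1, hum⟩ := Finset.mem_Icc.1 huIcc
    obtain ⟨hu'Icc, hu'gt⟩ := Finset.mem_filter.1 hu'Af'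
    obtain ⟨hu'1, hu'm⟩ := Finset.mem_Icc.1 hu'Icc
    have hule : ¬ (pos w' (m+1) < pos w' u) := fun hc => huAf' (Finset.mem_filter.2 ⟨huIcc, hc⟩)
    have hu'le : ¬ (pos w (m+1) < pos w u') := fun hc => hu'Af (Finset.mem_filter.2 ⟨hu'Icc, hc⟩)
    have hne1 : pos w' u ≠ pos w' (m+1) := fun h => by
      have := pos_inj hw' h; omega
    have hne2 : pos w u' ≠ pos w (m+1) := fun h => by
      have := pos_inj hw h; omega
    have hlt : pos w u' < pos w u := by omega
    have := (hOrd u' u hu'1 hu'm hu1 hum).1 hlt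
    omega
  rcases hnested with hsub | hsub
  · rcases hsub.eq_or_ssubset with h | h
    · exact h
    · exact absurd h (after_no_ssubset hw hw' hmn hOrd hSEq hstat)
  · rcases hsub.eq_or_ssubset with h | h
    · exact h.symm
    · exfalso
      refine after_no_ssubset hw' hw hmn ?_ ?_ hstat.symm h
      · intro u v h1 h2 h3 h4; exact (hOrd u v h1 h2 h3 h4).symm
      · intro u h1 h2; exact (hSEq u h1 h2).symm

end inj
end SSW

namespace SSW
section injmain

variable {n : ℕ} {w w' : ℕ → ℕ} {D D' : Finset ℕ}

lemma str_top_iff_phiB (hw : IsSegPerm n w D) {m : ℕ} (hm1 : 1 ≤ m) (hmn : m ≤ n) :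
    Str w D m m ↔ phiB n w D m = 0 := by
  unfold phiB
  by_cases h : Str w D m m
  · rw [if_neg (by tauto)]; simp [h]
  · rw [if_pos ⟨Finset.mem_Icc.2 ⟨hm1, hmn⟩, h⟩]; simp [h]

lemma inj_invariant (hw : IsSegPerm n w D) (hw' : IsSegPerm n w' D')
    (hA : phiA n w D = phiA n w' D') (hB : phiB n w D = phiB n w' D')
    (hG : phiG n w D = phiG n w' D') :
    ∀ m, m ≤ n →
      (∀ u v, 1 ≤ u → u ≤ m → 1 ≤ v → v ≤ m → (pos w u < pos w v ↔ pos w' u < pos w' v)) ∧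
      (∀ u, 1 ≤ u → u ≤ m → (Str w D m u ↔ Str w' D' m u)) := by
  intro m
  induction m with
  | zero => exact fun _ => ⟨by intros; omega, by intros; omega⟩
  | succ m ih =>
    intro hmn
    obtain ⟨hOrd, hSEq⟩ := ih (by omega)
    have hstat : phiA n w D (m+1) + phiG n w D (m+1)
        = phiA n w' D' (m+1) + phiG n w' D' (m+1) := by rw [hA, hG]
    have hAfEq := after_eq hw hw' hmn hOrd hSEq hstat
    have hmemAf : ∀ u, 1 ≤ u → u ≤ m →
        (pos w (m+1) < pos w u ↔ pos w' (m+1) < pos w' u) := by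
      intro u h1 h2
      have := Finset.ext_iff.1 hAfEq u
      simp only [Finset.mem_filter, Finset.mem_Icc] at this
      constructor
      · intro h; exact (this.1 ⟨⟨h1, h2⟩, h⟩).2
      · intro h; exact (this.2 ⟨⟨h1, h2⟩, h⟩).2
    have hOrd1 : ∀ u v, 1 ≤ u → u ≤ m+1 → 1 ≤ v → v ≤ m+1 →
        (pos w u < pos w v ↔ pos w' u < pos w' v) := by
      intro u v hu1 hum hv1 hvm
      by_cases hu : u = m + 1 <;> by_cases hv : v = m + 1
      · subst hu; subst hv; omega
      · subst hu
        exact hmemAf v hv1 (by omega)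
      · subst hv
        have h2 : u ≤ m := by omega
        have hne : pos w u ≠ pos w (m+1) := fun h => by
          have := pos_inj hw h; omega
        have hne' : pos w' u ≠ pos w' (m+1) := fun h => by
          have := pos_inj hw' h; omega
        have hiff := hmemAf u hu1 h2
        constructor
        · intro h; by_contra hc
          have h3 : pos w' (m+1) < pos w' u := by omega
          have h4 := hiff.2 h3
          omega
        · intro h; by_contra hc
          have h3 : pos w (m+1) < pos w u := by omega
          have h4 := hiff.1 h3
          omega
      · exact hOrd u v hu1 (by omega) hv1 (by omega)
    have hSEq1 : ∀ u, 1 ≤ u → u ≤ m+1 → (Str w D (m+1) u ↔ Str w' D' (m+1) u) := by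
      intro u hu1 hum
      by_cases hu : u = m + 1
      · subst hu
        rw [str_top_iff_phiB hw (by omega) hmn, str_top_iff_phiB hw' (by omega) hmn, hB]
      · have hum' : u ≤ m := by omega
        have hflipiff : (pos w u = pos w (m+1) + 1 ∧ pos w (m+1) ∉ D) ↔
            (pos w' u = pos w' (m+1) + 1 ∧ pos w' (m+1) ∉ D') := by
          rw [flip_char hw hmn hu1 hum', flip_char hw' hmn hu1 hum', hG]
          constructor
          · rintro ⟨h1, h2, h3⟩
            refine ⟨h1, (hmemAf u hu1 hum').1 h2, ?_⟩
            intro x hx1 hxm hxgt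
            have hxgt2 : pos w (m+1) < pos w x := (hmemAf x hx1 hxm).2 hxgt
            have := h3 x hx1 hxm hxgt2
            by_cases hux : u = x
            · rw [hux]
            · have : pos w u ≠ pos w x := fun h => hux (pos_inj hw h)
              have hlt : pos w u < pos w x := by omega
              have := (hOrd u x hu1 hum' hx1 hxm).1 hlt
              omega
          · rintro ⟨h1, h2, h3⟩
            refine ⟨h1, (hmemAf u hu1 hum').2 h2, ?_⟩
            intro x hx1 hxm hxgt
            have hxgt2 : pos w' (m+1) < pos w' x := (hmemAf x hx1 hxm).1 hxgt
            have := h3 x hx1 hxm hxgt2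
            by_cases hux : u = x
            · rw [hux]
            · have : pos w' u ≠ pos w' x := fun h => hux (pos_inj hw' h)
              have hlt : pos w' u < pos w' x := by omega
              have := (hOrd u x hu1 hum' hx1 hxm).2 hlt
              omega
        rw [str_succ_char hw, str_succ_char hw']
        rw [hSEq u hu1 hum', hflipiff]
    exact ⟨hOrd1, hSEq1⟩

lemma phi_inj (hw : IsSegPerm n w D) (hw' : IsSegPerm n w' D')
    (hA : phiA n w D = phiA n w' D') (hB : phiB n w D = phiB n w' D')
    (hG : phiG n w D = phiG n w' D') : w = w' ∧ D = D' := by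
  classical
  obtain ⟨hOrd, hSEq⟩ := inj_invariant hw hw' hA hB hG n le_rfl
  have hposEq : ∀ v, 1 ≤ v → v ≤ n → pos w v = pos w' v := by
    intro v hv1 hvn
    rw [pos_eq_card hw hv1 hvn, pos_eq_card hw' hv1 hvn]
    congr 1
    apply Finset.filter_congr
    intro u hu
    obtain ⟨hu1, hun⟩ := Finset.mem_Icc.1 hu
    by_cases huv : u = v
    · subst huv; simp
    · have hne : pos w u ≠ pos w v := fun h => huv (pos_inj hw h)
      have hne' : pos w' u ≠ pos w' v := fun h => huv (pos_inj hw' h)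
      have := hOrd u v hu1 hun hv1 hvn
      constructor
      · intro h; omega
      · intro h; omega
  have hwEq : w = w' := by
    funext p
    by_cases hp : 1 ≤ p ∧ p ≤ n
    · obtain ⟨hwp1, hwpn⟩ := w_mem hw hp.1 hp.2
      have h1 : pos w (w p) = p := pos_w hw p
      have h2 : pos w' (w p) = p := by rw [← hposEq (w p) hwp1 hwpn, h1]
      have h3 := w_pos hw' (w p)
      rw [h2] at h3
      exact h3.symm
    · rw [w_out hw hp, w_out hw' hp]
  refine ⟨hwEq, ?_⟩
  ext d
  by_cases hd : 1 ≤ d ∧ d < n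
  · set u := w (d+1) with hu
    obtain ⟨hu1, hun⟩ := w_mem hw (v := d+1) (by omega) (by omega)
    have hposu : pos w u = d + 1 := pos_w hw _
    have hposu' : pos w' u = d + 1 := by rw [← hposEq u hu1 hun, hposu]
    have hwd : w d ≤ n := (w_mem hw (v := d) (by omega) (by omega)).2
    have hwd' : w' d ≤ n := by rw [← hwEq]; exact hwd
    have h1 : Str w D n u ↔ d ∈ D := by
      unfold Str
      rw [hposu]
      simp only [Nat.add_sub_cancel]
      constructor
      · rintro (h | h | h)
        · omega
        · exact h
        · omega
      · intro h; exact Or.inr (Or.inl h)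
    have h2 : Str w' D' n u ↔ d ∈ D' := by
      unfold Str
      rw [hposu']
      simp only [Nat.add_sub_cancel]
      constructor
      · rintro (h | h | h)
        · omega
        · exact h
        · omega
      · intro h; exact Or.inr (Or.inl h)
    rw [← h1, ← h2]
    exact hSEq u hu1 hun
  · constructor
    · intro h
      have := hw.2.2 h
      rw [Finset.mem_Ico] at this; omega
    · intro h
      have := hw'.2.2 h
      rw [Finset.mem_Ico] at this; omega

end injmain
end SSW

namespace SSW

lemma ncard_prod {A B : Type*} (s : Set A) (t : Set B) (hs : s.Finite) (ht : t.Finite) :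
    (s ×ˢ t).ncard = s.ncard * t.ncard := by
  rw [Set.ncard_eq_toFinset_card _ (hs.prod ht), Set.ncard_eq_toFinset_card _ hs,
    Set.ncard_eq_toFinset_card _ ht, ← Finset.card_product]
  congr 1
  ext x
  simp [Set.Finite.mem_toFinset]

/-- finiteness of sets of functions supported on `Icc 1 n` with bounded values -/
lemma finite_bdd_fun (n B : ℕ) :
    {f : ℕ → ℕ | (∀ i, i ∉ Finset.Icc 1 n → f i = 0) ∧ ∀ i, f i ≤ B}.Finite := by
  classical
  set S := {f : ℕ → ℕ | (∀ i, i ∉ Finset.Icc 1 n → f i = 0) ∧ ∀ i, f i ≤ B} with hS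
  set F : (ℕ → ℕ) → ((Finset.Icc 1 n : Finset ℕ) → Fin (B+1)) :=
    fun f i => ⟨min (f i) B, by omega⟩ with hF
  have hinj : Set.InjOn F S := by
    intro f1 h1 f2 h2 heq
    funext i
    by_cases hi : i ∈ Finset.Icc 1 n
    · have := congrFun heq ⟨i, hi⟩
      rw [hF] at this
      simp only [Fin.mk.injEq] at this
      have hb1 := h1.2 i
      have hb2 := h2.2 i
      omega
    · rw [h1.1 i hi, h2.1 i hi]
  exact Set.Finite.of_finite_image (Set.toFinite _) hinj

lemma surj_of_inj_of_ncard {A B : Type*} {s : Set A} {t : Set B} {f : A → B}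
    (hs : s.Finite) (ht : t.Finite) (hmap : Set.MapsTo f s t) (hinj : Set.InjOn f s)
    (hcard : t.ncard ≤ s.ncard) : Set.SurjOn f s t := by
  classical
  intro b hb
  have hsf := Set.ncard_eq_toFinset_card _ hs
  have htf := Set.ncard_eq_toFinset_card _ ht
  have := Finset.surj_on_of_inj_on_of_card_le (s := hs.toFinset) (t := ht.toFinset)
    (fun a _ => f a)
    (fun a ha => ht.mem_toFinset.2 (hmap (hs.mem_toFinset.1 ha)))
    (fun a1 a2 ha1 ha2 h => hinj (hs.mem_toFinset.1 ha1) (hs.mem_toFinset.1 ha2) h)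
    (by omega) b (ht.mem_toFinset.2 hb)
  obtain ⟨a, ha, hab⟩ := this
  exact ⟨a, hs.mem_toFinset.1 ha, hab.symm⟩

end SSW

namespace SSW
section count

/-- the set of "window permutations" -/
def PermSet (n : ℕ) : Set (ℕ → ℕ) :=
  {w | Set.BijOn w (Set.Icc 1 n) (Set.Icc 1 n) ∧ ∀ m, m ∉ Set.Icc 1 n → w m = m}

noncomputable def FP (n : ℕ) (e : Equiv.Perm (Fin n)) : ℕ → ℕ :=
  fun m => if h : 1 ≤ m ∧ m ≤ n then (e ⟨m - 1, by omega⟩ : Fin n).val + 1 else m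

lemma FP_injective (n : ℕ) : Function.Injective (FP n) := by
  intro e e' heq
  apply Equiv.ext
  intro i
  have hcond : 1 ≤ i.val + 1 ∧ i.val + 1 ≤ n := ⟨by omega, by omega⟩
  have h0 := congrFun heq (i.val + 1)
  unfold FP at h0
  simp only [dif_pos hcond] at h0
  have hival : (⟨i.val + 1 - 1, by omega⟩ : Fin n) = i := by
    apply Fin.ext; simp
  rw [hival] at h0
  exact Fin.ext (by omega)

lemma permSet_eq_range (n : ℕ) : PermSet n = Set.range (FP n) := by
  ext w
  constructor
  · intro hw0
    have hw : IsSegPerm n w ∅ := ⟨hw0.1, hw0.2, Finset.empty_subset _⟩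
    have hmem : ∀ i : Fin n, 1 ≤ w (i.val + 1) ∧ w (i.val + 1) ≤ n :=
      fun i => w_mem hw (by omega) (by omega)
    set e : Fin n → Fin n := fun i => ⟨w (i.val + 1) - 1, by have := hmem i; omega⟩ with he
    have hinj : Function.Injective e := by
      intro i j hij
      rw [he] at hij
      simp only [Fin.mk.injEq] at hij
      have hi := hmem i
      have hj := hmem j
      have : w (i.val + 1) = w (j.val + 1) := by omega
      have := w_inj hw this
      exact Fin.ext (by omega)
    have hbij : Function.Bijective e := Finite.injective_iff_bijective.1 hinj
    refine ⟨Equiv.ofBijective e hbij, ?_⟩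
    funext m
    unfold FP
    by_cases h : 1 ≤ m ∧ m ≤ n
    · rw [dif_pos h]
      have : (Equiv.ofBijective e hbij) ⟨m - 1, by omega⟩ = e ⟨m - 1, by omega⟩ := rfl
      rw [this, he]
      simp only
      have hm := w_mem hw h.1 h.2
      have hmm : m - 1 + 1 = m := by omega
      rw [hmm]
      omega
    · rw [dif_neg h]
      exact (w_out hw h).symm
  · rintro ⟨e, rfl⟩
    refine ⟨⟨?_, ?_, ?_⟩, ?_⟩
    · -- mapsTo
      intro m hm
      rw [Set.mem_Icc] at hm
      unfold FP
      rw [dif_pos hm]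
      have := (e ⟨m - 1, by omega⟩).isLt
      exact Set.mem_Icc.2 ⟨by omega, by omega⟩
    · -- injOn
      intro a ha b hb hab
      rw [Set.mem_Icc] at ha hb
      unfold FP at hab
      rw [dif_pos ha, dif_pos hb] at hab
      have : e ⟨a - 1, by omega⟩ = e ⟨b - 1, by omega⟩ := Fin.ext (by omega)
      have := e.injective this
      simp only [Fin.mk.injEq] at this
      omega
    · -- surjOn
      intro y hy
      rw [Set.mem_Icc] at hy
      set i := e.symm ⟨y - 1, by omega⟩ with hi
      refine ⟨i.val + 1, Set.mem_Icc.2 ⟨by omega, by have := i.isLt; omega⟩, ?_⟩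
      unfold FP
      rw [dif_pos ⟨by omega, by have := i.isLt; omega⟩]
      have h1 : (⟨i.val + 1 - 1, by have := i.isLt; omega⟩ : Fin n) = i := Fin.ext (by simp)
      rw [h1, hi]
      simp only [Equiv.apply_symm_apply]
      omega
    · intro m hm
      unfold FP
      rw [Set.mem_Icc] at hm
      rw [dif_neg (by omega)]

lemma permSet_finite (n : ℕ) : (PermSet n).Finite := by
  rw [permSet_eq_range]; exact Set.finite_range _

lemma permSet_ncard (n : ℕ) : (PermSet n).ncard = n.factorial := by
  rw [permSet_eq_range, ← Set.image_univ, Set.ncard_image_of_injective _ (FP_injective n),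
    Set.ncard_univ, Nat.card_eq_fintype_card, Fintype.card_perm, Fintype.card_fin]

lemma segclass_eq (n c : ℕ) :
    {s : (ℕ → ℕ) × Finset ℕ | IsSegPerm n s.1 s.2 ∧ s.2.card = c}
      = PermSet n ×ˢ (↑((Finset.Ico 1 n).powersetCard c) : Set (Finset ℕ)) := by
  ext ⟨w, D⟩
  simp only [Set.mem_setOf_eq, Set.mem_prod, Finset.mem_coe, Finset.mem_powersetCard,
    IsSegPerm, PermSet]
  constructor
  · rintro ⟨⟨h1, h2, h3⟩, h4⟩
    exact ⟨⟨h1, h2⟩, h3, h4⟩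
  · rintro ⟨⟨h1, h2⟩, h3, h4⟩
    exact ⟨⟨h1, h2, h3⟩, h4⟩

lemma segclass_finite (n c : ℕ) :
    {s : (ℕ → ℕ) × Finset ℕ | IsSegPerm n s.1 s.2 ∧ s.2.card = c}.Finite := by
  rw [segclass_eq]
  exact (permSet_finite n).prod (Finset.finite_toSet _)

lemma segclass_ncard (n c : ℕ) :
    {s : (ℕ → ℕ) × Finset ℕ | IsSegPerm n s.1 s.2 ∧ s.2.card = c}.ncard
      = n.factorial * (n-1).choose c := by
  rw [segclass_eq, ncard_prod _ _ (permSet_finite n) (Finset.finite_toSet _),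
    permSet_ncard, Set.ncard_coe_finset, Finset.card_powersetCard, Nat.card_Ico]

end count
end SSW

namespace SSW
section datcount

abbrev T3 := (ℕ → ℕ) × (ℕ → ℕ) × (ℕ → ℕ)

noncomputable def psd (n : ℕ) (t : T3) : ℤ :=
  ∑ j ∈ Finset.Icc 1 n, (1 - (t.2.1 j : ℤ) - (t.2.2 j : ℤ))

def DatC (n c : ℕ) : Set T3 := {t | IsDatum n t.1 t.2.1 t.2.2 ∧ psd n t = (c : ℤ) + 1}

lemma Icc_succ_insert (n : ℕ) : Finset.Icc 1 (n+1) = insert (n+1) (Finset.Icc 1 n) := by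
  ext x; simp [Finset.mem_Icc]; omega

lemma psd_le (n : ℕ) (t : T3) (ht : IsDatum n t.1 t.2.1 t.2.2) {i : ℕ} (hi : i ≤ n) :
    ∑ j ∈ Finset.Icc 1 i, (1 - (t.2.1 j : ℤ) - (t.2.2 j : ℤ)) ≤ i := by
  calc ∑ j ∈ Finset.Icc 1 i, (1 - (t.2.1 j : ℤ) - (t.2.2 j : ℤ))
      ≤ ∑ j ∈ Finset.Icc 1 i, 1 := by
        apply Finset.sum_le_sum
        intro j hj
        have h1 : (0:ℤ) ≤ (t.2.1 j : ℤ) := Int.ofNat_nonneg _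
        have h2 : (0:ℤ) ≤ (t.2.2 j : ℤ) := Int.ofNat_nonneg _
        omega
    _ = i := by rw [Finset.sum_const, Nat.card_Icc]; simp

lemma datum_alpha_le {n : ℕ} {t : T3} (ht : IsDatum n t.1 t.2.1 t.2.2) (i : ℕ) :
    t.1 i ≤ n := by
  by_cases hi : i ∈ Finset.Icc 1 n
  · have h1 := ht.2.2 i hi
    have h2 := psd_le n t ht (Finset.mem_Icc.1 hi).2
    have : (i:ℤ) ≤ n := by exact_mod_cast (Finset.mem_Icc.1 hi).2
    omega
  · rw [(ht.1 i hi).1]; omega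

lemma datum_set_finite (n : ℕ) : {t : T3 | IsDatum n t.1 t.2.1 t.2.2}.Finite := by
  apply Set.Finite.subset (((finite_bdd_fun n (n+1)).prod
    ((finite_bdd_fun n (n+1)).prod (finite_bdd_fun n (n+1)))))
  intro t ht
  simp only [Set.mem_setOf_eq] at ht
  refine ⟨⟨fun i hi => (ht.1 i hi).1, fun i => (datum_alpha_le ht i).trans (by omega)⟩,
    ⟨fun i hi => (ht.1 i hi).2.1, fun i => ?_⟩, ⟨fun i hi => (ht.1 i hi).2.2, fun i => ?_⟩⟩
  · by_cases hi : i ∈ Finset.Icc 1 n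
    · have := (ht.2.1 i hi).1; omega
    · rw [(ht.1 i hi).2.1]; omega
  · by_cases hi : i ∈ Finset.Icc 1 n
    · have := (ht.2.1 i hi).2; omega
    · rw [(ht.1 i hi).2.2]; omega

lemma datC_finite (n c : ℕ) : (DatC n c).Finite :=
  (datum_set_finite n).subset (fun _ h => h.1)

lemma datC_one (c : ℕ) : (DatC 1 c).ncard = Nat.factorial 1 * Nat.choose 0 c := by
  classical
  set z : T3 := (fun _ => 0, fun _ => 0, fun _ => 0) with hz
  have hforce : ∀ t ∈ DatC 1 c, t = z ∧ c = 0 := by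
    rintro t ⟨ht, hpsd⟩
    have h1 : (1:ℕ) ∈ Finset.Icc 1 1 := by simp
    have hineq := ht.2.2 1 h1
    have hsum : ∑ j ∈ Finset.Icc 1 1, (1 - (t.2.1 j : ℤ) - (t.2.2 j : ℤ))
        = 1 - (t.2.1 1 : ℤ) - (t.2.2 1 : ℤ) := by
      rw [show Finset.Icc 1 1 = {1} by rfl, Finset.sum_singleton]
    rw [hsum] at hineq
    have hb : t.2.1 1 = 0 ∧ t.2.2 1 = 0 ∧ t.1 1 = 0 := by
      constructor
      · omega
      constructor
      · omega
      · omega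
    have hteq : t = z := by
      rw [hz]
      have e1 : t.1 = fun _ => 0 := by
        funext x
        by_cases hx : x ∈ Finset.Icc 1 1
        · have : x = 1 := by simp [Finset.mem_Icc] at hx; omega
          rw [this]; exact hb.2.2
        · exact (ht.1 x hx).1
      have e2 : t.2.1 = fun _ => 0 := by
        funext x
        by_cases hx : x ∈ Finset.Icc 1 1
        · have : x = 1 := by simp [Finset.mem_Icc] at hx; omega
          rw [this]; exact hb.1
        · exact (ht.1 x hx).2.1
      have e3 : t.2.2 = fun _ => 0 := by
        funext x
        by_cases hx : x ∈ Finset.Icc 1 1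
        · have : x = 1 := by simp [Finset.mem_Icc] at hx; omega
          rw [this]; exact hb.2.1
        · exact (ht.1 x hx).2.2
      exact Prod.ext e1 (Prod.ext e2 e3)
    refine ⟨hteq, ?_⟩
    unfold psd at hpsd
    rw [hteq] at hpsd
    rw [hz] at hpsd
    simp at hpsd
    omega
  by_cases hc : c = 0
  · subst hc
    have : DatC 1 0 = {z} := by
      apply Set.eq_singleton_iff_unique_mem.2
      constructor
      · refine ⟨⟨fun i _ => ⟨rfl, rfl, rfl⟩, fun i _ => ⟨by simp [hz], by simp [hz]⟩, fun i hi => ?_⟩, ?_⟩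
        · have : i = 1 := by simp [Finset.mem_Icc] at hi; omega
          subst this
          rw [show Finset.Icc 1 1 = {1} by rfl, Finset.sum_singleton]
          simp [hz]
        · unfold psd
          rw [show Finset.Icc 1 1 = {1} by rfl, Finset.sum_singleton]
          simp [hz]
      · intro t ht
        exact (hforce t ht).1
    rw [this, Set.ncard_singleton]
    simp
  · have : DatC 1 c = ∅ := by
      ext t
      simp only [Set.mem_empty_iff_false, iff_false]
      intro ht
      exact hc (hforce t ht).2
    rw [this, Set.ncard_empty, Nat.choose_eq_zero_of_lt (show 0 < c by omega)]
    simp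

end datcount
end SSW

namespace SSW
section datstep

/-- subclass of `DatC (n+1) c` with prescribed last column entries `b`, `g` -/
def DS (n c b g : ℕ) : Set T3 :=
  {t | (t ∈ DatC (n+1) c) ∧ t.2.1 (n+1) = b ∧ t.2.2 (n+1) = g}

lemma not_mem_Icc_succ (n : ℕ) : (n+1) ∉ Finset.Icc 1 n := by simp

lemma sum_update_congr {n : ℕ} (β' γ' : ℕ → ℕ) (vb vg : ℕ) {i : ℕ} (hi : i ≤ n) :
    ∑ j ∈ Finset.Icc 1 i, (1 - (Function.update β' (n+1) vb j : ℤ)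
        - (Function.update γ' (n+1) vg j : ℤ))
      = ∑ j ∈ Finset.Icc 1 i, (1 - (β' j : ℤ) - (γ' j : ℤ)) := by
  apply Finset.sum_congr rfl
  intro j hj
  have hjne : j ≠ n + 1 := by
    have := (Finset.mem_Icc.1 hj).2; omega
  rw [Function.update_of_ne hjne, Function.update_of_ne hjne]

lemma datDS_bij {n c b g c' : ℕ} (hn : 1 ≤ n) (hb : b ≤ 1) (hg : g ≤ 1)
    (hc' : c' + 1 = c + b + g) :
    Set.BijOn (fun p : T3 × ℕ =>
        ((Function.update p.1.1 (n+1) p.2,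
          Function.update p.1.2.1 (n+1) b,
          Function.update p.1.2.2 (n+1) g) : T3))
      (DatC n c' ×ˢ {a : ℕ | a < c + 1}) (DS n c b g) := by
  classical
  constructor
  · -- MapsTo
    rintro ⟨t, a⟩ ⟨⟨ht, hpsd⟩, ha⟩
    simp only [Set.mem_setOf_eq] at ha
    have hpsd1 : psd (n+1) ((Function.update t.1 (n+1) a,
        Function.update t.2.1 (n+1) b, Function.update t.2.2 (n+1) g) : T3) = (c:ℤ) + 1 := by
      unfold psd
      rw [Icc_succ_insert, Finset.sum_insert (not_mem_Icc_succ n)]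
      simp only [Function.update_self]
      rw [sum_update_congr t.2.1 t.2.2 b g le_rfl]
      unfold psd at hpsd
      rw [hpsd]
      have : (c' : ℤ) + 1 = (c : ℤ) + b + g := by exact_mod_cast hc'
      omega
    refine ⟨⟨⟨?_, ?_, ?_⟩, hpsd1⟩, Function.update_self _ _ _, Function.update_self _ _ _⟩
    · intro i hi
      have hine : i ≠ n + 1 := fun h => hi (h ▸ Finset.mem_Icc.2 ⟨by omega, le_rfl⟩)
      have hi' : i ∉ Finset.Icc 1 n := fun h => hi (by
        have := Finset.mem_Icc.1 h
        exact Finset.mem_Icc.2 ⟨this.1, by omega⟩)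
      simp only [Function.update_of_ne hine]
      exact ht.1 i hi'
    · intro i hi
      by_cases hine : i = n + 1
      · subst hine
        simp only [Function.update_self]
        exact ⟨hb, hg⟩
      · simp only [Function.update_of_ne hine]
        by_cases hi' : i ∈ Finset.Icc 1 n
        · exact ht.2.1 i hi'
        · rw [(ht.1 i hi').2.1, (ht.1 i hi').2.2]; omega
    · intro i hi
      obtain ⟨hi1, hi2⟩ := Finset.mem_Icc.1 hi
      by_cases hine : i = n + 1
      · subst hine
        simp only [Function.update_self]
        unfold psd at hpsd1
        rw [hpsd1]
        have : (a:ℤ) ≤ c := by exact_mod_cast Nat.lt_succ_iff.1 ha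
        omega
      · have hile : i ≤ n := by omega
        simp only [Function.update_of_ne hine]
        rw [sum_update_congr t.2.1 t.2.2 b g hile]
        exact ht.2.2 i (Finset.mem_Icc.2 ⟨hi1, hile⟩)
  constructor
  · -- InjOn
    rintro ⟨t1, a1⟩ ⟨ht1, ha1⟩ ⟨t2, a2⟩ ⟨ht2, ha2⟩ heq
    simp only [Prod.mk.injEq] at heq
    obtain ⟨e1, e2, e3⟩ := heq
    have hsupp1 := ht1.1.1
    have hsupp2 := ht2.1.1
    have ha : a1 = a2 := by
      have := congrFun e1 (n+1)
      simpa [Function.update_self] using this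
    have hf1 : t1.1 = t2.1 := by
      funext i
      by_cases hine : i = n + 1
      · subst hine
        rw [(hsupp1 (n+1) (not_mem_Icc_succ n)).1, (hsupp2 (n+1) (not_mem_Icc_succ n)).1]
      · have := congrFun e1 i
        rwa [Function.update_of_ne hine, Function.update_of_ne hine] at this
    have hf2 : t1.2.1 = t2.2.1 := by
      funext i
      by_cases hine : i = n + 1
      · subst hine
        rw [(hsupp1 (n+1) (not_mem_Icc_succ n)).2.1, (hsupp2 (n+1) (not_mem_Icc_succ n)).2.1]
      · have := congrFun e2 i
        rwa [Function.update_of_ne hine, Function.update_of_ne hine] at this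
    have hf3 : t1.2.2 = t2.2.2 := by
      funext i
      by_cases hine : i = n + 1
      · subst hine
        rw [(hsupp1 (n+1) (not_mem_Icc_succ n)).2.2, (hsupp2 (n+1) (not_mem_Icc_succ n)).2.2]
      · have := congrFun e3 i
        rwa [Function.update_of_ne hine, Function.update_of_ne hine] at this
    have : t1 = t2 := Prod.ext hf1 (Prod.ext hf2 hf3)
    rw [Prod.mk.injEq]
    exact ⟨this, ha⟩
  · -- SurjOn
    rintro t ⟨⟨ht, hpsd⟩, hbeta, hgamma⟩
    set t' : T3 := (Function.update t.1 (n+1) 0, Function.update t.2.1 (n+1) 0,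
      Function.update t.2.2 (n+1) 0) with ht'
    have hpsdsplit : psd (n+1) t = (1 - (b:ℤ) - (g:ℤ)) + psd n t := by
      unfold psd
      rw [Icc_succ_insert, Finset.sum_insert (not_mem_Icc_succ n), hbeta, hgamma]
    have hpsdt' : psd n t' = (c' : ℤ) + 1 := by
      unfold psd
      rw [ht']
      simp only
      rw [sum_update_congr t.2.1 t.2.2 0 0 le_rfl]
      have h1 : psd n t = (c:ℤ) + 1 - (1 - (b:ℤ) - (g:ℤ)) := by
        rw [hpsdsplit] at hpsd; omega
      have h2 : (c' : ℤ) + 1 = (c : ℤ) + b + g := by exact_mod_cast hc'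
      unfold psd at h1
      rw [h1]
      omega
    have hdat' : IsDatum n t'.1 t'.2.1 t'.2.2 := by
      refine ⟨?_, ?_, ?_⟩
      · intro i hi
        rw [ht']
        by_cases hine : i = n + 1
        · subst hine
          simp [Function.update_self]
        · simp only [Function.update_of_ne hine]
          apply ht.1
          intro hmem
          obtain ⟨h1, h2⟩ := Finset.mem_Icc.1 hmem
          exact hi (Finset.mem_Icc.2 ⟨h1, by omega⟩)
      · intro i hi
        obtain ⟨h1, h2⟩ := Finset.mem_Icc.1 hi
        rw [ht']
        have hine : i ≠ n + 1 := by omega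
        simp only [Function.update_of_ne hine]
        exact ht.2.1 i (Finset.mem_Icc.2 ⟨h1, by omega⟩)
      · intro i hi
        obtain ⟨h1, h2⟩ := Finset.mem_Icc.1 hi
        rw [ht']
        have hine : i ≠ n + 1 := by omega
        simp only [Function.update_of_ne hine]
        rw [sum_update_congr t.2.1 t.2.2 0 0 h2]
        exact ht.2.2 i (Finset.mem_Icc.2 ⟨h1, by omega⟩)
    have hanew : t.1 (n+1) < c + 1 := by
      have hineq := ht.2.2 (n+1) (Finset.mem_Icc.2 ⟨by omega, le_rfl⟩)
      unfold psd at hpsd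
      rw [hpsd] at hineq
      exact_mod_cast by omega
    refine ⟨(t', t.1 (n+1)), ⟨⟨hdat', hpsdt'⟩, hanew⟩, ?_⟩
    simp only
    have e1 : Function.update t'.1 (n+1) (t.1 (n+1)) = t.1 := by
      rw [ht']
      simp only
      rw [Function.update_idem]
      exact Function.update_eq_self _ _
    have e2 : Function.update t'.2.1 (n+1) b = t.2.1 := by
      rw [ht']
      simp only
      rw [Function.update_idem, ← hbeta]
      exact Function.update_eq_self _ _
    have e3 : Function.update t'.2.2 (n+1) g = t.2.2 := by
      rw [ht']
      simp only
      rw [Function.update_idem, ← hgamma]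
      exact Function.update_eq_self _ _
    rw [e1, e2, e3]

end datstep
end SSW

namespace SSW
section datfinal

lemma range_set_eq (c : ℕ) : {a : ℕ | a < c + 1} = ↑(Finset.range (c+1)) := by
  ext a; simp

lemma DS_ncard {n c b g c' : ℕ} (hn : 1 ≤ n) (hb : b ≤ 1) (hg : g ≤ 1)
    (hc' : c' + 1 = c + b + g) :
    (DS n c b g).ncard = (DatC n c').ncard * (c + 1) := by
  have hbij := datDS_bij hn hb hg hc'
  rw [← hbij.image_eq, Set.ncard_image_of_injOn hbij.injOn,
    ncard_prod _ _ (datC_finite n c') (by rw [range_set_eq]; exact Finset.finite_toSet _),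
    range_set_eq, Set.ncard_coe_finset, Finset.card_range]

lemma DS00_empty {n : ℕ} (hn : 1 ≤ n) : DS n 0 0 0 = ∅ := by
  ext t
  simp only [Set.mem_empty_iff_false, iff_false]
  rintro ⟨⟨ht, hpsd⟩, hb0, hg0⟩
  have hineq := ht.2.2 n (Finset.mem_Icc.2 ⟨hn, by omega⟩)
  have hsplit : psd (n+1) t = (1 - (t.2.1 (n+1) : ℤ) - (t.2.2 (n+1) : ℤ))
      + ∑ j ∈ Finset.Icc 1 n, (1 - (t.2.1 j : ℤ) - (t.2.2 j : ℤ)) := by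
    unfold psd
    rw [Icc_succ_insert, Finset.sum_insert (not_mem_Icc_succ n)]
  rw [hpsd, hb0, hg0] at hsplit
  simp only [Nat.cast_zero, Nat.cast_ofNat] at hsplit
  omega

lemma datC_succ_ncard {n : ℕ} (hn : 1 ≤ n)
    (IH : ∀ c', (DatC n c').ncard = n.factorial * (n-1).choose c') (c : ℕ) :
    (DatC (n+1) c).ncard = (n+1).factorial * n.choose c := by
  classical
  have hpart : DatC (n+1) c = (DS n c 0 0 ∪ DS n c 0 1) ∪ (DS n c 1 0 ∪ DS n c 1 1) := by
    ext t
    constructor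
    · intro ht
      have hmem : (n+1) ∈ Finset.Icc 1 (n+1) := Finset.mem_Icc.2 ⟨by omega, le_rfl⟩
      have hb1 : t.2.1 (n+1) ≤ 1 := (ht.1.2.1 (n+1) hmem).1
      have hg1 : t.2.2 (n+1) ≤ 1 := (ht.1.2.1 (n+1) hmem).2
      interval_cases hb : t.2.1 (n+1) <;> interval_cases hg : t.2.2 (n+1)
      · exact Or.inl (Or.inl ⟨ht, hb, hg⟩)
      · exact Or.inl (Or.inr ⟨ht, hb, hg⟩)
      · exact Or.inr (Or.inl ⟨ht, hb, hg⟩)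
      · exact Or.inr (Or.inr ⟨ht, hb, hg⟩)
    · rintro ((h | h) | (h | h)) <;> exact h.1
  have hfinDS : ∀ b g, (DS n c b g).Finite :=
    fun b g => (datC_finite (n+1) c).subset (fun t ht => ht.1)
  have hd1 : Disjoint (DS n c 0 0) (DS n c 0 1) := by
    rw [Set.disjoint_left]
    rintro t ⟨-, -, h1⟩ ⟨-, -, h2⟩
    omega
  have hd2 : Disjoint (DS n c 1 0) (DS n c 1 1) := by
    rw [Set.disjoint_left]
    rintro t ⟨-, -, h1⟩ ⟨-, -, h2⟩
    omega
  have hd3 : Disjoint (DS n c 0 0 ∪ DS n c 0 1) (DS n c 1 0 ∪ DS n c 1 1) := by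
    rw [Set.disjoint_left]
    rintro t (⟨-, h1, -⟩ | ⟨-, h1, -⟩) (⟨-, h2, -⟩ | ⟨-, h2, -⟩) <;> omega
  have hcard : (DatC (n+1) c).ncard
      = ((DS n c 0 0).ncard + (DS n c 0 1).ncard) + ((DS n c 1 0).ncard + (DS n c 1 1).ncard) := by
    rw [hpart, Set.ncard_union_eq hd3 ((hfinDS 0 0).union (hfinDS 0 1))
      ((hfinDS 1 0).union (hfinDS 1 1)),
      Set.ncard_union_eq hd1 (hfinDS 0 0) (hfinDS 0 1),
      Set.ncard_union_eq hd2 (hfinDS 1 0) (hfinDS 1 1)]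
  rw [hcard]
  by_cases hc : c = 0
  · subst hc
    rw [DS00_empty hn, Set.ncard_empty,
      DS_ncard hn (by omega) (by omega) (show 0 + 1 = 0 + 0 + 1 by omega),
      DS_ncard hn (by omega) (by omega) (show 0 + 1 = 0 + 1 + 0 by omega),
      DS_ncard hn (by omega) (by omega) (show 1 + 1 = 0 + 1 + 1 by omega),
      IH 0, IH 1, Nat.choose_zero_right, Nat.choose_one_right, Nat.choose_zero_right,
      Nat.factorial_succ]
    have h2 : n + 1 = (n - 1) + 2 := by omega
    rw [h2, Nat.mul_add, Nat.mul_add]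
    ring_nf
  · have hc1 : 1 ≤ c := by omega
    rw [DS_ncard hn (by omega) (by omega) (show (c-1) + 1 = c + 0 + 0 by omega),
      DS_ncard hn (by omega) (by omega) (show c + 1 = c + 0 + 1 by omega),
      DS_ncard hn (by omega) (by omega) (show c + 1 = c + 1 + 0 by omega),
      DS_ncard hn (by omega) (by omega) (show (c+1) + 1 = c + 1 + 1 by omega),
      IH (c-1), IH c, IH (c+1)]
    have e1 : (n-1).choose (c-1) + (n-1).choose c = n.choose c := by
      have h1 : c - 1 + 1 = c := by omega
      have h2 : n - 1 + 1 = n := by omega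
      rw [← h1, ← h2]
      rw [show n - 1 + 1 - 1 = n - 1 by omega, show c - 1 + 1 - 1 = c - 1 by omega]
      exact (Nat.choose_succ_succ (n-1) (c-1)).symm
    have e2 : (n-1).choose c + (n-1).choose (c+1) = n.choose (c+1) := by
      have h2 : n - 1 + 1 = n := by omega
      rw [← h2, show n - 1 + 1 - 1 = n - 1 by omega]
      exact (Nat.choose_succ_succ (n-1) c).symm
    have e3 : n.choose c + n.choose (c+1) = (n+1).choose (c+1) :=
      (Nat.choose_succ_succ n c).symm
    have e4 : (n+1) * n.choose c = (n+1).choose (c+1) * (c+1) :=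
      Nat.add_one_mul_choose_eq n c
    have hLHS : n.factorial * (n-1).choose (c-1) * (c+1) + n.factorial * (n-1).choose c * (c+1)
        + (n.factorial * (n-1).choose c * (c+1) + n.factorial * (n-1).choose (c+1) * (c+1))
        = n.factorial * (((n-1).choose (c-1) + (n-1).choose c)
           + ((n-1).choose c + (n-1).choose (c+1))) * (c + 1) := by ring
    rw [hLHS, e1, e2, e3]
    rw [Nat.factorial_succ]
    calc n.factorial * (n+1).choose (c+1) * (c+1)
        = n.factorial * ((n+1).choose (c+1) * (c+1)) := by ring
      _ = n.factorial * ((n+1) * n.choose c) := by rw [← e4]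
      _ = (n+1) * n.factorial * n.choose c := by ring

lemma datC_ncard : ∀ n, 1 ≤ n → ∀ c, (DatC n c).ncard = n.factorial * (n-1).choose c := by
  intro n
  induction n with
  | zero => omega
  | succ m ih =>
    intro _ c
    by_cases hm : m = 0
    · subst hm
      simpa using datC_one c
    · have hm1 : 1 ≤ m := by omega
      have := datC_succ_ncard hm1 (ih hm1) c
      simpa using this

end datfinal
end SSW

namespace SSW
section final

variable {n : ℕ} {w : ℕ → ℕ} {D : Finset ℕ}

lemma SG_top_card (hw : IsSegPerm n w D) (hn : 1 ≤ n) : (SG w D n).card = D.card + 1 := by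
  classical
  have h0D : 0 ∉ D := fun h => by
    have := hw.2.2 h; rw [Finset.mem_Ico] at this; omega
  have : (SG w D n).card = (insert 0 D).card := by
    apply Finset.card_bij' (fun u _ => pos w u - 1) (fun d _ => w (d+1))
    · intro u hu
      obtain ⟨hmem, hstr⟩ := Finset.mem_filter.1 hu
      obtain ⟨hu1, hun⟩ := Finset.mem_Icc.1 hmem
      obtain ⟨hp1, hpn⟩ := pos_mem hw hu1 hun
      rcases hstr with h | h | h
      · rw [h]; simp
      · exact Finset.mem_insert_of_mem h
      · exfalso
        by_cases hq : pos w u - 1 = 0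
        · rw [hq, w_out hw (by omega)] at h; omega
        · have : pos w u - 1 ≤ n := by omega
          have := (w_mem hw (v := pos w u - 1) (by omega) this).2
          omega
    · intro d hd
      rcases Finset.mem_insert.1 hd with rfl | hd
      · refine Finset.mem_filter.2 ⟨Finset.mem_Icc.2 (w_mem hw (by omega) hn), ?_⟩
        exact Or.inl (by rw [pos_w hw])
      · have hdIco := hw.2.2 hd
        rw [Finset.mem_Ico] at hdIco
        refine Finset.mem_filter.2 ⟨Finset.mem_Icc.2 (w_mem hw (by omega) (by omega)), ?_⟩
        refine Or.inr (Or.inl ?_)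
        rw [pos_w hw]
        simpa using hd
    · intro u hu
      obtain ⟨hmem, hstr⟩ := Finset.mem_filter.1 hu
      obtain ⟨hu1, hun⟩ := Finset.mem_Icc.1 hmem
      have hp1 := (pos_mem hw hu1 hun).1
      have : pos w u - 1 + 1 = pos w u := by omega
      rw [this, w_pos hw]
    · intro d hd
      rw [pos_w hw]
      simp
  rw [this, Finset.card_insert_of_notMem h0D]

lemma phi_isDatum (hw : IsSegPerm n w D) :
    IsDatum n (phiA n w D) (phiB n w D) (phiG n w D) := by
  refine ⟨?_, ?_, ?_⟩
  · intro i hi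
    refine ⟨?_, ?_, ?_⟩
    · unfold phiA; rw [if_neg hi]
    · unfold phiB; rw [if_neg (by tauto)]
    · unfold phiG; rw [if_neg (by tauto)]
  · intro i _
    exact ⟨phiB_le_one hw i, phiG_le_one hw i⟩
  · intro i hi
    obtain ⟨hi1, hin⟩ := Finset.mem_Icc.1 hi
    rw [sum_one_sub_eq_SG hw i hin]
    have h1 : phiA n w D i = (aF n w D i).card := if_pos hi
    have h2 := aF_card_lt_SG hw hi1 hin
    rw [h1]
    exact_mod_cast by omega

lemma phi_mem_datC (hw : IsSegPerm n w D) (hn : 1 ≤ n) :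
    Phi n (w, D) ∈ DatC n D.card := by
  refine ⟨phi_isDatum hw, ?_⟩
  show psd n (Phi n (w, D)) = _
  unfold psd Phi
  simp only
  rw [sum_one_sub_eq_SG hw n le_rfl, SG_top_card hw hn]
  push_cast
  ring

lemma class_bijOn (n c : ℕ) (hn : 1 ≤ n) :
    Set.BijOn (Phi n) {s : (ℕ → ℕ) × Finset ℕ | IsSegPerm n s.1 s.2 ∧ s.2.card = c}
      (DatC n c) := by
  have hmap : Set.MapsTo (Phi n) {s : (ℕ → ℕ) × Finset ℕ | IsSegPerm n s.1 s.2 ∧ s.2.card = c}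
      (DatC n c) := by
    rintro ⟨w', D'⟩ ⟨hw', hc⟩
    have := phi_mem_datC hw' hn
    rwa [hc] at this
  have hinj : Set.InjOn (Phi n)
      {s : (ℕ → ℕ) × Finset ℕ | IsSegPerm n s.1 s.2 ∧ s.2.card = c} := by
    rintro ⟨w1, D1⟩ ⟨hw1, -⟩ ⟨w2, D2⟩ ⟨hw2, -⟩ heq
    unfold Phi at heq
    simp only [Prod.mk.injEq] at heq
    obtain ⟨hwD, hDD⟩ := phi_inj hw1 hw2 heq.1 heq.2.1 heq.2.2
    rw [Prod.mk.injEq]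
    exact ⟨hwD, hDD⟩
  refine ⟨hmap, hinj, ?_⟩
  apply surj_of_inj_of_ncard (segclass_finite n c) (datC_finite n c) hmap hinj
  rw [datC_ncard n hn c, segclass_ncard n c]

lemma stat_bijOn (n k l : ℕ) (hn : 1 ≤ n) (S : Set ℕ) :
    Set.BijOn (Phi n)
      {s : (ℕ → ℕ) × Finset ℕ | IsSegPerm n s.1 s.2 ∧ (ascFin n s.1 s.2).card = k ∧
        (descFin n s.1 s.2).card = l ∧ SplitSet n s.1 s.2 = S}
      {t : (ℕ → ℕ) × (ℕ → ℕ) × (ℕ → ℕ) | IsDatum n t.1 t.2.1 t.2.2 ∧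
        (∑ i ∈ Finset.Icc 1 n, t.2.1 i) = k ∧ (∑ i ∈ Finset.Icc 1 n, t.2.2 i) = l ∧
        AscSetD n t.1 t.2.1 t.2.2 = S} := by
  have hmap : ∀ s : (ℕ → ℕ) × Finset ℕ, IsSegPerm n s.1 s.2 →
      (IsDatum n (Phi n s).1 (Phi n s).2.1 (Phi n s).2.2 ∧
        (∑ i ∈ Finset.Icc 1 n, (Phi n s).2.1 i) = (ascFin n s.1 s.2).card ∧
        (∑ i ∈ Finset.Icc 1 n, (Phi n s).2.2 i) = (descFin n s.1 s.2).card ∧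
        AscSetD n (Phi n s).1 (Phi n s).2.1 (Phi n s).2.2 = SplitSet n s.1 s.2) := by
    rintro ⟨w', D'⟩ hw'
    exact ⟨phi_isDatum hw', sum_phiB_eq hw', sum_phiG_eq hw', asc_eq_split hw'⟩
  refine ⟨?_, ?_, ?_⟩
  · rintro s ⟨hs, hk, hl, hS⟩
    obtain ⟨h1, h2, h3, h4⟩ := hmap s hs
    exact ⟨h1, by rw [h2, hk], by rw [h3, hl], by rw [h4, hS]⟩
  · rintro ⟨w1, D1⟩ ⟨hw1, -⟩ ⟨w2, D2⟩ ⟨hw2, -⟩ heq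
    unfold Phi at heq
    simp only [Prod.mk.injEq] at heq
    obtain ⟨hwD, hDD⟩ := phi_inj hw1 hw2 heq.1 heq.2.1 heq.2.2
    rw [Prod.mk.injEq]
    exact ⟨hwD, hDD⟩
  · rintro t ⟨ht, hk, hl, hS⟩
    -- find the ps-class of t
    have hpsge : 1 ≤ psd n t := by
      have := ht.2.2 n (Finset.mem_Icc.2 ⟨hn, le_rfl⟩)
      unfold psd
      have h0 : (0:ℤ) ≤ (t.1 n : ℤ) := Int.ofNat_nonneg _
      omega
    set c := (psd n t - 1).toNat with hc
    have hcc : (c : ℤ) + 1 = psd n t := by omega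
    have htc : t ∈ DatC n c := ⟨ht, hcc.symm⟩
    obtain ⟨s, hs, hst⟩ := (class_bijOn n c hn).surjOn htc
    obtain ⟨hsp, -⟩ := hs
    obtain ⟨h1, h2, h3, h4⟩ := hmap s hsp
    rw [hst] at h2 h3 h4
    refine ⟨s, ⟨hsp, ?_, ?_, ?_⟩, hst⟩
    · rw [← hk, h2]
    · rw [← hl, h3]
    · rw [← hS, h4]

end final
end SSW


/-- For every `S ⊆ {1,…,n-1}`:
`Σ_b q^{deg_x(b)} = Σ_{(σ,D)} q^{sminv(σ,D)}`, the left sum over (1,2)-basis data with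
`deg_θ = k`, `deg_ξ = ℓ`, `Asc(b) = S`, the right sum over segmented permutations in
`SW(1^n,k,ℓ)` with `Split(σ,D) = S`. -/
theorem datum_ascSet_eq_segPerm_split (n k ℓ : ℕ) (hn : 1 ≤ n)
    (S : Set ℕ) (hS : S ⊆ Set.Ico 1 n) :
    (∑ᶠ t ∈ {t : (ℕ → ℕ) × (ℕ → ℕ) × (ℕ → ℕ) | IsDatum n t.1 t.2.1 t.2.2 ∧
        (∑ i ∈ Finset.Icc 1 n, t.2.1 i) = k ∧ (∑ i ∈ Finset.Icc 1 n, t.2.2 i) = ℓ ∧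
        AscSetD n t.1 t.2.1 t.2.2 = S},
      (Polynomial.X : Polynomial ℤ) ^ (∑ i ∈ Finset.Icc 1 n, t.1 i))
    = ∑ᶠ s ∈ {s : (ℕ → ℕ) × Finset ℕ | IsSegPerm n s.1 s.2 ∧
        (ascFin n s.1 s.2).card = k ∧ (descFin n s.1 s.2).card = ℓ ∧
        SplitSet n s.1 s.2 = S},
      (Polynomial.X : Polynomial ℤ) ^ sminv n s.1 s.2 := by
    classical
  exact (finsum_mem_eq_of_bijOn (SSW.Phi n) (SSW.stat_bijOn n k ℓ hn S)
    (fun s hs => by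
      have hsum := SSW.sum_phiA_eq hs.1
      show (Polynomial.X : Polynomial ℤ) ^ sminv n s.1 s.2
          = (Polynomial.X : Polynomial ℤ) ^ (∑ i ∈ Finset.Icc 1 n, (SSW.Phi n s).1 i)
      rw [show (∑ i ∈ Finset.Icc 1 n, (SSW.Phi n s).1 i) = sminv n s.1 s.2 from hsum])).symm
end

section
/- Let n ≥ 1 and 0 ≤ d ≤ n−1 be integers, and let b = (α, β, γ) be a (1,2)-basis datum of length n. Then Asc(b) ⊆ {d+1,…,n−1} if and only if α_m = β_m = γ_m = 0 for all m ∈ {1,…,d+1}. -/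
/-- For a (1,2)-basis datum `b` of length `n` and `0 ≤ d ≤ n-1`:
`Asc(b) ⊆ {d+1,…,n-1}` iff `α_m = β_m = γ_m = 0` for all `m ∈ {1,…,d+1}`. -/
theorem ascSet_subset_iff (n : ℕ) (hn : 1 ≤ n) (d : ℕ) (hd : d ≤ n - 1)
    (α β γ : ℕ → ℕ) (hb : IsDatum n α β γ) :
    AscSetD n α β γ ⊆ Set.Icc (d + 1) (n - 1) ↔
      ∀ m, 1 ≤ m → m ≤ d + 1 → α m = 0 ∧ β m = 0 ∧ γ m = 0 := by
  obtain ⟨hout, hβγ, hsum⟩ := hb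
  have h1 : α 1 = 0 ∧ β 1 = 0 ∧ γ 1 = 0 := by
    have := hsum 1 (by simp [hn])
    simp only [Finset.Icc_self, Finset.sum_singleton] at this
    omega
  constructor
  · intro hsub m hm1 hmd
    induction m with
    | zero => omega
    | succ k ih =>
      rcases Nat.eq_zero_or_pos k with hk | hk
      · subst hk; exact h1
      · have hkd : k ≤ d := by omega
        have hks : α k = 0 ∧ β k = 0 ∧ γ k = 0 := ih hk (by omega)
        have hkn : k < n := by omega
        have hnotin : k ∉ AscSetD n α β γ := by
          intro hmem
          have := hsub hmem
          simp only [Set.mem_Icc] at this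
          omega
        have hβ1 : β (k + 1) ≤ 1 ∧ γ (k + 1) ≤ 1 := hβγ (k + 1) (by
          simp only [Finset.mem_Icc]; omega)
        simp only [AscSetD, Set.mem_setOf_eq, Set.mem_Ico, not_and, not_or, not_lt,
          not_and_or] at hnotin
        have := hnotin ⟨hk, hkn⟩
        omega
  · intro h i hi
    obtain ⟨⟨hi1, hin⟩, hdisj⟩ := hi
    simp only [Set.mem_Icc]
    constructor
    · by_contra hlt
      have hid : i ≤ d := by omega
      have h1' := h i hi1 (by omega)
      have h2' := h (i + 1) (by omega) (by omega)
      omega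
    · omega
end

section
/- Let n ≥ 1 and 0 ≤ d ≤ n−1 be integers, and let b = (α, β, γ) be a (1,2)-basis datum of length n. Then Asc(b) = {d+1,…,n−1} if and only if there exists a ∈ {d+1,…,n} such that: (a) α_m = β_m = γ_m = 0 for all m ∈ {1,…,d+1}; (b) β_m = 0 and α_{m−1} < α_m + γ_m for all m ∈ {d+2,…,a}; (c) β_a = 0, and if a ≤ n−1 then β_{a+1} = 1; and (d) β_m = 1 and α_{m−1} ≥ α_m + γ_m for all m ∈ {a+2,…,n} (conditions over empty index ranges being vacuously true). -/
/-- For a (1,2)-basis datum `b` of length `n` and `0 ≤ d ≤ n-1`: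
`Asc(b) = {d+1,…,n-1}` iff there is `a ∈ {d+1,…,n}` with
(a) `α_m = β_m = γ_m = 0` for `m ∈ {1,…,d+1}`;
(b) `β_m = 0` and `α_{m-1} < α_m + γ_m` for `m ∈ {d+2,…,a}`;
(c) `β_a = 0`, and `β_{a+1} = 1` if `a ≤ n-1`;
(d) `β_m = 1` and `α_{m-1} ≥ α_m + γ_m` for `m ∈ {a+2,…,n}`. -/
theorem ascSet_eq_iff (n : ℕ) (hn : 1 ≤ n) (d : ℕ) (hd : d ≤ n - 1)
    (α β γ : ℕ → ℕ) (hb : IsDatum n α β γ) :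
    AscSetD n α β γ = Set.Icc (d + 1) (n - 1) ↔
      ∃ a, d + 1 ≤ a ∧ a ≤ n ∧
        (∀ m, 1 ≤ m → m ≤ d + 1 → α m = 0 ∧ β m = 0 ∧ γ m = 0) ∧
        (∀ m, d + 2 ≤ m → m ≤ a → β m = 0 ∧ α (m - 1) < α m + γ m) ∧
        (β a = 0 ∧ (a ≤ n - 1 → β (a + 1) = 1)) ∧
        (∀ m, a + 2 ≤ m → m ≤ n → β m = 1 ∧ α m + γ m ≤ α (m - 1)) := by
  obtain ⟨h0, h01, hsum⟩ := hb
  have hdn : d + 1 ≤ n := by omega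
  have hbase : α 1 = 0 ∧ β 1 = 0 ∧ γ 1 = 0 := by
    have h := hsum 1 (by simp [hn])
    rw [Finset.Icc_self, Finset.sum_singleton] at h
    omega
  constructor
  · intro hset
    have hiff := Set.ext_iff.mp hset
    have hAsc : ∀ i, d + 1 ≤ i → i ≤ n - 1 →
        (β i < β (i + 1) ∨ (β i = 1 ∧ β (i + 1) = 1 ∧ α (i + 1) + γ (i + 1) ≤ α i) ∨
          (β i = 0 ∧ β (i + 1) = 0 ∧ α i < α (i + 1) + γ (i + 1))) := by
      intro i h1 h2
      have h := (hiff i).mpr (Set.mem_Icc.mpr ⟨h1, h2⟩)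
      exact h.2
    have hNA : ∀ i, 1 ≤ i → i ≤ d →
        ¬(β i < β (i + 1) ∨ (β i = 1 ∧ β (i + 1) = 1 ∧ α (i + 1) + γ (i + 1) ≤ α i) ∨
          (β i = 0 ∧ β (i + 1) = 0 ∧ α i < α (i + 1) + γ (i + 1))) := by
      intro i h1 h2 hc
      have h : i ∈ Set.Icc (d + 1) (n - 1) := (hiff i).mp ⟨Set.mem_Ico.mpr ⟨h1, by omega⟩, hc⟩
      rw [Set.mem_Icc] at h
      omega
    have hA : ∀ m, 1 ≤ m → m ≤ d + 1 → α m = 0 ∧ β m = 0 ∧ γ m = 0 := by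
      intro m hm1 hm2
      induction m with
      | zero => omega
      | succ k ih =>
        rcases Nat.eq_zero_or_pos k with hk | hk
        · subst hk; exact hbase
        · have hih := ih (by omega) (by omega)
          have hna := hNA k (by omega) (by omega)
          have hb1 := h01 (k + 1) (by simp; omega)
          omega
    have hprop : ∀ i, d + 1 ≤ i → i ≤ n - 1 → β i = 1 → β (i + 1) = 1 := by
      intro i h1 h2 hβ
      have h := hAsc i h1 h2
      have hb1 := h01 (i + 1) (by simp; omega)
      have hb2 := h01 i (by simp; omega)
      omega
    have hprop2 : ∀ i j, d + 1 ≤ i → i ≤ j → j ≤ n → β i = 1 → β j = 1 := by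
      intro i j h1 h2
      induction j, h2 using Nat.le_induction with
      | base => intro _ hβ; exact hβ
      | succ k hk ih => intro h3 hβ; exact hprop k (by omega) (by omega) (ih (by omega) hβ)
    set S : Finset ℕ := (Finset.Icc (d + 1) n).filter (fun m => β m = 0) with hS
    have hmem : d + 1 ∈ S := by
      simp only [hS, Finset.mem_filter, Finset.mem_Icc]
      exact ⟨⟨le_refl _, hdn⟩, (hA (d + 1) (by omega) (by omega)).2.1⟩
    have hne : S.Nonempty := ⟨d + 1, hmem⟩
    set a := S.max' hne with haeq
    have haS : a ∈ S := S.max'_mem hne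
    simp only [hS, Finset.mem_filter, Finset.mem_Icc] at haS
    obtain ⟨⟨ha1, ha2⟩, ha0⟩ := haS
    have hβzero : ∀ m, d + 1 ≤ m → m ≤ a → β m = 0 := by
      intro m h1 h2
      have hb1 := h01 m (by simp; omega)
      by_contra hmm
      have : β m = 1 := by omega
      have := hprop2 m a h1 h2 (by omega) this
      omega
    refine ⟨a, ha1, ha2, hA, ?_, ⟨ha0, ?_⟩, ?_⟩
    · intro m hm1 hm2
      have hb1 : β m = 0 := hβzero m (by omega) hm2
      have hb2 : β (m - 1) = 0 := hβzero (m - 1) (by omega) (by omega)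
      have h := hAsc (m - 1) (by omega) (by omega)
      have hm : m - 1 + 1 = m := by omega
      rw [hm] at h
      omega
    · intro han
      have hb1 := h01 (a + 1) (by simp; omega)
      by_contra hmm
      have hain : a + 1 ∈ S := by
        simp only [hS, Finset.mem_filter, Finset.mem_Icc]
        omega
      have := S.le_max' _ hain
      omega
    · intro m hm1 hm2
      have han : a ≤ n - 1 := by omega
      have hb1 : β (a + 1) = 1 := by
        have hb1 := h01 (a + 1) (by simp; omega)
        by_contra hmm
        have hain : a + 1 ∈ S := by
          simp only [hS, Finset.mem_filter, Finset.mem_Icc]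
          omega
        have := S.le_max' _ hain
        omega
      have hb2 : β (m - 1) = 1 := hprop2 (a + 1) (m - 1) (by omega) (by omega) (by omega) hb1
      have h := hAsc (m - 1) (by omega) (by omega)
      have hm : m - 1 + 1 = m := by omega
      rw [hm] at h
      have hb3 := h01 m (by simp; omega)
      omega
  · rintro ⟨a, ha1, ha2, pa, pb, pc, pd⟩
    ext i
    simp only [AscSetD, Set.mem_setOf_eq, Set.mem_Ico, Set.mem_Icc]
    constructor
    · rintro ⟨⟨hi1, hi2⟩, hcond⟩
      refine ⟨?_, by omega⟩
      by_contra hlt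
      push_neg at hlt
      have h1 := pa i (by omega) (by omega)
      have h2 := pa (i + 1) (by omega) (by omega)
      omega
    · rintro ⟨hi1, hi2⟩
      refine ⟨⟨by omega, by omega⟩, ?_⟩
      rcases lt_trichotomy i a with h | h | h
      · have hb1 : β i = 0 := by
          rcases Nat.lt_or_ge i (d + 2) with h' | h'
          · exact (pa i (by omega) (by omega)).2.1
          · exact (pb i (by omega) (by omega)).1
        have hb2 := pb (i + 1) (by omega) (by omega)
        simp only [Nat.add_sub_cancel] at hb2
        right; right; exact ⟨hb1, hb2.1, hb2.2⟩
      · subst h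
        have h1 := pc.1
        have h2 := pc.2 (by omega)
        left; omega
      · have hb1 : β i = 1 := by
          rcases Nat.eq_or_lt_of_le h with h' | h'
          · rw [← h']; exact pc.2 (by omega)
          · exact (pd i (by omega) (by omega)).1
        have hb2 := pd (i + 1) (by omega) (by omega)
        simp only [Nat.add_sub_cancel] at hb2
        right; left; exact ⟨hb1, hb2.1, hb2.2⟩
end
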